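/- arXiv:1106.6153 — 12 statements merged into one kernel-verified Lean document; each statement's English description precedes it below -/
import Mathlib

section
/- On the ℂ-vector space ℤ →₀ ℂ of finitely supported functions on ℤ with standard basis (δ_n)_{n∈ℤ}, fix R, ξ ∈ ℝ and define linear endomorphisms U(δ_n) = R·δ_{n+1}, D(δ_n) = R·δ_{n−1}, and X(δ_n) = −ξ·n·δ_n. Then U ∘ D = D ∘ U = R²·id, ⁅U,D⁆ = 0, ⁅U,X⁆ = ξ·U, and ⁅D,X⁆ = −ξ·D; i.e., these operators realize the fuzzy cylinder relations of radius R and parameter ξ. -/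
private lemma end_ext {f g : Module.End ℂ (ℤ →₀ ℂ)}
    (h : ∀ n : ℤ, f (Finsupp.single n 1) = g (Finsupp.single n 1)) : f = g := by
  refine Finsupp.lhom_ext' fun n => LinearMap.ext_ring ?_
  simpa using h n

/-- the fuzzy cylinder representation on `ℤ →₀ ℂ`.
With `U δₙ = R δ_{n+1}`, `D δₙ = R δ_{n-1}`, `X δₙ = -ξ n δₙ`, these operators
satisfy `U∘D = D∘U = R²·id`, `⁅U,D⁆ = 0`, `⁅U,X⁆ = ξ•U`, `⁅D,X⁆ = -ξ•D`. -/
theorem stmt1 (R ξ : ℝ) (U D X : Module.End ℂ (ℤ →₀ ℂ))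
    (hU : ∀ n : ℤ, U (Finsupp.single n 1) = (R : ℂ) • Finsupp.single (n + 1) 1)
    (hD : ∀ n : ℤ, D (Finsupp.single n 1) = (R : ℂ) • Finsupp.single (n - 1) 1)
    (hX : ∀ n : ℤ, X (Finsupp.single n 1) = (-(ξ : ℂ) * (n : ℂ)) • Finsupp.single n 1) :
    U * D = ((R : ℂ) ^ 2) • (1 : Module.End ℂ (ℤ →₀ ℂ))
    ∧ D * U = ((R : ℂ) ^ 2) • (1 : Module.End ℂ (ℤ →₀ ℂ))
    ∧ ⁅U, D⁆ = 0
    ∧ ⁅U, X⁆ = (ξ : ℂ) • U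
    ∧ ⁅D, X⁆ = (-(ξ : ℂ)) • D := by
  have hUD : U * D = ((R : ℂ) ^ 2) • (1 : Module.End ℂ (ℤ →₀ ℂ)) := by
    refine end_ext fun n => ?_
    rw [Module.End.mul_apply, hD n, map_smul, hU (n - 1), sub_add_cancel, smul_smul,
      LinearMap.smul_apply, Module.End.one_apply, sq]
  have hDU : D * U = ((R : ℂ) ^ 2) • (1 : Module.End ℂ (ℤ →₀ ℂ)) := by
    refine end_ext fun n => ?_
    rw [Module.End.mul_apply, hU n, map_smul, hD (n + 1), add_sub_cancel_right, smul_smul,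
      LinearMap.smul_apply, Module.End.one_apply, sq]
  refine ⟨hUD, hDU, ?_, ?_, ?_⟩
  · rw [LieRing.of_associative_ring_bracket, hUD, hDU, sub_self]
  · refine end_ext fun n => ?_
    rw [LieRing.of_associative_ring_bracket, LinearMap.sub_apply, Module.End.mul_apply,
      Module.End.mul_apply, hX n, map_smul, hU n, map_smul, hX (n + 1),
      LinearMap.smul_apply, hU n, smul_smul, smul_smul, smul_smul, ← sub_smul]
    congr 1
    push_cast
    ring
  · refine end_ext fun n => ?_
    rw [LieRing.of_associative_ring_bracket, LinearMap.sub_apply, Module.End.mul_apply,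
      Module.End.mul_apply, hX n, map_smul, hD n, map_smul, hX (n - 1),
      LinearMap.smul_apply, hD n, smul_smul, smul_smul, smul_smul, ← sub_smul]
    congr 1
    push_cast
    ring
end

section
/- Let (U, X3) be a fuzzy cylinder of radius R and parameter ξ in a complex *-algebra A, and set X1 = (U + U*)/2, X2 = (U − U*)/(2i). Define the matrix Laplacian □φ = ⁅X1,⁅X1,φ⁆⁆ + ⁅X2,⁅X2,φ⁆⁆ + ⁅X3,⁅X3,φ⁆⁆. Then □X3 = 0, □U = ξ²·U, and consequently □X1 = ξ²·X1 and □X2 = ξ²·X2. In particular the fuzzy cylinder is not a solution of the Euclidean matrix model equations □X^a = 0. -/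
/-- the matrix Laplacian on the fuzzy cylinder.
For a fuzzy cylinder `(U, X3)` of radius `R > 0` and parameter `ξ`, with
`X1 = (U + U*)/2`, `X2 = (U - U*)/(2i)` and
`□φ = ⁅X1,⁅X1,φ⁆⁆ + ⁅X2,⁅X2,φ⁆⁆ + ⁅X3,⁅X3,φ⁆⁆`, one has `□X3 = 0`, `□U = ξ²•U`,
hence `□X1 = ξ²•X1`, `□X2 = ξ²•X2`; in particular (for `ξ ≠ 0`, `U ≠ 0`) the fuzzy
cylinder is not a solution of the Euclidean matrix model equations `□Xᵃ = 0`. -/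
theorem stmt2 (A : Type*) [Ring A] [Algebra ℂ A] [StarRing A] [StarModule ℂ A]
    (R ξ : ℝ) (hR : 0 < R) (U X3 : A)
    (hUUs : U * star U = ((R : ℂ) ^ 2) • (1 : A))
    (hUsU : star U * U = ((R : ℂ) ^ 2) • (1 : A))
    (hX3sa : star X3 = X3)
    (hUX3 : ⁅U, X3⁆ = (ξ : ℂ) • U)
    (X1 X2 : A)
    (hX1 : X1 = (2 : ℂ)⁻¹ • (U + star U))
    (hX2 : X2 = ((2 : ℂ) * Complex.I)⁻¹ • (U - star U))
    (Box : A → A)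
    (hBox : ∀ φ, Box φ = ⁅X1, ⁅X1, φ⁆⁆ + ⁅X2, ⁅X2, φ⁆⁆ + ⁅X3, ⁅X3, φ⁆⁆) :
    Box X3 = 0
    ∧ Box U = ((ξ : ℂ) ^ 2) • U
    ∧ Box X1 = ((ξ : ℂ) ^ 2) • X1
    ∧ Box X2 = ((ξ : ℂ) ^ 2) • X2
    ∧ (ξ ≠ 0 → U ≠ 0 → ¬ (Box X1 = 0 ∧ Box X2 = 0 ∧ Box X3 = 0)) := by
  letI : LieRing A := LieRing.ofAssociativeRing
  -- U and U* commute
  have l1 : ⁅star U, U⁆ = 0 := by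
    rw [Ring.lie_def, hUsU, hUUs, sub_self]
  have l2 : ⁅U, star U⁆ = 0 := by
    rw [Ring.lie_def, hUsU, hUUs, sub_self]
  -- bracket of U* with X3
  have hUsX3 : ⁅star U, X3⁆ = (-(ξ : ℂ)) • star U := by
    have h := congrArg star hUX3
    rw [Ring.lie_def] at h ⊢
    simp only [star_sub, star_mul, hX3sa, star_smul, Complex.star_def,
      Complex.conj_ofReal] at h
    rw [neg_smul, ← h, neg_sub]
  have hX3U : ⁅X3, U⁆ = -((ξ : ℂ) • U) := by rw [← lie_skew, hUX3]
  have hX3Us : ⁅X3, star U⁆ = (ξ : ℂ) • star U := by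
    rw [← lie_skew, hUsX3]; simp
  -- first order brackets with X1, X2
  have h1U : ⁅X1, U⁆ = 0 := by simp [hX1, add_lie, smul_lie, l1]
  have h1Us : ⁅X1, star U⁆ = 0 := by simp [hX1, add_lie, smul_lie, l2]
  have h2U : ⁅X2, U⁆ = 0 := by simp [hX2, sub_lie, smul_lie, l1]
  have h2Us : ⁅X2, star U⁆ = 0 := by simp [hX2, sub_lie, smul_lie, l2]
  -- Box U and Box U*
  have hBU : Box U = ((ξ : ℂ) ^ 2) • U := by
    rw [hBox, h1U, h2U, hX3U, lie_neg, lie_smul, hX3U, smul_neg, neg_neg,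
      smul_smul, ← sq]
    simp
  have hBUs : Box (star U) = ((ξ : ℂ) ^ 2) • star U := by
    rw [hBox, h1Us, h2Us, hX3Us, lie_smul, hX3Us, smul_smul, ← sq]
    simp
  -- Box X3
  have hBX3 : Box X3 = 0 := by
    rw [hBox]
    have e1 : ⁅X1, X3⁆ = (2 : ℂ)⁻¹ • ((ξ : ℂ) • U + (-(ξ : ℂ)) • star U) := by
      simp [hX1, add_lie, smul_lie, hUX3, hUsX3]
    have e2 : ⁅X2, X3⁆ = ((2 : ℂ) * Complex.I)⁻¹ •
        ((ξ : ℂ) • U - (-(ξ : ℂ)) • star U) := by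
      simp only [hX2, sub_lie, smul_lie, hUX3, hUsX3, smul_sub, smul_smul,
        neg_smul, smul_neg, sub_neg_eq_add]
      module
    rw [e1, e2]
    simp only [lie_smul, lie_add, lie_sub, h1U, h1Us, h2U, h2Us, smul_zero,
      add_zero, zero_add, sub_zero, sub_self, lie_self, lie_zero]
  -- Box X1, Box X2 via bilinearity
  have hBX1 : Box X1 = ((ξ : ℂ) ^ 2) • X1 := by
    have hlin : Box X1 = (2 : ℂ)⁻¹ • (Box U + Box (star U)) := by
      simp only [hBox, hX1, lie_smul, lie_add, smul_add]
      abel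
    rw [hlin, hBU, hBUs, hX1]
    module
  have hBX2 : Box X2 = ((ξ : ℂ) ^ 2) • X2 := by
    have hlin : Box X2 = ((2 : ℂ) * Complex.I)⁻¹ • (Box U - Box (star U)) := by
      simp only [hBox, hX2, lie_smul, lie_sub, smul_sub]
      module
    rw [hlin, hBU, hBUs, hX2]
    module
  refine ⟨hBX3, hBU, hBX1, hBX2, ?_⟩
  intro hξ hU ⟨e1, e2, _⟩
  rw [hBX1] at e1
  rw [hBX2] at e2
  have hξ2 : ((ξ : ℂ) ^ 2) ≠ 0 := by
    simpa using hξ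
  have hX1z : X1 = 0 := by
    rcases smul_eq_zero.mp e1 with h | h
    · exact absurd h hξ2
    · exact h
  have hX2z : X2 = 0 := by
    rcases smul_eq_zero.mp e2 with h | h
    · exact absurd h hξ2
    · exact h
  rw [hX1] at hX1z
  rw [hX2] at hX2z
  have h2ne : ((2 : ℂ))⁻¹ ≠ 0 := by norm_num
  have h2ine : (((2 : ℂ) * Complex.I))⁻¹ ≠ 0 := by
    simp [Complex.I_ne_zero]
  have hadd : U + star U = 0 := by
    rcases smul_eq_zero.mp hX1z with h | h
    · exact absurd h h2ne
    · exact h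
  have hsub : U - star U = 0 := by
    rcases smul_eq_zero.mp hX2z with h | h
    · exact absurd h h2ine
    · exact h
  apply hU
  have : (2 : ℂ) • U = 0 := by
    have := congrArg₂ (· + ·) hadd hsub
    simpa [two_smul, add_add_sub_cancel] using this
  rcases smul_eq_zero.mp this with h | h
  · norm_num at h
  · exact h
end

section
/- Let (U, X) be a fuzzy cylinder of radius R and parameter ξ in a complex *-algebra A. Define the light-like propagating cylinder configuration X^0 = X, X^1 = (U + U*)/2, X^2 = (U − U*)/(2i), X^3 = X (the non-compact direction embedded along the light-like vector v = (1,0,0,1)). Then with the Minkowski matrix Laplacian □φ = −⁅X^0,⁅X^0,φ⁆⁆ + ⁅X^1,⁅X^1,φ⁆⁆ + ⁅X^2,⁅X^2,φ⁆⁆ + ⁅X^3,⁅X^3,φ⁆⁆, one has □X^a = 0 for a = 0,1,2,3, for any values of ξ and R. Thus the light-like propagating fuzzy cylinder solves the IKKT matrix model equations of motion. -/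
/-- the light-like propagating fuzzy cylinder solves the IKKT
equations of motion.  For a fuzzy cylinder `(U, X)` of radius `R > 0` and
parameter `ξ`, the configuration `X⁰ = X`, `X¹ = (U+U*)/2`, `X² = (U-U*)/(2i)`,
`X³ = X` satisfies `□Xᵃ = 0` for `a = 0,1,2,3`, where
`□φ = -⁅X⁰,⁅X⁰,φ⁆⁆ + ⁅X¹,⁅X¹,φ⁆⁆ + ⁅X²,⁅X²,φ⁆⁆ + ⁅X³,⁅X³,φ⁆⁆`, for any `ξ`, `R`. -/
theorem stmt3 (A : Type*) [Ring A] [Algebra ℂ A] [StarRing A] [StarModule ℂ A]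
    (R ξ : ℝ) (hR : 0 < R) (U X : A)
    (hUUs : U * star U = ((R : ℂ) ^ 2) • (1 : A))
    (hUsU : star U * U = ((R : ℂ) ^ 2) • (1 : A))
    (hXsa : star X = X)
    (hUX : ⁅U, X⁆ = (ξ : ℂ) • U)
    (X0 X1 X2 X3 : A)
    (hX0 : X0 = X)
    (hX1 : X1 = (2 : ℂ)⁻¹ • (U + star U))
    (hX2 : X2 = ((2 : ℂ) * Complex.I)⁻¹ • (U - star U))
    (hX3 : X3 = X)
    (Box : A → A)
    (hBox : ∀ φ, Box φ =
      -⁅X0, ⁅X0, φ⁆⁆ + ⁅X1, ⁅X1, φ⁆⁆ + ⁅X2, ⁅X2, φ⁆⁆ + ⁅X3, ⁅X3, φ⁆⁆) :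
    Box X0 = 0 ∧ Box X1 = 0 ∧ Box X2 = 0 ∧ Box X3 = 0 := by
  letI : LieRing A := LieRing.ofAssociativeRing
  -- U and star U commute
  have hc : ⁅U, star U⁆ = 0 := by
    rw [Ring.lie_def, hUUs, hUsU, sub_self]
  have hc' : ⁅star U, U⁆ = 0 := by
    rw [Ring.lie_def, hUUs, hUsU, sub_self]
  -- bracket of star U with X
  have hUsX : ⁅star U, X⁆ = -((ξ : ℂ) • star U) := by
    have := congrArg star hUX
    rw [Ring.lie_def] at this
    simp only [star_sub, star_mul, hXsa, star_smul, Complex.star_def,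
      Complex.conj_ofReal] at this
    rw [Ring.lie_def, ← neg_sub (X * star U), this]
  have hXU : ⁅X, U⁆ = -((ξ : ℂ) • U) := by
    rw [← lie_skew, hUX]
  have hXUs : ⁅X, star U⁆ = (ξ : ℂ) • star U := by
    rw [← lie_skew, hUsX, neg_neg]
  subst hX0 hX1 hX2 hX3
  refine ⟨?_, ?_, ?_, ?_⟩ <;>
    (rw [hBox]
     simp only [lie_add, add_lie, lie_sub, sub_lie, lie_smul, smul_lie, lie_self,
      hUX, hUsX, hXU, hXUs, hc, hc', smul_zero, smul_neg, smul_smul,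
      add_zero, zero_add, sub_zero, zero_sub, neg_neg, neg_zero, lie_zero, zero_lie,
      lie_neg, neg_lie, smul_add, smul_sub]) <;> module
end

section
/- Let A be a complex *-algebra containing self-adjoint elements X^0, X^3 with ⁅X^0,X^3⁆ = −iθ·1 (θ ∈ ℝ), and an element Z with Z·Z* = Z*·Z = R²·1, ⁅Z,X^0⁆ = −ξ·Z and ⁅Z,X^3⁆ = ξ·Z (ξ, R ∈ ℝ). (These relations model Z = R·e^{i(ξ/θ)(X^0+X^3)} on the quantum plane.) Set X^1 = (Z + Z*)/2, X^2 = (Z − Z*)/(2i). Then the Minkowski matrix Laplacian □φ = −⁅X^0,⁅X^0,φ⁆⁆ + Σ_{i=1}^{3}⁅X^i,⁅X^i,φ⁆⁆ satisfies □X^a = 0 for a = 0,1,2,3; i.e., the propagating plane wave solves the IKKT equations of motion. -/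
/-- the propagating plane wave solves the IKKT equations of motion.
Given self-adjoint `X⁰, X³` with `⁅X⁰,X³⁆ = -iθ•1`, and `Z` with
`Z Z* = Z* Z = R²•1`, `⁅Z,X⁰⁆ = -ξ•Z`, `⁅Z,X³⁆ = ξ•Z`, setting
`X¹ = (Z+Z*)/2`, `X² = (Z-Z*)/(2i)`, the Minkowski matrix Laplacian
`□φ = -⁅X⁰,⁅X⁰,φ⁆⁆ + ⁅X¹,⁅X¹,φ⁆⁆ + ⁅X²,⁅X²,φ⁆⁆ + ⁅X³,⁅X³,φ⁆⁆`
satisfies `□Xᵃ = 0` for `a = 0,1,2,3`. -/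
theorem stmt4 (A : Type*) [Ring A] [Algebra ℂ A] [StarRing A] [StarModule ℂ A]
    (θ ξ R : ℝ) (X0 X3 Z : A)
    (hX0sa : star X0 = X0)
    (hX3sa : star X3 = X3)
    (hplane : ⁅X0, X3⁆ = (-(Complex.I * (θ : ℂ))) • (1 : A))
    (hZZs : Z * star Z = ((R : ℂ) ^ 2) • (1 : A))
    (hZsZ : star Z * Z = ((R : ℂ) ^ 2) • (1 : A))
    (hZX0 : ⁅Z, X0⁆ = (-(ξ : ℂ)) • Z)
    (hZX3 : ⁅Z, X3⁆ = (ξ : ℂ) • Z)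
    (X1 X2 : A)
    (hX1 : X1 = (2 : ℂ)⁻¹ • (Z + star Z))
    (hX2 : X2 = ((2 : ℂ) * Complex.I)⁻¹ • (Z - star Z))
    (Box : A → A)
    (hBox : ∀ φ, Box φ =
      -⁅X0, ⁅X0, φ⁆⁆ + ⁅X1, ⁅X1, φ⁆⁆ + ⁅X2, ⁅X2, φ⁆⁆ + ⁅X3, ⁅X3, φ⁆⁆) :
    Box X0 = 0 ∧ Box X1 = 0 ∧ Box X2 = 0 ∧ Box X3 = 0 := by
  letI : LieRing A := LieRing.ofAssociativeRing
  have h1 : ∀ a : A, ⁅a, (1:A)⁆ = 0 := fun a => by simp [Ring.lie_def]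
  have hX0Z : ⁅X0, Z⁆ = (ξ : ℂ) • Z := by rw [← lie_skew, hZX0]; simp
  have hX3Z : ⁅X3, Z⁆ = (-(ξ : ℂ)) • Z := by rw [← lie_skew, hZX3]; simp
  have hZsX0 : ⁅star Z, X0⁆ = (ξ : ℂ) • star Z := by
    have := congrArg star hZX0
    simp only [Ring.lie_def, star_sub, star_mul, hX0sa, star_smul, star_neg, Complex.star_def, Complex.conj_ofReal] at this ⊢
    linear_combination (norm := module) -this
  have hZsX3 : ⁅star Z, X3⁆ = (-(ξ : ℂ)) • star Z := by
    have := congrArg star hZX3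
    simp only [Ring.lie_def, star_sub, star_mul, hX3sa, star_smul, star_neg, Complex.star_def, Complex.conj_ofReal] at this ⊢
    linear_combination (norm := module) -this
  have hX0Zs : ⁅X0, star Z⁆ = (-(ξ : ℂ)) • star Z := by rw [← lie_skew, hZsX0]; simp
  have hX3Zs : ⁅X3, star Z⁆ = (ξ : ℂ) • star Z := by rw [← lie_skew, hZsX3]; simp
  have hc : ⁅Z, star Z⁆ = 0 := by rw [Ring.lie_def, hZZs, hZsZ, sub_self]
  have hc' : ⁅star Z, Z⁆ = 0 := by rw [Ring.lie_def, hZsZ, hZZs, sub_self]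
  have hX3X0 : ⁅X3, X0⁆ = (Complex.I * (θ : ℂ)) • (1 : A) := by
    rw [← lie_skew, hplane]; simp
  refine ⟨?_, ?_, ?_, ?_⟩ <;>
    simp only [hBox, hX1, hX2, lie_smul, smul_lie, lie_add, add_lie, lie_sub, sub_lie,
      lie_self, lie_zero, zero_lie, hplane, hX3X0, hZX0, hZX3, hX0Z, hX3Z, hZsX0, hZsX3, hX0Zs, hX3Zs,
      hc, hc', h1, smul_zero, zero_smul, smul_smul, add_zero, zero_add, sub_zero,
      zero_sub, neg_zero, smul_neg, neg_neg] <;>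
    module
end

section
/- (Lemma 1) Let A be a complex *-algebra. Suppose X^1,…,X^m ∈ A and self-adjoint Y^1,…,Y^6 ∈ A satisfy: for each fixed μ (no sum) and all i, ⁅X^μ,⁅X^μ,Y^i⁆⁆ = (ξ^μ)²·Y^i with ξ^μ ∈ ℝ; and Σ_{i=1}^{6}⁅Y^i,⁅Y^i,Y^j⁆⁆ = ξ_Y²·Y^j for all j, with ξ_Y ∈ ℝ. Let (U, X) be a fuzzy cylinder of radius 1 and parameter ξ_X (U unitary, X self-adjoint, ⁅U,X⁆ = ξ_X·U) such that U, U*, X each commute with every X^μ and every Y^i. Put Z^α = Y^{2α−1} + i·Y^{2α} for α = 1,2,3 and assume ⁅Z^α,(Z^α)*⁆ = 0. Choose n_1, n_2, n_3 ∈ ℤ, set Z'^α = Z^α·U^{n_α}, and define self-adjoint components Y'^{2α−1} = (Z'^α + (Z'^α)*)/2, Y'^{2α} = (Z'^α − (Z'^α)*)/(2i). Then: (1) ⁅X^μ,⁅X^μ,Y'^i⁆⁆ = (ξ^μ)²·Y'^i for each μ and all i; (2) ⁅X,⁅X,Z'^α⁆⁆ = n_α²·ξ_X²·Z'^α; (3)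 Σ_{i=1}^{6}⁅Y'^i,⁅Y'^i,Y'^j⁆⁆ = ξ_Y²·Y'^j for all j; (4) Σ_{i=1}^{6}⁅Y'^i,⁅Y'^i,X⁆⁆ = 0; (5) Σ_{i=1}^{6}⁅Y'^i,⁅Y'^i,X^μ⁆⁆ = Σ_{i=1}^{6}⁅Y^i,⁅Y^i,X^μ⁆⁆ for every μ. -/
set_option linter.unusedSectionVars false
set_option linter.unusedVariables false
set_option maxHeartbeats 1000000

section Stmt5Aux
variable {A : Type*} [Ring A] [Algebra ℂ A]
attribute [local instance 100] LieRing.ofAssociativeRing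

lemma aux_fin3 {P : Fin 3 → Prop} (h0 : P 0) (h1 : P 1) (h2 : P 2) : ∀ β, P β := by
  intro β
  match β with
  | ⟨0, _⟩ => exact h0
  | ⟨1, _⟩ => exact h1
  | ⟨2, _⟩ => exact h2

lemma aux_fin6 {P : Fin 6 → Prop} (h0 : P 0) (h1 : P 1) (h2 : P 2) (h3 : P 3)
    (h4 : P 4) (h5 : P 5) : ∀ β, P β := by
  intro β
  match β with
  | ⟨0, _⟩ => exact h0
  | ⟨1, _⟩ => exact h1
  | ⟨2, _⟩ => exact h2
  | ⟨3, _⟩ => exact h3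
  | ⟨4, _⟩ => exact h4
  | ⟨5, _⟩ => exact h5

lemma aux_sq (c : ℂ) (x y : A) : ⁅c • x, ⁅c • x, y⁆⁆ = (c*c) • ⁅x, ⁅x, y⁆⁆ := by
  simp only [smul_lie, lie_smul, smul_smul]

lemma aux_pair (P Q a : A) :
    ⁅(2:ℂ)⁻¹ • (P + Q), ⁅(2:ℂ)⁻¹ • (P + Q), a⁆⁆ +
      ⁅((2:ℂ)*Complex.I)⁻¹ • (P - Q), ⁅((2:ℂ)*Complex.I)⁻¹ • (P - Q), a⁆⁆
      = (2:ℂ)⁻¹ • (⁅P, ⁅Q, a⁆⁆ + ⁅Q, ⁅P, a⁆⁆) := by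
  rw [aux_sq, aux_sq]
  have h2 : ((2:ℂ)⁻¹) * (2:ℂ)⁻¹ = (4:ℂ)⁻¹ := by norm_num
  have hI : (((2:ℂ)*Complex.I)⁻¹) * (((2:ℂ)*Complex.I)⁻¹) = -(4:ℂ)⁻¹ := by
    rw [← mul_inv]
    have h4 : ((2:ℂ)*Complex.I) * ((2:ℂ)*Complex.I) = -4 := by
      linear_combination (4:ℂ) * Complex.I_sq
    rw [h4]; norm_num
  rw [h2, hI]
  simp only [lie_add, add_lie, lie_sub, sub_lie]
  module

lemma aux_rep1 (a b : A) : a = (2:ℂ)⁻¹ • ((a + Complex.I • b) + (a - Complex.I • b)) := by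
  module

lemma aux_rep2 (a b : A) :
    b = ((2:ℂ)*Complex.I)⁻¹ • ((a + Complex.I • b) - (a - Complex.I • b)) := by
  have h : ((2:ℂ)*Complex.I)⁻¹ • ((a + Complex.I • b) - (a - Complex.I • b))
      = (((2:ℂ)*Complex.I)⁻¹ * ((2:ℂ) * Complex.I)) • b := by module
  rw [h, inv_mul_cancel₀ (by norm_num [Complex.I_ne_zero]), one_smul]

lemma aux_leibniz (a b c : A) : ⁅a * b, c⁆ = a * ⁅b, c⁆ + ⁅a, c⁆ * b := by
  simp only [Ring.lie_def, mul_sub, sub_mul, mul_assoc]; abel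

lemma aux_lie_mul_right (p w v : A) (h : Commute v p) : ⁅p, w * v⁆ = ⁅p, w⁆ * v := by
  simp only [Ring.lie_def, sub_mul, mul_assoc]; rw [h.eq]

lemma aux_lie_mul_left (p v w : A) (h : Commute v p) : ⁅p, v * w⁆ = v * ⁅p, w⁆ := by
  simp only [Ring.lie_def, mul_sub, ← mul_assoc]; rw [← h.eq]

lemma aux_mul_lie_left (q w v : A) (h : Commute v w) : ⁅v * q, w⁆ = v * ⁅q, w⁆ := by
  simp only [Ring.lie_def, mul_sub, ← mul_assoc]; rw [← h.eq]

lemma aux_mul_lie_right (q w v : A) (h : Commute v w) : ⁅q * v, w⁆ = ⁅q, w⁆ * v := by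
  simp only [Ring.lie_def, sub_mul, mul_assoc]; rw [← h.eq]

lemma aux_commute_lie (v q w : A) (hq : Commute v q) (hw : Commute v w) :
    Commute v ⁅q, w⁆ := by
  rw [Ring.lie_def]; exact (hq.mul_right hw).sub_right (hw.mul_right hq)

lemma aux_twist0 (p q v vi : A) (h1 : v * vi = 1) (h2 : vi * v = 1)
    (hpi : Commute vi p) (hqi : Commute vi q) :
    ⁅p * v, vi * q⁆ = ⁅p, q⁆ := by
  simp only [Ring.lie_def]
  have e1 : p * v * (vi * q) = p * q := by
    rw [mul_assoc, ← mul_assoc v vi, h1, one_mul]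
  have e2 : vi * q * (p * v) = q * p := by
    rw [hqi.eq, mul_assoc, ← mul_assoc vi p v, hpi.eq, mul_assoc p vi v, h2, mul_one]
  rw [e1, e2]

lemma aux_twist0' (q c v vi : A) (h1 : v * vi = 1) (h2 : vi * v = 1)
    (hqi : Commute vi q) (hci : Commute vi c) :
    ⁅vi * q, c * v⁆ = ⁅q, c⁆ := by
  simp only [Ring.lie_def]
  have e1 : vi * q * (c * v) = q * c := by
    rw [hqi.eq, mul_assoc, ← mul_assoc vi c v, hci.eq, mul_assoc c vi v, h2, mul_one]
  have e2 : c * v * (vi * q) = c * q := by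
    rw [mul_assoc, ← mul_assoc v vi, h1, one_mul]
  rw [e1, e2]

lemma aux_twist (p q w v vi : A) (h1 : v * vi = 1) (h2 : vi * v = 1)
    (hpi : Commute vi p) (hqv : Commute v q) (hqi : Commute vi q)
    (hwv : Commute v w) (hwi : Commute vi w) :
    ⁅p * v, ⁅vi * q, w⁆⁆ = ⁅p, ⁅q, w⁆⁆ := by
  rw [aux_mul_lie_left q w vi hwi]
  exact aux_twist0 p _ v vi h1 h2 hpi (aux_commute_lie vi q w hqi hwi)

lemma aux_twist' (p q w v vi : A) (h1 : v * vi = 1) (h2 : vi * v = 1)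
    (hpi : Commute vi p) (hqi : Commute vi q)
    (hwv : Commute v w) (hwi : Commute vi w) :
    ⁅vi * q, ⁅p * v, w⁆⁆ = ⁅q, ⁅p, w⁆⁆ := by
  rw [aux_mul_lie_right p w v hwv]
  exact aux_twist0' q _ v vi h1 h2 hqi (aux_commute_lie vi p w hpi hwi)

lemma aux_regroup (x1 x2 x3 x4 x5 x6 : A) :
    x1+x2+x3+x4+x5+x6 = (x1+x2)+((x3+x4)+(x5+x6)) := by abel

end Stmt5Aux


/-- Lemma 1 of the paper: twisting a matrix configuration via a
fuzzy cylinder `(U, Xc)` of radius 1 and parameter `ξX`.  With `Zᵅ = Y^{2α-1} + i Y^{2α}`,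
`⁅Zᵅ,(Zᵅ)*⁆ = 0`, `Z'ᵅ = Zᵅ U^{nᵅ}` and `Y'` the self-adjoint components of the `Z'ᵅ`:
(1) `⁅Xᵘ,⁅Xᵘ,Y'ⁱ⁆⁆ = (ξᵘ)²•Y'ⁱ`; (2) `⁅Xc,⁅Xc,Z'ᵅ⁆⁆ = nᵅ²ξX²•Z'ᵅ`;
(3) `Σᵢ⁅Y'ⁱ,⁅Y'ⁱ,Y'ʲ⁆⁆ = ξY²•Y'ʲ`; (4) `Σᵢ⁅Y'ⁱ,⁅Y'ⁱ,Xc⁆⁆ = 0`;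
(5) `Σᵢ⁅Y'ⁱ,⁅Y'ⁱ,Xᵘ⁆⁆ = Σᵢ⁅Yⁱ,⁅Yⁱ,Xᵘ⁆⁆`. -/
theorem stmt5 (A : Type*) [Ring A] [Algebra ℂ A] [StarRing A] [StarModule ℂ A]
    (m : ℕ) (X : Fin m → A) (ξ : Fin m → ℝ) (ξY ξX : ℝ)
    (Y : Fin 6 → A) (hYsa : ∀ i, star (Y i) = Y i)
    (hXY : ∀ μ, ∀ i, ⁅X μ, ⁅X μ, Y i⁆⁆ = ((ξ μ : ℂ) ^ 2) • Y i)
    (hYY : ∀ j, ∑ i, ⁅Y i, ⁅Y i, Y j⁆⁆ = ((ξY : ℂ) ^ 2) • Y j)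
    (U : Aˣ) (Xc : A)
    (hUUs : (U : A) * star (U : A) = 1)
    (hUsU : star (U : A) * (U : A) = 1)
    (hXcsa : star Xc = Xc)
    (hUXc : ⁅(U : A), Xc⁆ = (ξX : ℂ) • (U : A))
    (hcommX : ∀ μ, ∀ P ∈ ({(U : A), star (U : A), Xc} : Set A), Commute P (X μ))
    (hcommY : ∀ i, ∀ P ∈ ({(U : A), star (U : A), Xc} : Set A), Commute P (Y i))
    (Z : Fin 3 → A)
    (hZ : Z = ![Y 0 + Complex.I • Y 1, Y 2 + Complex.I • Y 3, Y 4 + Complex.I • Y 5])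
    (hZnormal : ∀ α, ⁅Z α, star (Z α)⁆ = 0)
    (n : Fin 3 → ℤ)
    (Z' : Fin 3 → A)
    (hZ' : ∀ α, Z' α = Z α * ((U ^ n α : Aˣ) : A))
    (Y' : Fin 6 → A)
    (hY' : Y' = ![(2 : ℂ)⁻¹ • (Z' 0 + star (Z' 0)),
                  ((2 : ℂ) * Complex.I)⁻¹ • (Z' 0 - star (Z' 0)),
                  (2 : ℂ)⁻¹ • (Z' 1 + star (Z' 1)),
                  ((2 : ℂ) * Complex.I)⁻¹ • (Z' 1 - star (Z' 1)),
                  (2 : ℂ)⁻¹ • (Z' 2 + star (Z' 2)),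
                  ((2 : ℂ) * Complex.I)⁻¹ • (Z' 2 - star (Z' 2))]) :
    (∀ μ, ∀ i, ⁅X μ, ⁅X μ, Y' i⁆⁆ = ((ξ μ : ℂ) ^ 2) • Y' i)
    ∧ (∀ α, ⁅Xc, ⁅Xc, Z' α⁆⁆ = (((n α : ℂ) ^ 2) * (ξX : ℂ) ^ 2) • Z' α)
    ∧ (∀ j, ∑ i, ⁅Y' i, ⁅Y' i, Y' j⁆⁆ = ((ξY : ℂ) ^ 2) • Y' j)
    ∧ (∑ i, ⁅Y' i, ⁅Y' i, Xc⁆⁆ = 0)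
    ∧ (∀ μ, ∑ i, ⁅Y' i, ⁅Y' i, X μ⁆⁆ = ∑ i, ⁅Y i, ⁅Y i, X μ⁆⁆) := by
  letI : LieRing A := LieRing.ofAssociativeRing
  -- basic unitary facts
  have hUinv : ((U⁻¹ : Aˣ) : A) = star (U : A) := Units.inv_eq_of_mul_eq_one_left hUsU
  have hsU : (star U : Aˣ) = U⁻¹ := by
    apply Units.ext
    rw [Units.coe_star, ← hUinv]
  have hstarPow : ∀ k : ℤ, star ((U ^ k : Aˣ) : A) = ((U ^ (-k) : Aˣ) : A) := by
    intro k
    rw [← Units.coe_star]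
    congr 1
    rw [star_zpow, hsU, inv_zpow, ← zpow_neg]
  have hVVi : ∀ k : ℤ, ((U ^ k : Aˣ) : A) * ((U ^ (-k) : Aˣ) : A) = 1 := by
    intro k
    rw [← Units.val_mul, ← zpow_add]
    simp
  have hViV : ∀ k : ℤ, ((U ^ (-k) : Aˣ) : A) * ((U ^ k : Aˣ) : A) = 1 := by
    intro k
    rw [← Units.val_mul, ← zpow_add]
    simp
  -- entries of Z
  have z0 : Z 0 = Y 0 + Complex.I • Y 1 := by rw [hZ]; rfl
  have z1 : Z 1 = Y 2 + Complex.I • Y 3 := by rw [hZ]; rfl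
  have z2 : Z 2 = Y 4 + Complex.I • Y 5 := by rw [hZ]; rfl
  have zstar : ∀ (a b : Fin 6), star (Y a + Complex.I • Y b) = Y a - Complex.I • Y b := by
    intro a b
    rw [star_add, star_smul, Complex.star_def, Complex.conj_I, hYsa, hYsa, neg_smul,
      ← sub_eq_add_neg]
  have zs0 : star (Z 0) = Y 0 - Complex.I • Y 1 := by rw [z0, zstar]
  have zs1 : star (Z 1) = Y 2 - Complex.I • Y 3 := by rw [z1, zstar]
  have zs2 : star (Z 2) = Y 4 - Complex.I • Y 5 := by rw [z2, zstar]
  -- entries of Y'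
  have e0 : Y' 0 = (2:ℂ)⁻¹ • (Z' 0 + star (Z' 0)) := by rw [hY']; rfl
  have e1 : Y' 1 = ((2:ℂ)*Complex.I)⁻¹ • (Z' 0 - star (Z' 0)) := by rw [hY']; rfl
  have e2 : Y' 2 = (2:ℂ)⁻¹ • (Z' 1 + star (Z' 1)) := by rw [hY']; rfl
  have e3 : Y' 3 = ((2:ℂ)*Complex.I)⁻¹ • (Z' 1 - star (Z' 1)) := by rw [hY']; rfl
  have e4 : Y' 4 = (2:ℂ)⁻¹ • (Z' 2 + star (Z' 2)) := by rw [hY']; rfl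
  have e5 : Y' 5 = ((2:ℂ)*Complex.I)⁻¹ • (Z' 2 - star (Z' 2)) := by rw [hY']; rfl
  -- commutation toolbox
  have cUY : ∀ i, Commute (U:A) (Y i) := fun i => hcommY i _ (by simp)
  have cXcY : ∀ i, Commute Xc (Y i) := fun i => hcommY i _ (by simp)
  have cUX : ∀ μ, Commute (U:A) (X μ) := fun μ => hcommX μ _ (by simp)
  have cUZ : ∀ β, Commute (U:A) (Z β) := by
    refine aux_fin3 ?_ ?_ ?_
    · rw [z0]; exact (cUY 0).add_right ((cUY 1).smul_right _)
    · rw [z1]; exact (cUY 2).add_right ((cUY 3).smul_right _)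
    · rw [z2]; exact (cUY 4).add_right ((cUY 5).smul_right _)
  have cUZs : ∀ β, Commute (U:A) (star (Z β)) := by
    refine aux_fin3 ?_ ?_ ?_
    · rw [zs0]; exact (cUY 0).sub_right ((cUY 1).smul_right _)
    · rw [zs1]; exact (cUY 2).sub_right ((cUY 3).smul_right _)
    · rw [zs2]; exact (cUY 4).sub_right ((cUY 5).smul_right _)
  have cXcZ : ∀ β, Commute Xc (Z β) := by
    refine aux_fin3 ?_ ?_ ?_
    · rw [z0]; exact (cXcY 0).add_right ((cXcY 1).smul_right _)
    · rw [z1]; exact (cXcY 2).add_right ((cXcY 3).smul_right _)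
    · rw [z2]; exact (cXcY 4).add_right ((cXcY 5).smul_right _)
  have cXcZs : ∀ β, Commute Xc (star (Z β)) := by
    refine aux_fin3 ?_ ?_ ?_
    · rw [zs0]; exact (cXcY 0).sub_right ((cXcY 1).smul_right _)
    · rw [zs1]; exact (cXcY 2).sub_right ((cXcY 3).smul_right _)
    · rw [zs2]; exact (cXcY 4).sub_right ((cXcY 5).smul_right _)
  have cP : ∀ (k : ℤ) {x : A}, Commute (U:A) x → Commute ((U^k : Aˣ):A) x :=
    fun k _ h => h.units_zpow_left k
  have cPP : ∀ k l : ℤ, Commute ((U^k : Aˣ):A) ((U^l : Aˣ):A) :=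
    fun k l => ((Commute.refl (U:A)).units_zpow_right l).units_zpow_left k
  have hZ's : ∀ α, star (Z' α) = ((U ^ (-(n α)) : Aˣ):A) * star (Z α) := by
    intro α
    rw [hZ' α, star_mul, hstarPow]
  have cPZ' : ∀ (k : ℤ) β, Commute ((U^k : Aˣ):A) (Z' β) := by
    intro k β
    rw [hZ' β]
    exact (cP k (cUZ β)).mul_right (cPP k (n β))
  have cPZ's : ∀ (k : ℤ) β, Commute ((U^k : Aˣ):A) (star (Z' β)) := by
    intro k β
    rw [hZ's β]
    exact (cPP k (-(n β))).mul_right (cP k (cUZs β))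
  -- X double-bracket on Z
  have hXcomb : ∀ μ (a b : A), ⁅X μ,⁅X μ,a⁆⁆ = ((ξ μ:ℂ)^2)•a → ⁅X μ,⁅X μ,b⁆⁆ = ((ξ μ:ℂ)^2)•b →
      ⁅X μ,⁅X μ, a + Complex.I•b⁆⁆ = ((ξ μ:ℂ)^2)•(a + Complex.I•b) := by
    intro μ a b ha hb
    rw [lie_add, lie_add, lie_smul, lie_smul, ha, hb, smul_add, smul_comm]
  have hXcombS : ∀ μ (a b : A), ⁅X μ,⁅X μ,a⁆⁆ = ((ξ μ:ℂ)^2)•a → ⁅X μ,⁅X μ,b⁆⁆ = ((ξ μ:ℂ)^2)•b →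
      ⁅X μ,⁅X μ, a - Complex.I•b⁆⁆ = ((ξ μ:ℂ)^2)•(a - Complex.I•b) := by
    intro μ a b ha hb
    rw [lie_sub, lie_sub, lie_smul, lie_smul, ha, hb, smul_sub, smul_comm]
  have hXmZ : ∀ μ β, ⁅X μ, ⁅X μ, Z β⁆⁆ = ((ξ μ:ℂ)^2) • Z β := by
    intro μ
    refine aux_fin3 ?_ ?_ ?_
    · rw [z0]; exact hXcomb μ _ _ (hXY μ 0) (hXY μ 1)
    · rw [z1]; exact hXcomb μ _ _ (hXY μ 2) (hXY μ 3)
    · rw [z2]; exact hXcomb μ _ _ (hXY μ 4) (hXY μ 5)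
  have hXmZs : ∀ μ β, ⁅X μ, ⁅X μ, star (Z β)⁆⁆ = ((ξ μ:ℂ)^2) • star (Z β) := by
    intro μ
    refine aux_fin3 ?_ ?_ ?_
    · rw [zs0]; exact hXcombS μ _ _ (hXY μ 0) (hXY μ 1)
    · rw [zs1]; exact hXcombS μ _ _ (hXY μ 2) (hXY μ 3)
    · rw [zs2]; exact hXcombS μ _ _ (hXY μ 4) (hXY μ 5)
  -- Y-sum on Z
  have hYcomb : ∀ (a b : A), (∑ i, ⁅Y i,⁅Y i,a⁆⁆ = ((ξY:ℂ)^2)•a) →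
      (∑ i, ⁅Y i,⁅Y i,b⁆⁆ = ((ξY:ℂ)^2)•b) →
      ∑ i, ⁅Y i,⁅Y i, a + Complex.I•b⁆⁆ = ((ξY:ℂ)^2)•(a + Complex.I•b) := by
    intro a b ha hb
    simp only [lie_add, lie_smul, Finset.sum_add_distrib, ← Finset.smul_sum]
    rw [ha, hb, smul_add, smul_comm]
  have hYcombS : ∀ (a b : A), (∑ i, ⁅Y i,⁅Y i,a⁆⁆ = ((ξY:ℂ)^2)•a) →
      (∑ i, ⁅Y i,⁅Y i,b⁆⁆ = ((ξY:ℂ)^2)•b) →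
      ∑ i, ⁅Y i,⁅Y i, a - Complex.I•b⁆⁆ = ((ξY:ℂ)^2)•(a - Complex.I•b) := by
    intro a b ha hb
    simp only [lie_sub, lie_smul, Finset.sum_sub_distrib, ← Finset.smul_sum]
    rw [ha, hb, smul_sub, smul_comm]
  have hYYZ : ∀ β, ∑ i, ⁅Y i, ⁅Y i, Z β⁆⁆ = ((ξY:ℂ)^2) • Z β := by
    refine aux_fin3 ?_ ?_ ?_
    · rw [z0]; exact hYcomb _ _ (hYY 0) (hYY 1)
    · rw [z1]; exact hYcomb _ _ (hYY 2) (hYY 3)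
    · rw [z2]; exact hYcomb _ _ (hYY 4) (hYY 5)
  have hYYZs : ∀ β, ∑ i, ⁅Y i, ⁅Y i, star (Z β)⁆⁆ = ((ξY:ℂ)^2) • star (Z β) := by
    refine aux_fin3 ?_ ?_ ?_
    · rw [zs0]; exact hYcombS _ _ (hYY 0) (hYY 1)
    · rw [zs1]; exact hYcombS _ _ (hYY 2) (hYY 3)
    · rw [zs2]; exact hYcombS _ _ (hYY 4) (hYY 5)
  -- unprimed sum reduction
  have hYsum : ∀ W : A, ∑ i, ⁅Y i, ⁅Y i, W⁆⁆ =
      (2:ℂ)⁻¹ • ∑ β : Fin 3, (⁅Z β, ⁅star (Z β), W⁆⁆ + ⁅star (Z β), ⁅Z β, W⁆⁆) := by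
    intro W
    have k0 : Y 0 = (2:ℂ)⁻¹ • (Z 0 + star (Z 0)) := by rw [zs0, z0]; exact aux_rep1 _ _
    have k1 : Y 1 = ((2:ℂ)*Complex.I)⁻¹ • (Z 0 - star (Z 0)) := by
      rw [zs0, z0]; exact aux_rep2 _ _
    have k2 : Y 2 = (2:ℂ)⁻¹ • (Z 1 + star (Z 1)) := by rw [zs1, z1]; exact aux_rep1 _ _
    have k3 : Y 3 = ((2:ℂ)*Complex.I)⁻¹ • (Z 1 - star (Z 1)) := by
      rw [zs1, z1]; exact aux_rep2 _ _
    have k4 : Y 4 = (2:ℂ)⁻¹ • (Z 2 + star (Z 2)) := by rw [zs2, z2]; exact aux_rep1 _ _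
    have k5 : Y 5 = ((2:ℂ)*Complex.I)⁻¹ • (Z 2 - star (Z 2)) := by
      rw [zs2, z2]; exact aux_rep2 _ _
    rw [Fin.sum_univ_six, Fin.sum_univ_three, k0, k1, k2, k3, k4, k5, aux_regroup,
      aux_pair, aux_pair, aux_pair]
    simp only [smul_add]
    abel
  -- primed sum reduction
  have hsum' : ∀ W : A, ∑ i, ⁅Y' i, ⁅Y' i, W⁆⁆ =
      (2:ℂ)⁻¹ • ∑ α : Fin 3, (⁅Z' α, ⁅star (Z' α), W⁆⁆ + ⁅star (Z' α), ⁅Z' α, W⁆⁆) := by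
    intro W
    rw [Fin.sum_univ_six, Fin.sum_univ_three, e0, e1, e2, e3, e4, e5, aux_regroup,
      aux_pair, aux_pair, aux_pair]
    simp only [smul_add]
    abel
  have hpairsum : ∀ W : A, ∑ β : Fin 3, (⁅Z β, ⁅star (Z β), W⁆⁆ + ⁅star (Z β), ⁅Z β, W⁆⁆)
      = (2:ℂ) • ∑ i, ⁅Y i, ⁅Y i, W⁆⁆ := by
    intro W
    rw [hYsum W, smul_smul]
    norm_num
  -- the Xc bracket with powers of U
  have hUXck : ∀ k : ℤ, ⁅((U^k : Aˣ):A), Xc⁆ = ((k:ℂ) * (ξX:ℂ)) • ((U^k : Aˣ):A) := by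
    have hUiXc : ⁅((U⁻¹:Aˣ):A), Xc⁆ = (-(ξX:ℂ)) • ((U⁻¹:Aˣ):A) := by
      have h' : (U:A) * Xc = (ξX:ℂ)•(U:A) + Xc*(U:A) := by
        rw [Ring.lie_def] at hUXc
        rw [sub_eq_iff_eq_add] at hUXc
        exact hUXc
      have e : ((U⁻¹:Aˣ):A) * ((U:A) * Xc) * ((U⁻¹:Aˣ):A)
          = ((U⁻¹:Aˣ):A) * ((ξX:ℂ)•(U:A) + Xc*(U:A)) * ((U⁻¹:Aˣ):A) := by rw [h']
      simp only [mul_add, add_mul, mul_smul_comm, smul_mul_assoc, mul_assoc,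
        Units.inv_mul, Units.mul_inv, Units.inv_mul_cancel_left, Units.mul_inv_cancel_right,
        Units.mul_inv_cancel_left, Units.inv_mul_cancel_right, mul_one, one_mul] at e
      rw [Ring.lie_def, e]
      module
    intro k
    induction k using Int.induction_on with
    | zero => rw [zpow_zero]; simp [Ring.lie_def]
    | succ i ih =>
        have hh : ((U ^ ((i:ℤ)+1) : Aˣ) : A) = ((U^(i:ℤ):Aˣ):A) * (U:A) := by
          rw [zpow_add_one]; rfl
        rw [hh, aux_leibniz, hUXc, ih, mul_smul_comm, smul_mul_assoc]
        match_scalars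
        push_cast
        ring
    | pred i ih =>
        have hh : ((U ^ (-(i:ℤ)-1) : Aˣ) : A) = ((U^(-(i:ℤ)):Aˣ):A) * ((U⁻¹:Aˣ):A) := by
          rw [zpow_sub_one]; rfl
        rw [hh, aux_leibniz, hUiXc, ih, mul_smul_comm, smul_mul_assoc]
        match_scalars
        push_cast
        ring
  -- brackets of Z' with Xc
  have b1 : ∀ α, ⁅Z' α, Xc⁆ = (((n α :ℤ):ℂ) * (ξX:ℂ)) • Z' α := by
    intro α
    rw [hZ' α, aux_leibniz, hUXck (n α), ((cXcZ α).symm).lie_eq, zero_mul, add_zero,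
      mul_smul_comm]
  have b2 : ∀ α, ⁅star (Z' α), Xc⁆ = (((-(n α) :ℤ):ℂ) * (ξX:ℂ)) • star (Z' α) := by
    intro α
    rw [hZ's α, aux_leibniz, hUXck (-(n α)), ((cXcZs α).symm).lie_eq, mul_zero, zero_add,
      smul_mul_assoc, ← hZ's α]
  have b3 : ∀ α, ⁅Z' α, star (Z' α)⁆ = 0 := by
    intro α
    rw [hZ's α, hZ' α,
      aux_twist0 (Z α) (star (Z α)) _ _ (hVVi (n α)) (hViV (n α))
        (cP (-(n α)) (cUZ α)) (cP (-(n α)) (cUZs α))]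
    exact hZnormal α
  have b4 : ∀ α, ⁅star (Z' α), Z' α⁆ = 0 := by
    intro α
    rw [← lie_skew, b3, neg_zero]
  -- key twists
  have tw1 : ∀ α (w : A), Commute (U:A) w →
      ⁅Z' α, ⁅star (Z' α), w⁆⁆ = ⁅Z α, ⁅star (Z α), w⁆⁆ := by
    intro α w hw
    rw [hZ's α, hZ' α]
    exact aux_twist _ _ _ _ _ (hVVi (n α)) (hViV (n α)) (cP (-(n α)) (cUZ α))
      (cP (n α) (cUZs α)) (cP (-(n α)) (cUZs α)) (cP (n α) hw) (cP (-(n α)) hw)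
  have tw2 : ∀ α (w : A), Commute (U:A) w →
      ⁅star (Z' α), ⁅Z' α, w⁆⁆ = ⁅star (Z α), ⁅Z α, w⁆⁆ := by
    intro α w hw
    rw [hZ's α, hZ' α]
    exact aux_twist' _ _ _ _ _ (hVVi (n α)) (hViV (n α)) (cP (-(n α)) (cUZ α))
      (cP (-(n α)) (cUZs α)) (cP (n α) hw) (cP (-(n α)) hw)
  -- sum of primed pairs acting on Z' β and star (Z' β)
  have key3 : ∀ β, ∑ α : Fin 3, (⁅Z' α, ⁅star (Z' α), Z' β⁆⁆ + ⁅star (Z' α), ⁅Z' α, Z' β⁆⁆)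
      = (2:ℂ) • (((ξY:ℂ)^2) • Z' β) := by
    intro β
    have step : ∀ α ∈ Finset.univ, (⁅Z' α, ⁅star (Z' α), Z' β⁆⁆ + ⁅star (Z' α), ⁅Z' α, Z' β⁆⁆)
        = (⁅Z α, ⁅star (Z α), Z β⁆⁆ + ⁅star (Z α), ⁅Z α, Z β⁆⁆) * ((U ^ n β : Aˣ):A) := by
      intro α _
      rw [add_mul]
      have s1 : ⁅star (Z' α), Z' β⁆ = ⁅star (Z' α), Z β⁆ * ((U ^ n β : Aˣ):A) := by
        conv_lhs => rw [hZ' β]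
        exact aux_lie_mul_right _ _ _ (cPZ's (n β) α)
      have s2 : ⁅Z' α, Z' β⁆ = ⁅Z' α, Z β⁆ * ((U ^ n β : Aˣ):A) := by
        conv_lhs => rw [hZ' β]
        exact aux_lie_mul_right _ _ _ (cPZ' (n β) α)
      rw [s1, aux_lie_mul_right _ _ _ (cPZ' (n β) α), tw1 α (Z β) (cUZ β),
          s2, aux_lie_mul_right _ _ _ (cPZ's (n β) α), tw2 α (Z β) (cUZ β)]
    rw [Finset.sum_congr rfl step, ← Finset.sum_mul, hpairsum (Z β), hYYZ β, hZ' β,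
      smul_mul_assoc, smul_mul_assoc]
  have key3s : ∀ β, ∑ α : Fin 3,
      (⁅Z' α, ⁅star (Z' α), star (Z' β)⁆⁆ + ⁅star (Z' α), ⁅Z' α, star (Z' β)⁆⁆)
      = (2:ℂ) • (((ξY:ℂ)^2) • star (Z' β)) := by
    intro β
    have step : ∀ α ∈ Finset.univ,
        (⁅Z' α, ⁅star (Z' α), star (Z' β)⁆⁆ + ⁅star (Z' α), ⁅Z' α, star (Z' β)⁆⁆)
        = ((U ^ (-(n β)) : Aˣ):A) *
          (⁅Z α, ⁅star (Z α), star (Z β)⁆⁆ + ⁅star (Z α), ⁅Z α, star (Z β)⁆⁆) := by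
      intro α _
      rw [mul_add]
      have s1 : ⁅star (Z' α), star (Z' β)⁆
          = ((U ^ (-(n β)) : Aˣ):A) * ⁅star (Z' α), star (Z β)⁆ := by
        conv_lhs => rw [hZ's β]
        exact aux_lie_mul_left _ _ _ (cPZ's (-(n β)) α)
      have s2 : ⁅Z' α, star (Z' β)⁆ = ((U ^ (-(n β)) : Aˣ):A) * ⁅Z' α, star (Z β)⁆ := by
        conv_lhs => rw [hZ's β]
        exact aux_lie_mul_left _ _ _ (cPZ' (-(n β)) α)
      rw [s1, aux_lie_mul_left _ _ _ (cPZ' (-(n β)) α), tw1 α (star (Z β)) (cUZs β),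
          s2, aux_lie_mul_left _ _ _ (cPZ's (-(n β)) α), tw2 α (star (Z β)) (cUZs β)]
    rw [Finset.sum_congr rfl step, ← Finset.mul_sum, hpairsum (star (Z β)), hYYZs β, hZ's β,
      mul_smul_comm, mul_smul_comm]
  -- linearity of the primed pair sum in its argument
  have Tsmul : ∀ (c : ℂ) (W : A),
      ∑ α : Fin 3, (⁅Z' α, ⁅star (Z' α), c • W⁆⁆ + ⁅star (Z' α), ⁅Z' α, c • W⁆⁆)
      = c • ∑ α : Fin 3, (⁅Z' α, ⁅star (Z' α), W⁆⁆ + ⁅star (Z' α), ⁅Z' α, W⁆⁆) := by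
    intro c W
    rw [Finset.smul_sum]
    refine Finset.sum_congr rfl fun α _ => ?_
    rw [lie_smul, lie_smul, lie_smul, lie_smul, smul_add]
  have Tadd : ∀ (W₁ W₂ : A),
      ∑ α : Fin 3, (⁅Z' α, ⁅star (Z' α), W₁ + W₂⁆⁆ + ⁅star (Z' α), ⁅Z' α, W₁ + W₂⁆⁆)
      = (∑ α : Fin 3, (⁅Z' α, ⁅star (Z' α), W₁⁆⁆ + ⁅star (Z' α), ⁅Z' α, W₁⁆⁆))
        + ∑ α : Fin 3, (⁅Z' α, ⁅star (Z' α), W₂⁆⁆ + ⁅star (Z' α), ⁅Z' α, W₂⁆⁆) := by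
    intro W₁ W₂
    rw [← Finset.sum_add_distrib]
    refine Finset.sum_congr rfl fun α _ => ?_
    simp only [lie_add]
    abel
  have Tsub : ∀ (W₁ W₂ : A),
      ∑ α : Fin 3, (⁅Z' α, ⁅star (Z' α), W₁ - W₂⁆⁆ + ⁅star (Z' α), ⁅Z' α, W₁ - W₂⁆⁆)
      = (∑ α : Fin 3, (⁅Z' α, ⁅star (Z' α), W₁⁆⁆ + ⁅star (Z' α), ⁅Z' α, W₁⁆⁆))
        - ∑ α : Fin 3, (⁅Z' α, ⁅star (Z' α), W₂⁆⁆ + ⁅star (Z' α), ⁅Z' α, W₂⁆⁆) := by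
    intro W₁ W₂
    rw [← Finset.sum_sub_distrib]
    refine Finset.sum_congr rfl fun α _ => ?_
    simp only [lie_sub]
    abel
  -- single X-double-brackets on primed variables
  have d1 : ∀ μ β, ⁅X μ, ⁅X μ, Z' β⁆⁆ = ((ξ μ:ℂ)^2) • Z' β := by
    intro μ β
    conv_lhs => rw [hZ' β]
    rw [aux_lie_mul_right _ _ _ (cP (n β) (cUX μ)), aux_lie_mul_right _ _ _ (cP (n β) (cUX μ)),
      hXmZ μ β, smul_mul_assoc, ← hZ' β]
  have d2 : ∀ μ β, ⁅X μ, ⁅X μ, star (Z' β)⁆⁆ = ((ξ μ:ℂ)^2) • star (Z' β) := by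
    intro μ β
    conv_lhs => rw [hZ's β]
    rw [aux_lie_mul_left _ _ _ (cP (-(n β)) (cUX μ)), aux_lie_mul_left _ _ _ (cP (-(n β)) (cUX μ)),
      hXmZs μ β, mul_smul_comm, ← hZ's β]
  refine ⟨?_, ?_, ?_, ?_, ?_⟩
  · -- (1)
    intro μ
    refine aux_fin6 ?_ ?_ ?_ ?_ ?_ ?_
    · rw [e0, lie_smul, lie_smul, lie_add, lie_add, d1, d2]; module
    · rw [e1, lie_smul, lie_smul, lie_sub, lie_sub, d1, d2]; module
    · rw [e2, lie_smul, lie_smul, lie_add, lie_add, d1, d2]; module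
    · rw [e3, lie_smul, lie_smul, lie_sub, lie_sub, d1, d2]; module
    · rw [e4, lie_smul, lie_smul, lie_add, lie_add, d1, d2]; module
    · rw [e5, lie_smul, lie_smul, lie_sub, lie_sub, d1, d2]; module
  · -- (2)
    intro α
    have c1 : ⁅Xc, Z' α⁆ = (-(((n α:ℤ):ℂ) * (ξX:ℂ))) • Z' α := by
      rw [← lie_skew, b1 α, neg_smul]
    rw [c1, lie_smul, c1, smul_smul]
    module
  · -- (3)
    refine aux_fin6 ?_ ?_ ?_ ?_ ?_ ?_
    · rw [hsum', e0, Tsmul, Tadd, key3 0, key3s 0]; module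
    · rw [hsum', e1, Tsmul, Tsub, key3 0, key3s 0]; module
    · rw [hsum', e2, Tsmul, Tadd, key3 1, key3s 1]; module
    · rw [hsum', e3, Tsmul, Tsub, key3 1, key3s 1]; module
    · rw [hsum', e4, Tsmul, Tadd, key3 2, key3s 2]; module
    · rw [hsum', e5, Tsmul, Tsub, key3 2, key3s 2]; module
  · -- (4)
    rw [hsum' Xc]
    have hz : ∑ α : Fin 3, (⁅Z' α, ⁅star (Z' α), Xc⁆⁆ + ⁅star (Z' α), ⁅Z' α, Xc⁆⁆) = 0 := by
      refine Finset.sum_eq_zero fun α _ => ?_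
      rw [b1 α, b2 α, lie_smul, lie_smul, b3 α, b4 α, smul_zero, smul_zero, add_zero]
    rw [hz, smul_zero]
  · -- (5)
    intro μ
    rw [hsum' (X μ), hYsum (X μ)]
    congr 1
    refine Finset.sum_congr rfl fun α _ => ?_
    rw [tw1 α (X μ) (cUX μ), tw2 α (X μ) (cUX μ)]
end

section
/- (Lemma 2, with the exponential twist e^{ik_μX̃^μ} replaced by an abstract unitary satisfying its Weyl-type commutation relations) Let A be a complex *-algebra. Suppose X^1,…,X^m ∈ A and self-adjoint Y^1,…,Y^6 ∈ A satisfy: ⁅X^μ,⁅X^μ,Y^i⁆⁆ = (ξ^μ)²·Y^i for each fixed μ and all i (no sum, ξ^μ ∈ ℝ), and Σ_{i=1}^{6}⁅Y^i,⁅Y^i,Y^j⁆⁆ = ξ_Y²·Y^j. Let X̃^0, X̃^1 ∈ A be self-adjoint with ⁅X̃^0,X̃^1⁆ = iθ̃·1 (θ̃ ∈ ℝ), commuting with all X^μ and Y^i, and let V ∈ A be unitary (V·V* = V*·V = 1), commuting with all X^μ and Y^i, satisfying ⁅V,X̃^0⁆ = t^0·V and ⁅V,X̃^1⁆ = t^1·V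 for real numbers t^0, t^1. Put Z^α = Y^{2α−1} + i·Y^{2α}, assume ⁅Z^α,(Z^α)*⁆ = 0, choose n_α ∈ ℤ, set Z'^α = Z^α·V^{n_α}, and define Y'^{2α−1} = (Z'^α + (Z'^α)*)/2, Y'^{2α} = (Z'^α − (Z'^α)*)/(2i). Then: (1) ⁅X^μ,⁅X^μ,Y'^i⁆⁆ = (ξ^μ)²·Y'^i; (2) −⁅X̃^0,⁅X̃^0,Z'^α⁆⁆ + ⁅X̃^1,⁅X̃^1,Z'^α⁆⁆ = n_α²·((t^1)² − (t^0)²)·Z'^α; (3) Σ_{i=1}^{6}⁅Y'^i,⁅Y'^i,Y'^j⁆⁆ = ξ_Y²·Y'^j; (4) Σ_{i=1}^{6}⁅Y'^i,⁅Y'^i,X̃^μ⁆⁆ = 0 for μ = 0,1; (5) Σ_{i=1}^{6}⁅Y'^i,⁅Y'^i,X^μ⁆⁆ = Σ_{i=1}^{6}⁅Y^i,⁅Y^i,X^μ⁆⁆ for every μ. -/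
section Aux

variable {A : Type*} [Ring A]

private lemma lie_mul_left' (a b x : A) : ⁅a * b, x⁆ = a * ⁅b, x⁆ + ⁅a, x⁆ * b := by
  simp only [Ring.lie_def]; noncomm_ring

private lemma mylie1 {c y : A} (h : Commute c y) (a : A) : ⁅a * c, y⁆ = ⁅a, y⁆ * c := by
  simp only [Ring.lie_def, sub_mul, mul_assoc, h.eq]

private lemma mylie2 {c u : A} (h : Commute c u) (d : A) : ⁅u, d * c⁆ = ⁅u, d⁆ * c := by
  simp only [Ring.lie_def, sub_mul, mul_assoc, h.eq]

private lemma pairkey [Algebra ℂ A] (u v x : A) :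
    ⁅(2:ℂ)⁻¹ • (u + v), ⁅(2:ℂ)⁻¹ • (u + v), x⁆⁆
      + ⁅((2:ℂ) * Complex.I)⁻¹ • (u - v), ⁅((2:ℂ) * Complex.I)⁻¹ • (u - v), x⁆⁆
      = (2:ℂ)⁻¹ • (⁅u, ⁅v, x⁆⁆ + ⁅v, ⁅u, x⁆⁆) := by
  letI : LieRing A := LieRing.ofAssociativeRing
  simp only [smul_lie, lie_smul, add_lie, lie_add, sub_lie, lie_sub, smul_add, smul_sub, smul_smul]
  match_scalars <;> simp [Complex.ext_iff] <;> norm_num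

private lemma starVzpow [StarRing A] (V : Aˣ) (hs : star (V : A) = ((V⁻¹ : Aˣ) : A)) (k : ℤ) :
    star ((V ^ k : Aˣ) : A) = ((V ^ (-k) : Aˣ) : A) := by
  induction k using Int.induction_on with
  | zero => simp
  | succ i ih =>
      have hc : (V⁻¹ : Aˣ) * V ^ (-(i:ℤ)) = V ^ (-(i:ℤ)) * V⁻¹ :=
        ((Commute.refl V).zpow_right _).inv_left
      rw [zpow_add_one, Units.val_mul, star_mul, hs, neg_add, zpow_add, Units.val_mul, ih,
        ← Units.val_mul, ← Units.val_mul, hc, zpow_neg_one]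
  | pred i ih =>
      rw [zpow_sub_one, Units.val_mul, star_mul, ← hs, star_star, ih, neg_neg, neg_sub,
        sub_eq_add_neg, add_comm, neg_neg, zpow_add, zpow_one, Units.val_mul,
        ← Units.val_mul, ← Units.val_mul, ((Commute.refl V).zpow_right (i:ℤ))]

private lemma commVzpow (V : Aˣ) (a : A) (h : Commute (V : A) a) (k : ℤ) :
    Commute ((V ^ k : Aˣ) : A) a := by
  induction k using Int.induction_on with
  | zero => simp
  | succ i ih => rw [zpow_add_one, Units.val_mul]; exact ih.mul_left h
  | pred i ih => rw [zpow_sub_one, Units.val_mul]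
                 exact ih.mul_left (Commute.units_inv_left h)

private lemma weyl [Algebra ℂ A] (V : Aˣ) (B : A) (c : ℂ) (h : ⁅(V:A), B⁆ = c • (V:A)) (k : ℤ) :
    ⁅((V ^ k : Aˣ) : A), B⁆ = ((k : ℂ) * c) • ((V ^ k : Aˣ) : A) := by
  have hinv : ⁅((V⁻¹ : Aˣ) : A), B⁆ = (-c) • ((V⁻¹ : Aˣ) : A) := by
    have e : (V:A) * B = c • ↑V + B * ↑V := by
      have := h; rw [Ring.lie_def, sub_eq_iff_eq_add] at this; exact this
    have e2 : (↑V⁻¹ : A) * ((V:A) * B * ↑V⁻¹) = ↑V⁻¹ * ((c • ↑V + B * ↑V) * ↑V⁻¹) := by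
      rw [e]
    simp only [mul_add, add_mul, mul_assoc, Units.inv_mul_cancel_left,
      Units.mul_inv_cancel_right, smul_mul_assoc, mul_smul_comm, Units.mul_inv, mul_one] at e2
    rw [Ring.lie_def]
    rw [show (B : A) * ↑V⁻¹ = c • ↑V⁻¹ + ↑V⁻¹ * B from by rw [e2]]
    rw [neg_smul]; abel
  induction k using Int.induction_on with
  | zero => simp [Ring.lie_def]
  | succ i ih =>
      rw [zpow_add_one, Units.val_mul, lie_mul_left', h, ih, mul_smul_comm, smul_mul_assoc,
        ← add_smul]
      congr 1; push_cast; ring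
  | pred i ih =>
      rw [zpow_sub_one, Units.val_mul, lie_mul_left', hinv, ih, mul_smul_comm, smul_mul_assoc,
        ← add_smul]
      congr 1; push_cast; ring

private lemma six_pairs {M : Type*} [AddCommMonoid M] {a0 a1 a2 a3 a4 a5 b0 b1 b2 b3 b4 b5 : M}
    (h1 : a0 + a1 = b0 + b1) (h2 : a2 + a3 = b2 + b3) (h3 : a4 + a5 = b4 + b5) :
    a0 + a1 + a2 + a3 + a4 + a5 = b0 + b1 + b2 + b3 + b4 + b5 := by
  calc a0 + a1 + a2 + a3 + a4 + a5 = (a0 + a1) + ((a2 + a3) + (a4 + a5)) := by abel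
    _ = (b0 + b1) + ((b2 + b3) + (b4 + b5)) := by rw [h1, h2, h3]
    _ = b0 + b1 + b2 + b3 + b4 + b5 := by abel

end Aux

/-- Lemma 2 of the paper, with the exponential twist `e^{ik·X̃}`
replaced by an abstract unitary `V` with Weyl-type relations `⁅V,X̃ᵘ⁆ = tᵘ•V`:
twisting via a quantum plane `⁅X̃⁰,X̃¹⁆ = iθ̃•1`.  With `Zᵅ = Y^{2α-1} + i Y^{2α}`,
`⁅Zᵅ,(Zᵅ)*⁆ = 0`, `Z'ᵅ = Zᵅ V^{nᵅ}` and `Y'` the self-adjoint components: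
(1) `⁅Xᵘ,⁅Xᵘ,Y'ⁱ⁆⁆ = (ξᵘ)²•Y'ⁱ`;
(2) `-⁅X̃⁰,⁅X̃⁰,Z'ᵅ⁆⁆ + ⁅X̃¹,⁅X̃¹,Z'ᵅ⁆⁆ = nᵅ²((t¹)²-(t⁰)²)•Z'ᵅ`;
(3) `Σᵢ⁅Y'ⁱ,⁅Y'ⁱ,Y'ʲ⁆⁆ = ξY²•Y'ʲ`; (4) `Σᵢ⁅Y'ⁱ,⁅Y'ⁱ,X̃ᵘ⁆⁆ = 0` for `μ = 0,1`;
(5) `Σᵢ⁅Y'ⁱ,⁅Y'ⁱ,Xᵘ⁆⁆ = Σᵢ⁅Yⁱ,⁅Yⁱ,Xᵘ⁆⁆`. -/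
theorem stmt6 (A : Type*) [Ring A] [Algebra ℂ A] [StarRing A] [StarModule ℂ A]
    (m : ℕ) (X : Fin m → A) (ξ : Fin m → ℝ) (ξY θt t0 t1 : ℝ)
    (Y : Fin 6 → A) (hYsa : ∀ i, star (Y i) = Y i)
    (hXY : ∀ μ, ∀ i, ⁅X μ, ⁅X μ, Y i⁆⁆ = ((ξ μ : ℂ) ^ 2) • Y i)
    (hYY : ∀ j, ∑ i, ⁅Y i, ⁅Y i, Y j⁆⁆ = ((ξY : ℂ) ^ 2) • Y j)
    (Xt0 Xt1 : A)
    (hXt0sa : star Xt0 = Xt0) (hXt1sa : star Xt1 = Xt1)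
    (hplane : ⁅Xt0, Xt1⁆ = (Complex.I * (θt : ℂ)) • (1 : A))
    (hXtX : ∀ μ, Commute Xt0 (X μ) ∧ Commute Xt1 (X μ))
    (hXtY : ∀ i, Commute Xt0 (Y i) ∧ Commute Xt1 (Y i))
    (V : Aˣ)
    (hVVs : (V : A) * star (V : A) = 1)
    (hVsV : star (V : A) * (V : A) = 1)
    (hVX : ∀ μ, Commute ((V : A)) (X μ))
    (hVY : ∀ i, Commute ((V : A)) (Y i))
    (hVXt0 : ⁅(V : A), Xt0⁆ = (t0 : ℂ) • (V : A))
    (hVXt1 : ⁅(V : A), Xt1⁆ = (t1 : ℂ) • (V : A))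
    (Z : Fin 3 → A)
    (hZ : Z = ![Y 0 + Complex.I • Y 1, Y 2 + Complex.I • Y 3, Y 4 + Complex.I • Y 5])
    (hZnormal : ∀ α, ⁅Z α, star (Z α)⁆ = 0)
    (n : Fin 3 → ℤ)
    (Z' : Fin 3 → A)
    (hZ' : ∀ α, Z' α = Z α * ((V ^ n α : Aˣ) : A))
    (Y' : Fin 6 → A)
    (hY' : Y' = ![(2 : ℂ)⁻¹ • (Z' 0 + star (Z' 0)),
                  ((2 : ℂ) * Complex.I)⁻¹ • (Z' 0 - star (Z' 0)),
                  (2 : ℂ)⁻¹ • (Z' 1 + star (Z' 1)),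
                  ((2 : ℂ) * Complex.I)⁻¹ • (Z' 1 - star (Z' 1)),
                  (2 : ℂ)⁻¹ • (Z' 2 + star (Z' 2)),
                  ((2 : ℂ) * Complex.I)⁻¹ • (Z' 2 - star (Z' 2))]) :
    (∀ μ, ∀ i, ⁅X μ, ⁅X μ, Y' i⁆⁆ = ((ξ μ : ℂ) ^ 2) • Y' i)
    ∧ (∀ α, -⁅Xt0, ⁅Xt0, Z' α⁆⁆ + ⁅Xt1, ⁅Xt1, Z' α⁆⁆
        = (((n α : ℂ) ^ 2) * ((t1 : ℂ) ^ 2 - (t0 : ℂ) ^ 2)) • Z' α)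
    ∧ (∀ j, ∑ i, ⁅Y' i, ⁅Y' i, Y' j⁆⁆ = ((ξY : ℂ) ^ 2) • Y' j)
    ∧ ((∑ i, ⁅Y' i, ⁅Y' i, Xt0⁆⁆ = 0) ∧ (∑ i, ⁅Y' i, ⁅Y' i, Xt1⁆⁆ = 0))
    ∧ (∀ μ, ∑ i, ⁅Y' i, ⁅Y' i, X μ⁆⁆ = ∑ i, ⁅Y i, ⁅Y i, X μ⁆⁆) := by
  letI : LieRing A := LieRing.ofAssociativeRing
  -- star of V is its inverse
  have hsV : star (V : A) = ((V⁻¹ : Aˣ) : A) := by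
    calc star (V:A) = (↑V⁻¹ * ↑V) * star (V:A) := by rw [Units.inv_mul, one_mul]
    _ = ↑V⁻¹ * ((V:A) * star (V:A)) := by rw [mul_assoc]
    _ = _ := by rw [hVVs, mul_one]
  -- components of Z
  have hZ0 : Z 0 = Y 0 + Complex.I • Y 1 := by rw [hZ]; rfl
  have hZ1 : Z 1 = Y 2 + Complex.I • Y 3 := by rw [hZ]; rfl
  have hZ2 : Z 2 = Y 4 + Complex.I • Y 5 := by rw [hZ]; rfl
  have hZs0 : star (Z 0) = Y 0 - Complex.I • Y 1 := by
    rw [hZ0]; simp [hYsa, Complex.star_def, Complex.conj_I, sub_eq_add_neg, neg_smul]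
  have hZs1 : star (Z 1) = Y 2 - Complex.I • Y 3 := by
    rw [hZ1]; simp [hYsa, Complex.star_def, Complex.conj_I, sub_eq_add_neg, neg_smul]
  have hZs2 : star (Z 2) = Y 4 - Complex.I • Y 5 := by
    rw [hZ2]; simp [hYsa, Complex.star_def, Complex.conj_I, sub_eq_add_neg, neg_smul]
  -- Y in terms of Z
  have hYZ0 : Y 0 = (2:ℂ)⁻¹ • (Z 0 + star (Z 0)) := by rw [hZs0, hZ0]; module
  have hYZ1 : Y 1 = ((2:ℂ) * Complex.I)⁻¹ • (Z 0 - star (Z 0)) := by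
    rw [hZs0, hZ0]; match_scalars <;> simp [Complex.ext_iff] <;> norm_num
  have hYZ2 : Y 2 = (2:ℂ)⁻¹ • (Z 1 + star (Z 1)) := by rw [hZs1, hZ1]; module
  have hYZ3 : Y 3 = ((2:ℂ) * Complex.I)⁻¹ • (Z 1 - star (Z 1)) := by
    rw [hZs1, hZ1]; match_scalars <;> simp [Complex.ext_iff] <;> norm_num
  have hYZ4 : Y 4 = (2:ℂ)⁻¹ • (Z 2 + star (Z 2)) := by rw [hZs2, hZ2]; module
  have hYZ5 : Y 5 = ((2:ℂ) * Complex.I)⁻¹ • (Z 2 - star (Z 2)) := by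
    rw [hZs2, hZ2]; match_scalars <;> simp [Complex.ext_iff] <;> norm_num
  -- components of Y'
  have hY'0 : Y' 0 = (2:ℂ)⁻¹ • (Z' 0 + star (Z' 0)) := by rw [hY']; rfl
  have hY'1 : Y' 1 = ((2:ℂ) * Complex.I)⁻¹ • (Z' 0 - star (Z' 0)) := by rw [hY']; rfl
  have hY'2 : Y' 2 = (2:ℂ)⁻¹ • (Z' 1 + star (Z' 1)) := by rw [hY']; rfl
  have hY'3 : Y' 3 = ((2:ℂ) * Complex.I)⁻¹ • (Z' 1 - star (Z' 1)) := by rw [hY']; rfl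
  have hY'4 : Y' 4 = (2:ℂ)⁻¹ • (Z' 2 + star (Z' 2)) := by rw [hY']; rfl
  have hY'5 : Y' 5 = ((2:ℂ) * Complex.I)⁻¹ • (Z' 2 - star (Z' 2)) := by rw [hY']; rfl
  -- commutation of V with Z, star Z
  have cVZ : ∀ α, Commute (V:A) (Z α) := by
    have h0 : Commute (V:A) (Z 0) := by
      rw [hZ0]; exact (hVY 0).add_right ((hVY 1).smul_right _)
    have h1 : Commute (V:A) (Z 1) := by
      rw [hZ1]; exact (hVY 2).add_right ((hVY 3).smul_right _)
    have h2 : Commute (V:A) (Z 2) := by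
      rw [hZ2]; exact (hVY 4).add_right ((hVY 5).smul_right _)
    intro α; fin_cases α; exacts [h0, h1, h2]
  have cVZs : ∀ α, Commute (V:A) (star (Z α)) := by
    have h0 : Commute (V:A) (star (Z 0)) := by
      rw [hZs0]; exact (hVY 0).sub_right ((hVY 1).smul_right _)
    have h1 : Commute (V:A) (star (Z 1)) := by
      rw [hZs1]; exact (hVY 2).sub_right ((hVY 3).smul_right _)
    have h2 : Commute (V:A) (star (Z 2)) := by
      rw [hZs2]; exact (hVY 4).sub_right ((hVY 5).smul_right _)
    intro α; fin_cases α; exacts [h0, h1, h2]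
  have hVpow : ∀ k : ℤ, Commute (V:A) ((V ^ k : Aˣ) : A) :=
    fun k => (commVzpow V (V:A) (Commute.refl _) k).symm
  -- star of Z'
  have hsZ' : ∀ α, star (Z' α) = star (Z α) * ((V ^ (-(n α)) : Aˣ) : A) := by
    intro α
    rw [hZ' α, star_mul, starVzpow V hsV, (commVzpow V (star (Z α)) (cVZs α) (-(n α))).eq]
  have ww'1 : ∀ α, ((V ^ n α : Aˣ) : A) * ((V ^ (-(n α)) : Aˣ) : A) = 1 := by
    intro α; rw [← Units.val_mul, ← zpow_add]; simp
  have w'w1 : ∀ α, ((V ^ (-(n α)) : Aˣ) : A) * ((V ^ n α : Aˣ) : A) = 1 := by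
    intro α; rw [← Units.val_mul, ← zpow_add]; simp
  -- normality of Z'
  have normal' : ∀ α, ⁅Z' α, star (Z' α)⁆ = 0 := by
    intro α
    have e1 : Z' α * star (Z' α) = Z α * star (Z α) := by
      rw [hsZ' α, hZ' α, mul_assoc, ← mul_assoc (((V ^ n α : Aˣ) : A)),
        (commVzpow V (star (Z α)) (cVZs α) (n α)).eq, mul_assoc, ww'1 α, mul_one]
    have e2 : star (Z' α) * Z' α = star (Z α) * Z α := by
      rw [hsZ' α, hZ' α, mul_assoc, ← mul_assoc (((V ^ (-(n α)) : Aˣ) : A)),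
        (commVzpow V (Z α) (cVZ α) (-(n α))).eq, mul_assoc, w'w1 α, mul_one]
    rw [Ring.lie_def, e1, e2, ← Ring.lie_def, hZnormal α]
  -- brackets of Z' with a Weyl element B
  have bZ'B : ∀ (B : A) (c : ℂ), ⁅(V:A), B⁆ = c • (V:A) → (∀ i, Commute B (Y i)) →
      ∀ α, ⁅Z' α, B⁆ = ((n α : ℂ) * c) • Z' α
        ∧ ⁅star (Z' α), B⁆ = (-((n α : ℂ) * c)) • star (Z' α) := by
    intro B c hB hBY α
    have cBZ : Commute (Z α) B := by
      have h0 : Commute (Z 0) B := by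
        rw [hZ0]; exact ((hBY 0).add_right ((hBY 1).smul_right _)).symm
      have h1 : Commute (Z 1) B := by
        rw [hZ1]; exact ((hBY 2).add_right ((hBY 3).smul_right _)).symm
      have h2 : Commute (Z 2) B := by
        rw [hZ2]; exact ((hBY 4).add_right ((hBY 5).smul_right _)).symm
      fin_cases α; exacts [h0, h1, h2]
    have cBZs : Commute (star (Z α)) B := by
      have h0 : Commute (star (Z 0)) B := by
        rw [hZs0]; exact ((hBY 0).sub_right ((hBY 1).smul_right _)).symm
      have h1 : Commute (star (Z 1)) B := by
        rw [hZs1]; exact ((hBY 2).sub_right ((hBY 3).smul_right _)).symm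
      have h2 : Commute (star (Z 2)) B := by
        rw [hZs2]; exact ((hBY 4).sub_right ((hBY 5).smul_right _)).symm
      fin_cases α; exacts [h0, h1, h2]
    constructor
    · rw [hZ' α, lie_mul_left', weyl V B c hB (n α), cBZ.lie_eq, zero_mul, add_zero,
        mul_smul_comm]
    · rw [hsZ' α, lie_mul_left', weyl V B c hB (-(n α)), cBZs.lie_eq, zero_mul, add_zero,
        mul_smul_comm]
      congr 1; push_cast; ring
  -- part (2)
  have part2 : ∀ α, -⁅Xt0, ⁅Xt0, Z' α⁆⁆ + ⁅Xt1, ⁅Xt1, Z' α⁆⁆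
      = (((n α : ℂ) ^ 2) * ((t1 : ℂ) ^ 2 - (t0 : ℂ) ^ 2)) • Z' α := by
    intro α
    have d0 : ⁅Xt0, ⁅Xt0, Z' α⁆⁆ = (((n α : ℂ) * t0)^2) • Z' α := by
      have h0 : ⁅Xt0, Z' α⁆ = (-((n α : ℂ) * t0)) • Z' α := by
        rw [← lie_skew, (bZ'B Xt0 t0 hVXt0 (fun i => (hXtY i).1) α).1, neg_smul]
      rw [h0, lie_smul, h0, smul_smul]; congr 1; ring
    have d1 : ⁅Xt1, ⁅Xt1, Z' α⁆⁆ = (((n α : ℂ) * t1)^2) • Z' α := by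
      have h1 : ⁅Xt1, Z' α⁆ = (-((n α : ℂ) * t1)) • Z' α := by
        rw [← lie_skew, (bZ'B Xt1 t1 hVXt1 (fun i => (hXtY i).2) α).1, neg_smul]
      rw [h1, lie_smul, h1, smul_smul]; congr 1; ring
    rw [d0, d1]
    rw [show -((((n α : ℂ) * t0)^2) • Z' α) + (((n α : ℂ) * t1)^2) • Z' α
      = ((((n α : ℂ) * t1)^2) - (((n α : ℂ) * t0)^2)) • Z' α from by module]
    congr 1; ring
  -- part (1)
  have hXZ : ∀ μ α, ⁅X μ, ⁅X μ, Z α⁆⁆ = ((ξ μ : ℂ)^2) • Z α := by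
    intro μ α
    have h0 : ⁅X μ, ⁅X μ, Z 0⁆⁆ = ((ξ μ : ℂ)^2) • Z 0 := by
      rw [hZ0]; simp only [lie_add, lie_smul, hXY]; module
    have h1 : ⁅X μ, ⁅X μ, Z 1⁆⁆ = ((ξ μ : ℂ)^2) • Z 1 := by
      rw [hZ1]; simp only [lie_add, lie_smul, hXY]; module
    have h2 : ⁅X μ, ⁅X μ, Z 2⁆⁆ = ((ξ μ : ℂ)^2) • Z 2 := by
      rw [hZ2]; simp only [lie_add, lie_smul, hXY]; module
    fin_cases α; exacts [h0, h1, h2]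
  have hXZs : ∀ μ α, ⁅X μ, ⁅X μ, star (Z α)⁆⁆ = ((ξ μ : ℂ)^2) • star (Z α) := by
    intro μ α
    have h0 : ⁅X μ, ⁅X μ, star (Z 0)⁆⁆ = ((ξ μ : ℂ)^2) • star (Z 0) := by
      rw [hZs0]; simp only [lie_sub, lie_smul, hXY]; module
    have h1 : ⁅X μ, ⁅X μ, star (Z 1)⁆⁆ = ((ξ μ : ℂ)^2) • star (Z 1) := by
      rw [hZs1]; simp only [lie_sub, lie_smul, hXY]; module
    have h2 : ⁅X μ, ⁅X μ, star (Z 2)⁆⁆ = ((ξ μ : ℂ)^2) • star (Z 2) := by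
      rw [hZs2]; simp only [lie_sub, lie_smul, hXY]; module
    fin_cases α; exacts [h0, h1, h2]
  have g1Z : ∀ μ α, ⁅X μ, ⁅X μ, Z' α⁆⁆ = ((ξ μ : ℂ)^2) • Z' α := by
    intro μ α
    have cw : Commute ((V ^ n α : Aˣ) : A) (X μ) := commVzpow V (X μ) (hVX μ) _
    rw [hZ' α, mylie2 cw, mylie2 cw, hXZ, smul_mul_assoc]
  have g1Zs : ∀ μ α, ⁅X μ, ⁅X μ, star (Z' α)⁆⁆ = ((ξ μ : ℂ)^2) • star (Z' α) := by
    intro μ α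
    have cw : Commute ((V ^ (-(n α)) : Aˣ) : A) (X μ) := commVzpow V (X μ) (hVX μ) _
    rw [hsZ' α, mylie2 cw, mylie2 cw, hXZs, smul_mul_assoc]
  have part1 : ∀ μ, ∀ i, ⁅X μ, ⁅X μ, Y' i⁆⁆ = ((ξ μ : ℂ) ^ 2) • Y' i := by
    intro μ i
    have k0 : ⁅X μ, ⁅X μ, Y' 0⁆⁆ = ((ξ μ : ℂ) ^ 2) • Y' 0 := by
      rw [hY'0]; simp only [lie_smul, lie_add, g1Z, g1Zs]; module
    have k1 : ⁅X μ, ⁅X μ, Y' 1⁆⁆ = ((ξ μ : ℂ) ^ 2) • Y' 1 := by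
      rw [hY'1]; simp only [lie_smul, lie_sub, g1Z, g1Zs]; module
    have k2 : ⁅X μ, ⁅X μ, Y' 2⁆⁆ = ((ξ μ : ℂ) ^ 2) • Y' 2 := by
      rw [hY'2]; simp only [lie_smul, lie_add, g1Z, g1Zs]; module
    have k3 : ⁅X μ, ⁅X μ, Y' 3⁆⁆ = ((ξ μ : ℂ) ^ 2) • Y' 3 := by
      rw [hY'3]; simp only [lie_smul, lie_sub, g1Z, g1Zs]; module
    have k4 : ⁅X μ, ⁅X μ, Y' 4⁆⁆ = ((ξ μ : ℂ) ^ 2) • Y' 4 := by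
      rw [hY'4]; simp only [lie_smul, lie_add, g1Z, g1Zs]; module
    have k5 : ⁅X μ, ⁅X μ, Y' 5⁆⁆ = ((ξ μ : ℂ) ^ 2) • Y' 5 := by
      rw [hY'5]; simp only [lie_smul, lie_sub, g1Z, g1Zs]; module
    fin_cases i; exacts [k0, k1, k2, k3, k4, k5]
  -- part (4)
  have pairB : ∀ (B : A) (c : ℂ), ⁅(V:A), B⁆ = c • (V:A) → (∀ i, Commute B (Y i)) → ∀ α,
      ⁅(2:ℂ)⁻¹ • (Z' α + star (Z' α)), ⁅(2:ℂ)⁻¹ • (Z' α + star (Z' α)), B⁆⁆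
        + ⁅((2:ℂ) * Complex.I)⁻¹ • (Z' α - star (Z' α)),
            ⁅((2:ℂ) * Complex.I)⁻¹ • (Z' α - star (Z' α)), B⁆⁆ = 0 := by
    intro B c hB hBY α
    have hn0 : ⁅star (Z' α), Z' α⁆ = 0 := by rw [← lie_skew, normal' α, neg_zero]
    rw [pairkey, (bZ'B B c hB hBY α).1, (bZ'B B c hB hBY α).2, lie_smul, lie_smul,
      normal' α, hn0]
    simp
  have part4a : ∑ i, ⁅Y' i, ⁅Y' i, Xt0⁆⁆ = 0 := by
    rw [Fin.sum_univ_six, hY'0, hY'1, hY'2, hY'3, hY'4, hY'5,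
      pairB Xt0 t0 hVXt0 (fun i => (hXtY i).1) 0, zero_add,
      pairB Xt0 t0 hVXt0 (fun i => (hXtY i).1) 1, zero_add,
      pairB Xt0 t0 hVXt0 (fun i => (hXtY i).1) 2]
  have part4b : ∑ i, ⁅Y' i, ⁅Y' i, Xt1⁆⁆ = 0 := by
    rw [Fin.sum_univ_six, hY'0, hY'1, hY'2, hY'3, hY'4, hY'5,
      pairB Xt1 t1 hVXt1 (fun i => (hXtY i).2) 0, zero_add,
      pairB Xt1 t1 hVXt1 (fun i => (hXtY i).2) 1, zero_add,
      pairB Xt1 t1 hVXt1 (fun i => (hXtY i).2) 2]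
  -- core conjugation-invariance
  have coreB : ∀ α (x : A), Commute (V:A) x →
      ⁅Z' α, ⁅star (Z' α), x⁆⁆ = ⁅Z α, ⁅star (Z α), x⁆⁆
        ∧ ⁅star (Z' α), ⁅Z' α, x⁆⁆ = ⁅star (Z α), ⁅Z α, x⁆⁆ := by
    intro α x hx
    have cw : Commute ((V ^ n α : Aˣ) : A) x := commVzpow V x hx _
    have cw' : Commute ((V ^ (-(n α)) : Aˣ) : A) x := commVzpow V x hx _
    have cwZ : Commute ((V ^ n α : Aˣ) : A) (Z α) := commVzpow V _ (cVZ α) _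
    have cwZs : Commute ((V ^ n α : Aˣ) : A) (star (Z α)) := commVzpow V _ (cVZs α) _
    have cw'Z : Commute ((V ^ (-(n α)) : Aˣ) : A) (Z α) := commVzpow V _ (cVZ α) _
    have cw'Zs : Commute ((V ^ (-(n α)) : Aˣ) : A) (star (Z α)) := commVzpow V _ (cVZs α) _
    have cw'w : Commute ((V ^ (-(n α)) : Aˣ) : A) ((V ^ n α : Aˣ) : A) :=
      commVzpow V _ (hVpow (n α)) _
    have cww' : Commute ((V ^ n α : Aˣ) : A) ((V ^ (-(n α)) : Aˣ) : A) := cw'w.symm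
    have cw'Zw : Commute ((V ^ (-(n α)) : Aˣ) : A) (Z α * ((V ^ n α : Aˣ) : A)) :=
      cw'Z.mul_right cw'w
    have cwsw : Commute ((V ^ n α : Aˣ) : A) (star (Z α) * ((V ^ (-(n α)) : Aˣ) : A)) :=
      cwZs.mul_right cww'
    have cwD : Commute ((V ^ n α : Aˣ) : A) ⁅star (Z α), x⁆ := by
      rw [Ring.lie_def]; exact (cwZs.mul_right cw).sub_right (cw.mul_right cwZs)
    have cw'D : Commute ((V ^ (-(n α)) : Aˣ) : A) ⁅Z α, x⁆ := by
      rw [Ring.lie_def]; exact (cw'Z.mul_right cw').sub_right (cw'.mul_right cw'Z)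
    constructor
    · rw [hsZ' α, hZ' α, mylie1 cw', mylie2 cw'Zw, mylie1 cwD, mul_assoc, ww'1 α, mul_one]
    · rw [hsZ' α, hZ' α, mylie1 cw, mylie2 cwsw, mylie1 cw'D, mul_assoc, w'w1 α, mul_one]
  -- the summed conjugation-invariance
  have sumY'lem : ∀ x : A, Commute (V:A) x →
      ∑ i, ⁅Y' i, ⁅Y' i, x⁆⁆ = ∑ i, ⁅Y i, ⁅Y i, x⁆⁆ := by
    intro x hx
    have pair : ∀ α,
        ⁅(2:ℂ)⁻¹ • (Z' α + star (Z' α)), ⁅(2:ℂ)⁻¹ • (Z' α + star (Z' α)), x⁆⁆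
          + ⁅((2:ℂ) * Complex.I)⁻¹ • (Z' α - star (Z' α)),
              ⁅((2:ℂ) * Complex.I)⁻¹ • (Z' α - star (Z' α)), x⁆⁆
        = ⁅(2:ℂ)⁻¹ • (Z α + star (Z α)), ⁅(2:ℂ)⁻¹ • (Z α + star (Z α)), x⁆⁆
          + ⁅((2:ℂ) * Complex.I)⁻¹ • (Z α - star (Z α)),
              ⁅((2:ℂ) * Complex.I)⁻¹ • (Z α - star (Z α)), x⁆⁆ := by
      intro α
      rw [pairkey, pairkey, (coreB α x hx).1, (coreB α x hx).2]
    rw [Fin.sum_univ_six, Fin.sum_univ_six, hY'0, hY'1, hY'2, hY'3, hY'4, hY'5,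
      hYZ0, hYZ1, hYZ2, hYZ3, hYZ4, hYZ5]
    exact six_pairs (pair 0) (pair 1) (pair 2)
  -- part (5)
  have part5 : ∀ μ, ∑ i, ⁅Y' i, ⁅Y' i, X μ⁆⁆ = ∑ i, ⁅Y i, ⁅Y i, X μ⁆⁆ :=
    fun μ => sumY'lem (X μ) (hVX μ)
  -- part (3)
  have cVZ' : ∀ β, Commute (V:A) (Z' β) := by
    intro β; rw [hZ' β]; exact (cVZ β).mul_right (hVpow _)
  have cVZ's : ∀ β, Commute (V:A) (star (Z' β)) := by
    intro β; rw [hsZ' β]; exact (cVZs β).mul_right (hVpow _)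
  have TZ : ∀ β, ∑ i, ⁅Y i, ⁅Y i, Z β⁆⁆ = ((ξY : ℂ)^2) • Z β := by
    have h0 : ∑ i, ⁅Y i, ⁅Y i, Z 0⁆⁆ = ((ξY : ℂ)^2) • Z 0 := by
      rw [hZ0]; simp only [lie_add, lie_smul]
      rw [Finset.sum_add_distrib, ← Finset.smul_sum, hYY, hYY]; module
    have h1 : ∑ i, ⁅Y i, ⁅Y i, Z 1⁆⁆ = ((ξY : ℂ)^2) • Z 1 := by
      rw [hZ1]; simp only [lie_add, lie_smul]
      rw [Finset.sum_add_distrib, ← Finset.smul_sum, hYY, hYY]; module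
    have h2 : ∑ i, ⁅Y i, ⁅Y i, Z 2⁆⁆ = ((ξY : ℂ)^2) • Z 2 := by
      rw [hZ2]; simp only [lie_add, lie_smul]
      rw [Finset.sum_add_distrib, ← Finset.smul_sum, hYY, hYY]; module
    intro β; fin_cases β; exacts [h0, h1, h2]
  have TZs : ∀ β, ∑ i, ⁅Y i, ⁅Y i, star (Z β)⁆⁆ = ((ξY : ℂ)^2) • star (Z β) := by
    have h0 : ∑ i, ⁅Y i, ⁅Y i, star (Z 0)⁆⁆ = ((ξY : ℂ)^2) • star (Z 0) := by
      rw [hZs0]; simp only [lie_sub, lie_smul]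
      rw [Finset.sum_sub_distrib, ← Finset.smul_sum, hYY, hYY]; module
    have h1 : ∑ i, ⁅Y i, ⁅Y i, star (Z 1)⁆⁆ = ((ξY : ℂ)^2) • star (Z 1) := by
      rw [hZs1]; simp only [lie_sub, lie_smul]
      rw [Finset.sum_sub_distrib, ← Finset.smul_sum, hYY, hYY]; module
    have h2 : ∑ i, ⁅Y i, ⁅Y i, star (Z 2)⁆⁆ = ((ξY : ℂ)^2) • star (Z 2) := by
      rw [hZs2]; simp only [lie_sub, lie_smul]
      rw [Finset.sum_sub_distrib, ← Finset.smul_sum, hYY, hYY]; module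
    intro β; fin_cases β; exacts [h0, h1, h2]
  have TZ' : ∀ β, ∑ i, ⁅Y i, ⁅Y i, Z' β⁆⁆ = ((ξY : ℂ)^2) • Z' β := by
    intro β
    have cwy : ∀ i, Commute ((V ^ n β : Aˣ) : A) (Y i) := fun i => commVzpow V _ (hVY i) _
    calc ∑ i, ⁅Y i, ⁅Y i, Z' β⁆⁆
        = ∑ i, ⁅Y i, ⁅Y i, Z β⁆⁆ * ((V ^ n β : Aˣ) : A) := by
          refine Finset.sum_congr rfl fun i _ => ?_
          rw [hZ' β, mylie2 (cwy i), mylie2 (cwy i)]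
      _ = (∑ i, ⁅Y i, ⁅Y i, Z β⁆⁆) * ((V ^ n β : Aˣ) : A) := by rw [Finset.sum_mul]
      _ = ((ξY : ℂ)^2) • Z' β := by rw [TZ β, smul_mul_assoc, ← hZ' β]
  have TZ's : ∀ β, ∑ i, ⁅Y i, ⁅Y i, star (Z' β)⁆⁆ = ((ξY : ℂ)^2) • star (Z' β) := by
    intro β
    have cwy : ∀ i, Commute ((V ^ (-(n β)) : Aˣ) : A) (Y i) := fun i => commVzpow V _ (hVY i) _
    calc ∑ i, ⁅Y i, ⁅Y i, star (Z' β)⁆⁆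
        = ∑ i, ⁅Y i, ⁅Y i, star (Z β)⁆⁆ * ((V ^ (-(n β)) : Aˣ) : A) := by
          refine Finset.sum_congr rfl fun i _ => ?_
          rw [hsZ' β, mylie2 (cwy i), mylie2 (cwy i)]
      _ = (∑ i, ⁅Y i, ⁅Y i, star (Z β)⁆⁆) * ((V ^ (-(n β)) : Aˣ) : A) := by
          rw [Finset.sum_mul]
      _ = ((ξY : ℂ)^2) • star (Z' β) := by rw [TZs β, smul_mul_assoc, ← hsZ' β]
  have part3gen : ∀ j : Fin 6, Commute (V:A) (Y' j) →
      (∑ i, ⁅Y i, ⁅Y i, Y' j⁆⁆ = ((ξY : ℂ) ^ 2) • Y' j) →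
      ∑ i, ⁅Y' i, ⁅Y' i, Y' j⁆⁆ = ((ξY : ℂ) ^ 2) • Y' j := by
    intro j h1 h2; rw [sumY'lem (Y' j) h1, h2]
  have c0 : Commute (V:A) (Y' 0) := by
    rw [hY'0]; exact ((cVZ' 0).add_right (cVZ's 0)).smul_right _
  have c1 : Commute (V:A) (Y' 1) := by
    rw [hY'1]; exact ((cVZ' 0).sub_right (cVZ's 0)).smul_right _
  have c2 : Commute (V:A) (Y' 2) := by
    rw [hY'2]; exact ((cVZ' 1).add_right (cVZ's 1)).smul_right _
  have c3 : Commute (V:A) (Y' 3) := by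
    rw [hY'3]; exact ((cVZ' 1).sub_right (cVZ's 1)).smul_right _
  have c4 : Commute (V:A) (Y' 4) := by
    rw [hY'4]; exact ((cVZ' 2).add_right (cVZ's 2)).smul_right _
  have c5 : Commute (V:A) (Y' 5) := by
    rw [hY'5]; exact ((cVZ' 2).sub_right (cVZ's 2)).smul_right _
  have e0 : ∑ i, ⁅Y i, ⁅Y i, Y' 0⁆⁆ = ((ξY : ℂ) ^ 2) • Y' 0 := by
    rw [hY'0]; simp only [lie_smul, lie_add]
    rw [← Finset.smul_sum, Finset.sum_add_distrib, TZ' 0, TZ's 0]; module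
  have e1 : ∑ i, ⁅Y i, ⁅Y i, Y' 1⁆⁆ = ((ξY : ℂ) ^ 2) • Y' 1 := by
    rw [hY'1]; simp only [lie_smul, lie_sub]
    rw [← Finset.smul_sum, Finset.sum_sub_distrib, TZ' 0, TZ's 0]; module
  have e2 : ∑ i, ⁅Y i, ⁅Y i, Y' 2⁆⁆ = ((ξY : ℂ) ^ 2) • Y' 2 := by
    rw [hY'2]; simp only [lie_smul, lie_add]
    rw [← Finset.smul_sum, Finset.sum_add_distrib, TZ' 1, TZ's 1]; module
  have e3 : ∑ i, ⁅Y i, ⁅Y i, Y' 3⁆⁆ = ((ξY : ℂ) ^ 2) • Y' 3 := by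
    rw [hY'3]; simp only [lie_smul, lie_sub]
    rw [← Finset.smul_sum, Finset.sum_sub_distrib, TZ' 1, TZ's 1]; module
  have e4 : ∑ i, ⁅Y i, ⁅Y i, Y' 4⁆⁆ = ((ξY : ℂ) ^ 2) • Y' 4 := by
    rw [hY'4]; simp only [lie_smul, lie_add]
    rw [← Finset.smul_sum, Finset.sum_add_distrib, TZ' 2, TZ's 2]; module
  have e5 : ∑ i, ⁅Y i, ⁅Y i, Y' 5⁆⁆ = ((ξY : ℂ) ^ 2) • Y' 5 := by
    rw [hY'5]; simp only [lie_smul, lie_sub]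
    rw [← Finset.smul_sum, Finset.sum_sub_distrib, TZ' 2, TZ's 2]; module
  have part3 : ∀ j, ∑ i, ⁅Y' i, ⁅Y' i, Y' j⁆⁆ = ((ξY : ℂ) ^ 2) • Y' j := by
    intro j; fin_cases j
    exacts [part3gen 0 c0 e0, part3gen 1 c1 e1, part3gen 2 c2 e2,
      part3gen 3 c3 e3, part3gen 4 c4 e4, part3gen 5 c5 e5]
  exact ⟨part1, part2, part3, ⟨part4a, part4b⟩, part5⟩
end

section
/- Let (U_a, X^a), a = 0,1,2,3, be four fuzzy cylinders in a complex *-algebra A, with radii R_a > 0 and parameters ξ_a ∈ ℝ, such that any two generators belonging to different cylinders commute (U_a, U_a*, X^a each commute with U_b, U_b*, X^b whenever a ≠ b). Define Z'^i = U_i·U_0 for i = 1,2,3, with self-adjoint components X'^{2i+2} = (Z'^i + (Z'^i)*)/2 and X'^{2i+3} = (Z'^i − (Z'^i)*)/(2i), and set X'^μ = X^μ for μ = 0,1,2,3. With the Minkowski matrix Laplacian □φ = −⁅X'^0,⁅X'^0,φ⁆⁆ + Σ_{b=1}^{9}⁅X'^b,⁅X'^b,φ⁆⁆ one has □Z'^i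 = (ξ_i² − ξ_0²)·Z'^i for i = 1,2,3 and □X'^μ = 0 for μ = 0,1,2,3. In particular, if ξ_i² = ξ_0² for all i, then all ten elements satisfy □X'^a = 0, giving the non-propagating ℝ³ ×_ξ T³ solution of the IKKT matrix model. -/
section Aux

attribute [local instance 100] LieRing.ofAssociativeRing

variable {A : Type*} [Ring A] [Algebra ℂ A]

lemma aux_lie_mul (a b c : A) : ⁅a, b * c⁆ = ⁅a, b⁆ * c + b * ⁅a, c⁆ := by
  simp only [Ring.lie_def]; noncomm_ring

lemma aux_dbl (e x : A) (h : ⁅e, ⁅x, e⁆⁆ = 0) : ⁅e, ⁅e, x⁆⁆ = 0 := by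
  rw [← lie_skew e x, lie_neg, h, neg_zero]

end Aux

/-- the non-propagating `ℝ³ ×_ξ T³` configuration built from four
mutually commuting fuzzy cylinders `(U_a, X^a)`, `a = 0,1,2,3`, with `Z'ⁱ = Uᵢ U₀`.
With the Minkowski matrix Laplacian
`□φ = -⁅X⁰,⁅X⁰,φ⁆⁆ + Σᵢ⁅Xⁱ,⁅Xⁱ,φ⁆⁆ + Σ (components of Z')`,
one has `□Z'ⁱ = (ξᵢ² - ξ₀²)•Z'ⁱ` and `□Xᵘ = 0`; if `ξᵢ² = ξ₀²` for all `i`, all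
ten coordinates satisfy `□X'ᵃ = 0` (the IKKT equations of motion). -/
theorem stmt7 (A : Type*) [Ring A] [Algebra ℂ A] [StarRing A] [StarModule ℂ A]
    (R0 ξ0 : ℝ) (R ξ : Fin 3 → ℝ) (hR0 : 0 < R0) (hR : ∀ i, 0 < R i)
    (U0 X0 : A) (U X : Fin 3 → A)
    (hU0Us : U0 * star U0 = ((R0 : ℂ) ^ 2) • (1 : A))
    (hU0sU : star U0 * U0 = ((R0 : ℂ) ^ 2) • (1 : A))
    (hX0sa : star X0 = X0)
    (hU0X0 : ⁅U0, X0⁆ = (ξ0 : ℂ) • U0)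
    (hUiUs : ∀ i, U i * star (U i) = ((R i : ℂ) ^ 2) • (1 : A))
    (hUisU : ∀ i, star (U i) * U i = ((R i : ℂ) ^ 2) • (1 : A))
    (hXisa : ∀ i, star (X i) = X i)
    (hUiXi : ∀ i, ⁅U i, X i⁆ = (ξ i : ℂ) • U i)
    (hcomm0 : ∀ i, ∀ P ∈ ({U0, star U0, X0} : Set A),
        ∀ Q ∈ ({U i, star (U i), X i} : Set A), Commute P Q)
    (hcommij : ∀ i j, i ≠ j → ∀ P ∈ ({U i, star (U i), X i} : Set A),
        ∀ Q ∈ ({U j, star (U j), X j} : Set A), Commute P Q)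
    (Z' : Fin 3 → A) (hZ' : ∀ i, Z' i = U i * U0)
    (E F : Fin 3 → A)
    (hE : ∀ i, E i = (2 : ℂ)⁻¹ • (Z' i + star (Z' i)))
    (hF : ∀ i, F i = ((2 : ℂ) * Complex.I)⁻¹ • (Z' i - star (Z' i)))
    (Box : A → A)
    (hBox : ∀ φ, Box φ = -⁅X0, ⁅X0, φ⁆⁆ + ∑ i, ⁅X i, ⁅X i, φ⁆⁆
        + ∑ i, (⁅E i, ⁅E i, φ⁆⁆ + ⁅F i, ⁅F i, φ⁆⁆)) :
    (∀ i, Box (Z' i) = (((ξ i : ℂ) ^ 2 - (ξ0 : ℂ) ^ 2)) • Z' i)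
    ∧ Box X0 = 0
    ∧ (∀ i, Box (X i) = 0)
    ∧ ((∀ i, (ξ i) ^ 2 = ξ0 ^ 2) →
        (Box X0 = 0 ∧ ∀ i, Box (X i) = 0 ∧ Box (E i) = 0 ∧ Box (F i) = 0)) := by
  letI : LieRing A := LieRing.ofAssociativeRing
  have m1 : ∀ a b c : A, a ∈ ({a, b, c} : Set A) := fun a b c => Set.mem_insert _ _
  have m2 : ∀ a b c : A, b ∈ ({a, b, c} : Set A) := fun a b c =>
    Set.mem_insert_of_mem _ (Set.mem_insert _ _)
  have m3 : ∀ a b c : A, c ∈ ({a, b, c} : Set A) := fun a b c =>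
    Set.mem_insert_of_mem _ (Set.mem_insert_of_mem _ rfl)
  -- commuting generators
  have cU0sU0 : Commute U0 (star U0) := by
    unfold Commute SemiconjBy; rw [hU0Us, hU0sU]
  have cUisUi : ∀ i, Commute (U i) (star (U i)) := fun i => by
    unfold Commute SemiconjBy; rw [hUiUs i, hUisU i]
  -- "good" elements: commute with every unitary generator
  set good : A → Prop := fun w =>
    Commute w U0 ∧ Commute w (star U0) ∧ (∀ j, Commute w (U j)) ∧
      (∀ j, Commute w (star (U j))) with hgood
  have gU0 : good U0 :=
    ⟨Commute.refl _, cU0sU0, fun j => hcomm0 j U0 (m1 _ _ _) (U j) (m1 _ _ _),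
      fun j => hcomm0 j U0 (m1 _ _ _) (star (U j)) (m2 _ _ _)⟩
  have gsU0 : good (star U0) :=
    ⟨cU0sU0.symm, Commute.refl _, fun j => hcomm0 j (star U0) (m2 _ _ _) (U j) (m1 _ _ _),
      fun j => hcomm0 j (star U0) (m2 _ _ _) (star (U j)) (m2 _ _ _)⟩
  have gU : ∀ i, good (U i) := fun i => by
    refine ⟨(hcomm0 i U0 (m1 _ _ _) (U i) (m1 _ _ _)).symm,
      (hcomm0 i (star U0) (m2 _ _ _) (U i) (m1 _ _ _)).symm, fun j => ?_, fun j => ?_⟩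
    · by_cases h : i = j
      · subst h; exact Commute.refl _
      · exact hcommij i j h (U i) (m1 _ _ _) (U j) (m1 _ _ _)
    · by_cases h : i = j
      · subst h; exact cUisUi i
      · exact hcommij i j h (U i) (m1 _ _ _) (star (U j)) (m2 _ _ _)
  have gsU : ∀ i, good (star (U i)) := fun i => by
    refine ⟨(hcomm0 i U0 (m1 _ _ _) (star (U i)) (m2 _ _ _)).symm,
      (hcomm0 i (star U0) (m2 _ _ _) (star (U i)) (m2 _ _ _)).symm, fun j => ?_, fun j => ?_⟩
    · by_cases h : i = j
      · subst h; exact (cUisUi i).symm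
      · exact hcommij i j h (star (U i)) (m2 _ _ _) (U j) (m1 _ _ _)
    · by_cases h : i = j
      · subst h; exact Commute.refl _
      · exact hcommij i j h (star (U i)) (m2 _ _ _) (star (U j)) (m2 _ _ _)
  have gmul : ∀ v w, good v → good w → good (v * w) := fun v w hv hw =>
    ⟨hv.1.mul_left hw.1, hv.2.1.mul_left hw.2.1,
      fun j => (hv.2.2.1 j).mul_left (hw.2.2.1 j),
      fun j => (hv.2.2.2 j).mul_left (hw.2.2.2 j)⟩
  have gadd : ∀ v w, good v → good w → good (v + w) := fun v w hv hw =>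
    ⟨hv.1.add_left hw.1, hv.2.1.add_left hw.2.1,
      fun j => (hv.2.2.1 j).add_left (hw.2.2.1 j),
      fun j => (hv.2.2.2 j).add_left (hw.2.2.2 j)⟩
  have gsub : ∀ v w, good v → good w → good (v - w) := fun v w hv hw =>
    ⟨hv.1.sub_left hw.1, hv.2.1.sub_left hw.2.1,
      fun j => (hv.2.2.1 j).sub_left (hw.2.2.1 j),
      fun j => (hv.2.2.2 j).sub_left (hw.2.2.2 j)⟩
  have gsmul : ∀ (c : ℂ) w, good w → good (c • w) := fun c w hw =>
    ⟨hw.1.smul_left c, hw.2.1.smul_left c,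
      fun j => (hw.2.2.1 j).smul_left c, fun j => (hw.2.2.2 j).smul_left c⟩
  have gZ : ∀ i, good (Z' i) := fun i => by
    rw [hZ' i]; exact gmul _ _ (gU i) gU0
  have gsZ : ∀ i, good (star (Z' i)) := fun i => by
    rw [hZ' i, star_mul]; exact gmul _ _ gsU0 (gsU i)
  have gE : ∀ i, good (E i) := fun i => by
    rw [hE i]; exact gsmul _ _ (gadd _ _ (gZ i) (gsZ i))
  have gF : ∀ i, good (F i) := fun i => by
    rw [hF i]; exact gsmul _ _ (gsub _ _ (gZ i) (gsZ i))
  -- good elements commute with Z', star Z', E, F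
  have kZ : ∀ w, good w → ∀ i, Commute w (Z' i) := fun w hw i => by
    rw [hZ' i]; exact (hw.2.2.1 i).mul_right hw.1
  have ksZ : ∀ w, good w → ∀ i, Commute w (star (Z' i)) := fun w hw i => by
    rw [hZ' i, star_mul]; exact hw.2.1.mul_right (hw.2.2.2 i)
  have kE : ∀ w, good w → ∀ i, Commute w (E i) := fun w hw i => by
    rw [hE i]; exact ((kZ w hw i).add_right (ksZ w hw i)).smul_right _
  have kF : ∀ w, good w → ∀ i, Commute w (F i) := fun w hw i => by
    rw [hF i]; exact ((kZ w hw i).sub_right (ksZ w hw i)).smul_right _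
  -- basic brackets
  have lieX0U0 : ⁅X0, U0⁆ = (-(ξ0 : ℂ)) • U0 := by
    rw [← lie_skew X0 U0, hU0X0, neg_smul]
  have lieX0sU0 : ⁅X0, star U0⁆ = (ξ0 : ℂ) • star U0 := by
    have h := congrArg star hU0X0
    simp only [Ring.lie_def, star_sub, star_mul, hX0sa, star_smul, Complex.star_def,
      Complex.conj_ofReal] at h
    rw [Ring.lie_def]; exact h
  have lieXiUi : ∀ i, ⁅X i, U i⁆ = (-(ξ i : ℂ)) • U i := fun i => by
    rw [← lie_skew (X i) (U i), hUiXi i, neg_smul]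
  have lieXisUi : ∀ i, ⁅X i, star (U i)⁆ = (ξ i : ℂ) • star (U i) := fun i => by
    have h := congrArg star (hUiXi i)
    simp only [Ring.lie_def, star_sub, star_mul, hXisa i, star_smul, Complex.star_def,
      Complex.conj_ofReal] at h
    rw [Ring.lie_def]; exact h
  have cX0Ui : ∀ i, Commute X0 (U i) := fun i => hcomm0 i X0 (m3 _ _ _) (U i) (m1 _ _ _)
  have cX0sUi : ∀ i, Commute X0 (star (U i)) := fun i =>
    hcomm0 i X0 (m3 _ _ _) (star (U i)) (m2 _ _ _)
  have cXiU0 : ∀ i, Commute (X i) U0 := fun i =>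
    (hcomm0 i U0 (m1 _ _ _) (X i) (m3 _ _ _)).symm
  have cXisU0 : ∀ i, Commute (X i) (star U0) := fun i =>
    (hcomm0 i (star U0) (m2 _ _ _) (X i) (m3 _ _ _)).symm
  -- brackets with Z' and star Z'
  have lieX0Z : ∀ i, ⁅X0, Z' i⁆ = (-(ξ0 : ℂ)) • Z' i := fun i => by
    rw [hZ' i, aux_lie_mul, (cX0Ui i).lie_eq, zero_mul, zero_add, lieX0U0, mul_smul_comm]
  have lieX0sZ : ∀ i, ⁅X0, star (Z' i)⁆ = (ξ0 : ℂ) • star (Z' i) := fun i => by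
    rw [hZ' i, star_mul, aux_lie_mul, lieX0sU0, (cX0sUi i).lie_eq, mul_zero, add_zero,
      smul_mul_assoc]
  have lieXiZ : ∀ i, ⁅X i, Z' i⁆ = (-(ξ i : ℂ)) • Z' i := fun i => by
    rw [hZ' i, aux_lie_mul, (cXiU0 i).lie_eq, mul_zero, add_zero, lieXiUi i, smul_mul_assoc]
  have lieXisZ : ∀ i, ⁅X i, star (Z' i)⁆ = (ξ i : ℂ) • star (Z' i) := fun i => by
    rw [hZ' i, star_mul, aux_lie_mul, (cXisU0 i).lie_eq, zero_mul, zero_add, lieXisUi i,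
      mul_smul_comm]
  have lieXjZ : ∀ i j, j ≠ i → ⁅X j, Z' i⁆ = 0 := fun i j hj => by
    rw [hZ' i]
    exact ((hcommij j i hj (X j) (m3 _ _ _) (U i) (m1 _ _ _)).mul_right (cXiU0 j)).lie_eq
  have lieXjsZ : ∀ i j, j ≠ i → ⁅X j, star (Z' i)⁆ = 0 := fun i j hj => by
    rw [hZ' i, star_mul]
    exact ((cXisU0 j).mul_right
      (hcommij j i hj (X j) (m3 _ _ _) (star (U i)) (m2 _ _ _))).lie_eq
  -- Box of Z'
  have boxZ : ∀ i, Box (Z' i) = (((ξ i : ℂ) ^ 2 - (ξ0 : ℂ) ^ 2)) • Z' i := fun i => by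
    have t1 : ⁅X0, ⁅X0, Z' i⁆⁆ = ((ξ0 : ℂ) ^ 2) • Z' i := by
      rw [lieX0Z i, lie_smul, lieX0Z i, smul_smul]; module
    have t2 : ∑ j, ⁅X j, ⁅X j, Z' i⁆⁆ = ((ξ i : ℂ) ^ 2) • Z' i := by
      rw [Finset.sum_eq_single i]
      · rw [lieXiZ i, lie_smul, lieXiZ i, smul_smul]; module
      · intro j _ hj; rw [lieXjZ i j hj, lie_zero]
      · intro h; exact absurd (Finset.mem_univ i) h
    have t3 : ∑ j, (⁅E j, ⁅E j, Z' i⁆⁆ + ⁅F j, ⁅F j, Z' i⁆⁆) = 0 :=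
      Finset.sum_eq_zero fun j _ => by
        rw [(kZ _ (gE j) i).lie_eq, lie_zero, (kZ _ (gF j) i).lie_eq, lie_zero, add_zero]
    rw [hBox, t1, t2, t3, add_zero]; module
  -- Box X0 = 0
  have boxX0 : Box X0 = 0 := by
    have hEj : ∀ j, ⁅E j, ⁅E j, X0⁆⁆ = 0 := fun j => by
      refine aux_dbl _ _ ?_
      have h : ⁅X0, E j⁆ = (2 : ℂ)⁻¹ • ((-(ξ0 : ℂ)) • Z' j + (ξ0 : ℂ) • star (Z' j)) := by
        rw [hE j, lie_smul, lie_add, lieX0Z j, lieX0sZ j]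
      rw [h, lie_smul, lie_add, lie_smul, lie_smul, (kZ _ (gE j) j).lie_eq,
        (ksZ _ (gE j) j).lie_eq]
      simp
    have hFj : ∀ j, ⁅F j, ⁅F j, X0⁆⁆ = 0 := fun j => by
      refine aux_dbl _ _ ?_
      have h : ⁅X0, F j⁆ = ((2 : ℂ) * Complex.I)⁻¹ •
          ((-(ξ0 : ℂ)) • Z' j - (ξ0 : ℂ) • star (Z' j)) := by
        rw [hF j, lie_smul, lie_sub, lieX0Z j, lieX0sZ j]
      rw [h, lie_smul, lie_sub, lie_smul, lie_smul, (kZ _ (gF j) j).lie_eq,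
        (ksZ _ (gF j) j).lie_eq]
      simp
    rw [hBox, lie_self, lie_zero, neg_zero,
      Finset.sum_eq_zero (fun j _ => by
        rw [((hcomm0 j X0 (m3 _ _ _) (X j) (m3 _ _ _)).symm).lie_eq, lie_zero]),
      Finset.sum_eq_zero (fun j _ => by rw [hEj j, hFj j, add_zero])]
    simp
  -- Box (X i) = 0
  have boxXi : ∀ i, Box (X i) = 0 := fun i => by
    have hEj : ∀ j, ⁅E j, ⁅E j, X i⁆⁆ = 0 := fun j => by
      refine aux_dbl _ _ ?_
      by_cases hji : j = i
      · subst hji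
        have h : ⁅X j, E j⁆ = (2 : ℂ)⁻¹ • ((-(ξ j : ℂ)) • Z' j + (ξ j : ℂ) • star (Z' j)) := by
          rw [hE j, lie_smul, lie_add, lieXiZ j, lieXisZ j]
        rw [h, lie_smul, lie_add, lie_smul, lie_smul, (kZ _ (gE j) j).lie_eq,
          (ksZ _ (gE j) j).lie_eq]
        simp
      · have h : ⁅X i, E j⁆ = 0 := by
          rw [hE j, lie_smul, lie_add, lieXjZ j i (fun h => hji h.symm),
            lieXjsZ j i (fun h => hji h.symm)]
          simp
        rw [h, lie_zero]
    have hFj : ∀ j, ⁅F j, ⁅F j, X i⁆⁆ = 0 := fun j => by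
      refine aux_dbl _ _ ?_
      by_cases hji : j = i
      · subst hji
        have h : ⁅X j, F j⁆ = ((2 : ℂ) * Complex.I)⁻¹ •
            ((-(ξ j : ℂ)) • Z' j - (ξ j : ℂ) • star (Z' j)) := by
          rw [hF j, lie_smul, lie_sub, lieXiZ j, lieXisZ j]
        rw [h, lie_smul, lie_sub, lie_smul, lie_smul, (kZ _ (gF j) j).lie_eq,
          (ksZ _ (gF j) j).lie_eq]
        simp
      · have h : ⁅X i, F j⁆ = 0 := by
          rw [hF j, lie_smul, lie_sub, lieXjZ j i (fun h => hji h.symm),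
            lieXjsZ j i (fun h => hji h.symm)]
          simp
        rw [h, lie_zero]
    have t2 : ∑ j, ⁅X j, ⁅X j, X i⁆⁆ = 0 := Finset.sum_eq_zero fun j _ => by
      by_cases hji : j = i
      · subst hji; rw [lie_self, lie_zero]
      · rw [(hcommij j i hji (X j) (m3 _ _ _) (X i) (m3 _ _ _)).lie_eq, lie_zero]
    rw [hBox, (hcomm0 i X0 (m3 _ _ _) (X i) (m3 _ _ _)).lie_eq, lie_zero, neg_zero, t2,
      Finset.sum_eq_zero (fun j _ => by rw [hEj j, hFj j, add_zero])]
    simp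
  refine ⟨boxZ, boxX0, boxXi, fun hξ => ⟨boxX0, fun i => ⟨boxXi i, ?_, ?_⟩⟩⟩
  · -- Box (E i) = 0
    have hξC : ((ξ i : ℂ)) ^ 2 = ((ξ0 : ℂ)) ^ 2 := by exact_mod_cast hξ i
    have t1 : ⁅X0, ⁅X0, E i⁆⁆ = ((ξ0 : ℂ) ^ 2) • E i := by
      rw [hE i, lie_smul, lie_add, lieX0Z i, lieX0sZ i, lie_smul, lie_add, lie_smul,
        lie_smul, lieX0Z i, lieX0sZ i]
      module
    have t2 : ∑ j, ⁅X j, ⁅X j, E i⁆⁆ = ((ξ i : ℂ) ^ 2) • E i := by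
      rw [Finset.sum_eq_single i]
      · rw [hE i, lie_smul, lie_add, lieXiZ i, lieXisZ i, lie_smul, lie_add, lie_smul,
          lie_smul, lieXiZ i, lieXisZ i]
        module
      · intro j _ hj
        rw [hE i, lie_smul, lie_add, lieXjZ i j hj, lieXjsZ i j hj]
        simp
      · intro h; exact absurd (Finset.mem_univ i) h
    have t3 : ∑ j, (⁅E j, ⁅E j, E i⁆⁆ + ⁅F j, ⁅F j, E i⁆⁆) = 0 :=
      Finset.sum_eq_zero fun j _ => by
        rw [(kE _ (gE j) i).lie_eq, lie_zero, (kE _ (gF j) i).lie_eq, lie_zero, add_zero]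
    rw [hBox, t1, t2, t3, add_zero, hξC]
    module
  · -- Box (F i) = 0
    have hξC : ((ξ i : ℂ)) ^ 2 = ((ξ0 : ℂ)) ^ 2 := by exact_mod_cast hξ i
    have t1 : ⁅X0, ⁅X0, F i⁆⁆ = ((ξ0 : ℂ) ^ 2) • F i := by
      rw [hF i, lie_smul, lie_sub, lieX0Z i, lieX0sZ i, lie_smul, lie_sub, lie_smul,
        lie_smul, lieX0Z i, lieX0sZ i]
      module
    have t2 : ∑ j, ⁅X j, ⁅X j, F i⁆⁆ = ((ξ i : ℂ) ^ 2) • F i := by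
      rw [Finset.sum_eq_single i]
      · rw [hF i, lie_smul, lie_sub, lieXiZ i, lieXisZ i, lie_smul, lie_sub, lie_smul,
          lie_smul, lieXiZ i, lieXisZ i]
        module
      · intro j _ hj
        rw [hF i, lie_smul, lie_sub, lieXjZ i j hj, lieXjsZ i j hj]
        simp
      · intro h; exact absurd (Finset.mem_univ i) h
    have t3 : ∑ j, (⁅E j, ⁅E j, F i⁆⁆ + ⁅F j, ⁅F j, F i⁆⁆) = 0 :=
      Finset.sum_eq_zero fun j _ => by
        rw [(kF _ (gE j) i).lie_eq, lie_zero, (kF _ (gF j) i).lie_eq, lie_zero, add_zero]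
    rw [hBox, t1, t2, t3, add_zero, hξC]
    module
end

section
/- Let (U_a, X^a), a = 0,1,2,3, be four mutually commuting fuzzy cylinders as above (generators of distinct cylinders commute), with equal parameters ξ_1 = ξ_2 = ξ_3 = ξ_0. Then the element C := X^0 − X^1 − X^2 − X^3 commutes with each of the ten configuration matrices X^0, X^1, X^2, X^3, Z'^1, Z'^2, Z'^3, (Z'^1)*, (Z'^2)*, (Z'^3)*, where Z'^i = U_i·U_0; i.e., C is central for the non-propagating ℝ³ ×_ξ T³ configuration, so the corresponding Poisson structure is degenerate with symplectic leaves labeled by the eigenvalues of C. -/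
/-- for four mutually commuting fuzzy cylinders with equal
parameters `ξ₁ = ξ₂ = ξ₃ = ξ₀ = ξ`, the element `C = X⁰ - X¹ - X² - X³` is
central for the non-propagating `ℝ³ ×_ξ T³` configuration: it commutes with
`X⁰, X¹, X², X³, Z'¹, Z'², Z'³` and the adjoints `(Z'ⁱ)*`, where `Z'ⁱ = Uᵢ U₀`. -/
theorem stmt8 (A : Type*) [Ring A] [Algebra ℂ A] [StarRing A] [StarModule ℂ A]
    (R0 ξ : ℝ) (R : Fin 3 → ℝ) (hR0 : 0 < R0) (hR : ∀ i, 0 < R i)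
    (U0 X0 : A) (U X : Fin 3 → A)
    (hU0Us : U0 * star U0 = ((R0 : ℂ) ^ 2) • (1 : A))
    (hU0sU : star U0 * U0 = ((R0 : ℂ) ^ 2) • (1 : A))
    (hX0sa : star X0 = X0)
    (hU0X0 : ⁅U0, X0⁆ = (ξ : ℂ) • U0)
    (hUiUs : ∀ i, U i * star (U i) = ((R i : ℂ) ^ 2) • (1 : A))
    (hUisU : ∀ i, star (U i) * U i = ((R i : ℂ) ^ 2) • (1 : A))
    (hXisa : ∀ i, star (X i) = X i)
    (hUiXi : ∀ i, ⁅U i, X i⁆ = (ξ : ℂ) • U i)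
    (hcomm0 : ∀ i, ∀ P ∈ ({U0, star U0, X0} : Set A),
        ∀ Q ∈ ({U i, star (U i), X i} : Set A), Commute P Q)
    (hcommij : ∀ i j, i ≠ j → ∀ P ∈ ({U i, star (U i), X i} : Set A),
        ∀ Q ∈ ({U j, star (U j), X j} : Set A), Commute P Q)
    (Z' : Fin 3 → A) (hZ' : ∀ i, Z' i = U i * U0)
    (C : A) (hC : C = X0 - X 0 - X 1 - X 2) :
    Commute C X0
    ∧ (∀ i, Commute C (X i))
    ∧ (∀ i, Commute C (Z' i))
    ∧ (∀ i, Commute C (star (Z' i))) := by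
  -- basic commute facts
  have cX0Ui : ∀ i, Commute X0 (U i) := fun i =>
    hcomm0 i X0 (by simp) (U i) (by simp)
  have cXiU0 : ∀ i, Commute (X i) U0 :=
    fun i => (hcomm0 i U0 (by simp) (X i) (by simp)).symm
  have cXiUj : ∀ i j, i ≠ j → Commute (X i) (U j) :=
    fun i j h => hcommij i j h (X i) (by simp) (U j) (by simp)
  have cXX : ∀ i j, Commute (X i) (X j) := by
    intro i j
    rcases eq_or_ne i j with rfl | h
    · exact Commute.refl _
    · exact hcommij i j h (X i) (by simp) (X j) (by simp)
  have cX0Xi : ∀ i, Commute X0 (X i) := fun i =>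
    hcomm0 i X0 (by simp) (X i) (by simp)
  -- rearranged commutation relations
  have e0 : X0 * U0 = U0 * X0 - (ξ : ℂ) • U0 := by
    rw [Ring.lie_def] at hU0X0
    rw [← hU0X0]; abel
  have ei : ∀ i, X i * U i = U i * X i - (ξ : ℂ) • U i := by
    intro i
    have h := hUiXi i
    rw [Ring.lie_def] at h
    rw [← h]; abel
  -- key computation
  have key : ∀ i, Commute (X0 - X i) (U i * U0) := by
    intro i
    show (X0 - X i) * (U i * U0) = (U i * U0) * (X0 - X i)
    calc (X0 - X i) * (U i * U0)
        = X0 * U i * U0 - X i * U i * U0 := by noncomm_ring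
      _ = U i * X0 * U0 - X i * U i * U0 := by rw [(cX0Ui i).eq]
      _ = U i * (X0 * U0) - (X i * U i) * U0 := by rw [mul_assoc]
      _ = U i * (U0 * X0 - (ξ : ℂ) • U0) - (U i * X i - (ξ : ℂ) • U i) * U0 := by
          rw [e0, ei]
      _ = (U i * (U0 * X0) - (ξ : ℂ) • (U i * U0))
            - (U i * (X i * U0) - (ξ : ℂ) • (U i * U0)) := by
          rw [mul_sub, sub_mul, mul_smul_comm, smul_mul_assoc, mul_assoc]
      _ = U i * (U0 * X0) - U i * (U0 * X i) := by rw [(cXiU0 i).eq]; abel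
      _ = (U i * U0) * (X0 - X i) := by noncomm_ring
  have keyC : ∀ i, Commute C (U i * U0) := by
    intro i
    have h0 : ∀ j, j ≠ i → Commute (X j) (U i * U0) :=
      fun j hj => (cXiUj j i hj).mul_right (cXiU0 j)
    fin_cases i
    · rw [hC]
      exact (((key 0).sub_left (h0 1 (by decide))).sub_left (h0 2 (by decide)))
    · rw [hC]
      have : X0 - X 0 - X 1 - X 2 = X0 - X 1 - X 0 - X 2 := by abel
      rw [this]
      exact (((key 1).sub_left (h0 0 (by decide))).sub_left (h0 2 (by decide)))
    · rw [hC]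
      have : X0 - X 0 - X 1 - X 2 = X0 - X 2 - X 0 - X 1 := by abel
      rw [this]
      exact (((key 2).sub_left (h0 0 (by decide))).sub_left (h0 1 (by decide)))
  have hCstar : star C = C := by
    rw [hC]
    simp [hX0sa, hXisa]
  refine ⟨?_, ?_, ?_, ?_⟩
  · rw [hC]
    exact (((Commute.refl X0).sub_left (cX0Xi 0).symm).sub_left
      (cX0Xi 1).symm).sub_left (cX0Xi 2).symm
  · intro j
    rw [hC]
    exact (((cX0Xi j).sub_left (cXX 0 j)).sub_left (cXX 1 j)).sub_left (cXX 2 j)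
  · intro i
    rw [hZ' i]
    exact keyC i
  · intro i
    rw [hZ' i]
    have h := (keyC i).star_star
    rwa [hCstar] at h
end

section
/- Let A be a complex *-algebra containing: self-adjoint X^0, X^1 with ⁅X^0,X^1⁆ = iθ·1 (θ ∈ ℝ); a fuzzy cylinder (U, X^2) of radius R and parameter ξ whose generators U, U*, X^2 commute with X^0 and X^1; and a unitary W (W·W* = W*·W = 1) commuting with U, U*, X^2, and satisfying ⁅W,X^0⁆ = t^0·W, ⁅W,X^1⁆ = t^1·W for real t^0, t^1 (modeling W = e^{ik_μX^μ}). Set Z = U·W, X^4 = (Z + Z*)/2, X^5 = (Z − Z*)/(2i). If ξ² + (t^1)² − (t^0)² = 0 (i.e. k·k = −ξ² in the effective metric, k time-like), then the Minkowski matrix Laplacian □φ = −⁅X^0,⁅X^0,φ⁆⁆ + ⁅X^1,⁅X^1,φ⁆⁆ + ⁅X^2,⁅X^2,φ⁆⁆ + ⁅X^4,⁅X^4,φ⁆⁆ + ⁅X^5,⁅X^5,φ⁆⁆ satisfies □X^a = 0 for each of X^0, X^1, X^2, X^4, X^5. This is the propagating ℝ³ × S¹ solution of the IKKT model. -/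
section aux

variable {A : Type*} [Ring A] [Algebra ℂ A]

lemma aux_mulComm_lie (a b c : A) (s : ℂ)
    (hb : ⁅b, c⁆ = s • b) (hac : Commute a c) : ⁅a * b, c⁆ = s • (a * b) := by
  have hb' : b * c = c * b + s • b := by
    rw [← hb, Ring.lie_def]; abel
  rw [Ring.lie_def, mul_assoc a b c, hb', mul_add, mul_smul_comm, ← mul_assoc,
    hac.eq, mul_assoc]
  exact add_sub_cancel_left _ _

lemma aux_lie_mulComm (a b c : A) (s : ℂ)
    (ha : ⁅a, c⁆ = s • a) (hbc : Commute b c) : ⁅a * b, c⁆ = s • (a * b) := by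
  have ha' : a * c = c * a + s • a := by
    rw [← ha, Ring.lie_def]; abel
  rw [Ring.lie_def, mul_assoc a b c, hbc.eq, ← mul_assoc, ha', add_mul,
    smul_mul_assoc, mul_assoc]
  exact add_sub_cancel_left _ _

end aux

section auxstar

variable {A : Type*} [Ring A] [Algebra ℂ A] [StarRing A] [StarModule ℂ A]

lemma aux_star_lie (a c : A) (s : ℝ) (hc : star c = c)
    (h : ⁅a, c⁆ = (s : ℂ) • a) : ⁅star a, c⁆ = (-(s : ℂ)) • star a := by
  have h2 := congrArg star h
  rw [Ring.lie_def] at h2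
  rw [star_sub, star_mul, star_mul, hc, star_smul, Complex.star_def,
    Complex.conj_ofReal] at h2
  -- h2 : c * star a - star a * c = s • star a
  rw [Ring.lie_def, neg_smul, ← h2]
  abel

end auxstar

/-- the propagating `ℝ³ × S¹` solution of the IKKT model.
A quantum plane `⁅X⁰,X¹⁆ = iθ•1`, a fuzzy cylinder `(U, X²)` of radius `R` and
parameter `ξ` commuting with the plane, and a unitary `W` with `⁅W,X⁰⁆ = t⁰•W`,
`⁅W,X¹⁆ = t¹•W` commuting with the cylinder.  For `Z = U W`, `X⁴ = (Z+Z*)/2`,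
`X⁵ = (Z-Z*)/(2i)`, if `ξ² + (t¹)² - (t⁰)² = 0`, then `□Xᵃ = 0` for each of
`X⁰, X¹, X², X⁴, X⁵`, with the Minkowski matrix Laplacian `□`. -/
theorem stmt10 (A : Type*) [Ring A] [Algebra ℂ A] [StarRing A] [StarModule ℂ A]
    (θ R ξ t0 t1 : ℝ) (hR : 0 < R)
    (X0 X1 X2 U W : A)
    (hX0sa : star X0 = X0) (hX1sa : star X1 = X1)
    (hplane : ⁅X0, X1⁆ = (Complex.I * (θ : ℂ)) • (1 : A))
    (hUUs : U * star U = ((R : ℂ) ^ 2) • (1 : A))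
    (hUsU : star U * U = ((R : ℂ) ^ 2) • (1 : A))
    (hX2sa : star X2 = X2)
    (hUX2 : ⁅U, X2⁆ = (ξ : ℂ) • U)
    (hcylplane : ∀ P ∈ ({U, star U, X2} : Set A), Commute P X0 ∧ Commute P X1)
    (hWWs : W * star W = 1) (hWsW : star W * W = 1)
    (hWcyl : ∀ P ∈ ({U, star U, X2} : Set A), Commute W P)
    (hWX0 : ⁅W, X0⁆ = (t0 : ℂ) • W)
    (hWX1 : ⁅W, X1⁆ = (t1 : ℂ) • W)
    (Z X4 X5 : A)
    (hZ : Z = U * W)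
    (hX4 : X4 = (2 : ℂ)⁻¹ • (Z + star Z))
    (hX5 : X5 = ((2 : ℂ) * Complex.I)⁻¹ • (Z - star Z))
    (Box : A → A)
    (hBox : ∀ φ, Box φ = -⁅X0, ⁅X0, φ⁆⁆ + ⁅X1, ⁅X1, φ⁆⁆ + ⁅X2, ⁅X2, φ⁆⁆
        + ⁅X4, ⁅X4, φ⁆⁆ + ⁅X5, ⁅X5, φ⁆⁆)
    (hk : ξ ^ 2 + t1 ^ 2 - t0 ^ 2 = 0) :
    Box X0 = 0 ∧ Box X1 = 0 ∧ Box X2 = 0 ∧ Box X4 = 0 ∧ Box X5 = 0 := by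
  letI : LieRing A := LieRing.ofAssociativeRing
  have hkC : (ξ : ℂ) ^ 2 + (t1 : ℂ) ^ 2 - (t0 : ℂ) ^ 2 = 0 := by
    exact_mod_cast congrArg (fun x : ℝ => (x : ℂ)) hk
  -- basic membership facts
  have hUmem : U ∈ ({U, star U, X2} : Set A) := by simp
  have hUsmem : star U ∈ ({U, star U, X2} : Set A) := by simp
  have hX2mem : X2 ∈ ({U, star U, X2} : Set A) := by simp
  have hU0 : Commute U X0 := (hcylplane U hUmem).1
  have hU1 : Commute U X1 := (hcylplane U hUmem).2
  have hUs0 : Commute (star U) X0 := (hcylplane _ hUsmem).1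
  have hUs1 : Commute (star U) X1 := (hcylplane _ hUsmem).2
  have h20 : Commute X2 X0 := (hcylplane _ hX2mem).1
  have h21 : Commute X2 X1 := (hcylplane _ hX2mem).2
  have hWU : Commute W U := hWcyl U hUmem
  have hWUs : Commute W (star U) := hWcyl _ hUsmem
  have hW2 : Commute W X2 := hWcyl _ hX2mem
  -- commutators with Z
  have cZ0 : ⁅Z, X0⁆ = (t0 : ℂ) • Z := by
    rw [hZ]; exact aux_mulComm_lie U W X0 _ hWX0 hU0
  have cZ1 : ⁅Z, X1⁆ = (t1 : ℂ) • Z := by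
    rw [hZ]; exact aux_mulComm_lie U W X1 _ hWX1 hU1
  have cZ2 : ⁅Z, X2⁆ = (ξ : ℂ) • Z := by
    rw [hZ]; exact aux_lie_mulComm U W X2 _ hUX2 hW2
  have cZs0 : ⁅star Z, X0⁆ = (-(t0 : ℂ)) • star Z := aux_star_lie Z X0 t0 hX0sa cZ0
  have cZs1 : ⁅star Z, X1⁆ = (-(t1 : ℂ)) • star Z := aux_star_lie Z X1 t1 hX1sa cZ1
  have cZs2 : ⁅star Z, X2⁆ = (-(ξ : ℂ)) • star Z := aux_star_lie Z X2 ξ hX2sa cZ2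
  -- Z commutes with star Z
  have hZZs : Z * star Z = ((R : ℂ) ^ 2) • 1 := by
    rw [hZ, star_mul]
    have : U * W * (star W * star U) = U * (W * star W) * star U := by noncomm_ring
    rw [this, hWWs, mul_one, hUUs]
  have hZsZ : star Z * Z = ((R : ℂ) ^ 2) • 1 := by
    rw [hZ, star_mul]
    have : star W * star U * (U * W) = star W * (star U * U) * W := by noncomm_ring
    rw [this, hUsU, mul_smul_comm, mul_one, smul_mul_assoc, hWsW]
  have hzz : ⁅Z, star Z⁆ = 0 := by
    rw [Ring.lie_def, hZZs, hZsZ, sub_self]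
  have hzsz : ⁅star Z, Z⁆ = 0 := by
    rw [Ring.lie_def, hZZs, hZsZ, sub_self]
  -- reversed-orientation commutators for the Laplacian
  have d0Z : ⁅X0, Z⁆ = -((t0 : ℂ) • Z) := by rw [← lie_skew, cZ0]
  have d1Z : ⁅X1, Z⁆ = -((t1 : ℂ) • Z) := by rw [← lie_skew, cZ1]
  have d2Z : ⁅X2, Z⁆ = -((ξ : ℂ) • Z) := by rw [← lie_skew, cZ2]
  have d0Zs : ⁅X0, star Z⁆ = -((-(t0 : ℂ)) • star Z) := by rw [← lie_skew, cZs0]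
  have d1Zs : ⁅X1, star Z⁆ = -((-(t1 : ℂ)) • star Z) := by rw [← lie_skew, cZs1]
  have d2Zs : ⁅X2, star Z⁆ = -((-(ξ : ℂ)) • star Z) := by rw [← lie_skew, cZs2]
  -- plane and cylinder commutators
  have e10 : ⁅X1, X0⁆ = -((Complex.I * (θ : ℂ)) • (1 : A)) := by
    rw [← lie_skew, hplane]
  have e20 : ⁅X2, X0⁆ = 0 := by rw [Ring.lie_def, h20.eq, sub_self]
  have e21 : ⁅X2, X1⁆ = 0 := by rw [Ring.lie_def, h21.eq, sub_self]
  have e02 : ⁅X0, X2⁆ = 0 := by rw [← lie_skew, e20, neg_zero]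
  have e12 : ⁅X1, X2⁆ = 0 := by rw [← lie_skew, e21, neg_zero]
  have l1 : ∀ a : A, ⁅a, (1 : A)⁆ = 0 := by intro a; simp [Ring.lie_def]
  refine ⟨?_, ?_, ?_, ?_, ?_⟩
  · rw [hBox]
    simp [hX4, hX5, lie_self, e10, e20, lie_smul, smul_lie, lie_add, add_lie,
      lie_sub, sub_lie, lie_neg, neg_lie, l1, d0Z, d0Zs, cZ0, cZs0, hzz, hzsz]
  · rw [hBox]
    simp [hX4, hX5, lie_self, hplane, e21, lie_smul, smul_lie, lie_add, add_lie,
      lie_sub, sub_lie, lie_neg, neg_lie, l1, d1Z, d1Zs, cZ1, cZs1, hzz, hzsz]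
  · rw [hBox]
    simp [hX4, hX5, lie_self, e02, e12, lie_smul, smul_lie, lie_add, add_lie,
      lie_sub, sub_lie, lie_neg, neg_lie, l1, d2Z, d2Zs, cZ2, cZs2, hzz, hzsz]
  · rw [hBox]
    simp only [hX4, hX5, lie_smul, smul_lie, lie_add, add_lie, lie_sub, sub_lie,
      lie_neg, neg_lie, lie_self, d0Z, d1Z, d2Z, d0Zs, d1Zs, d2Zs,
      cZ0, cZ1, cZ2, cZs0, cZs1, cZs2, hzz, hzsz,
      smul_zero, smul_neg, neg_neg, add_zero, zero_add, sub_zero, zero_sub,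
      neg_zero, lie_zero, zero_lie, smul_smul]
    match_scalars <;>
      first
        | linear_combination (2 : ℂ)⁻¹ * hkC
        | linear_combination ((2 : ℂ) * Complex.I)⁻¹ * hkC
        | linear_combination -(Complex.I)⁻¹ * hkC
        | linear_combination (Complex.I)⁻¹ * hkC
        | linear_combination -((2 : ℂ) * Complex.I)⁻¹ * hkC
        | linear_combination -(2 : ℂ)⁻¹ * hkC
  · rw [hBox]
    simp only [hX4, hX5, lie_smul, smul_lie, lie_add, add_lie, lie_sub, sub_lie,
      lie_neg, neg_lie, lie_self, d0Z, d1Z, d2Z, d0Zs, d1Zs, d2Zs,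
      cZ0, cZ1, cZ2, cZs0, cZs1, cZs2, hzz, hzsz,
      smul_zero, smul_neg, neg_neg, add_zero, zero_add, sub_zero, zero_sub,
      neg_zero, lie_zero, zero_lie, smul_smul]
    match_scalars <;>
      first
        | linear_combination (2 : ℂ)⁻¹ * hkC
        | linear_combination ((2 : ℂ) * Complex.I)⁻¹ * hkC
        | linear_combination -(Complex.I)⁻¹ * hkC
        | linear_combination (Complex.I)⁻¹ * hkC
        | linear_combination -((2 : ℂ) * Complex.I)⁻¹ * hkC
        | linear_combination -(2 : ℂ)⁻¹ * hkC
end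

section
/- Let A be a complex *-algebra containing: self-adjoint Y^1, Y^2, Y^3 with ⁅Y^a,Y^b⁆ = i·c·Σ_d ε_{abd}·Y^d (fuzzy sphere, c ∈ ℝ) with 2c² = ξ²; fuzzy cylinders (U_2, X^2) and (U_3, X^3), both of radius 1, with equal parameters ξ_2 = ξ_3; self-adjoint X^0, X^1 with ⁅X^0,X^1⁆ = iθ·1; and a unitary W with ⁅W,X^0⁆ = t^0·W, ⁅W,X^1⁆ = t^1·W (t^0,t^1 ∈ ℝ) — where any two elements from distinct groups (sphere, cylinder-2, cylinder-3, plane, W) commute, and W commutes with the Y^a, the cylinder generators, X^2 and X^3. Define Z'^1 = Y^1·U_2·W, Z'^2 = Y^2·U_2·W, Z'^3 = Y^3·U_3·W, with self-adjoint components X'^4,…,X'^9 given by their real and imaginary parts, and X'^μ = X^μ for μ = 0,1,2,3. If (t^1)² − (t^0)² = −(ξ² + ξ_2²), then □X'^a = 0 for all ten coordinates, where □φ = −⁅X'^0,⁅X'^0,φ⁆⁆ + Σ_{b=1}^{9}⁅X'^b,⁅X'^b,φ⁆⁆. This is the ℝ⁴ × T² × S² solution of the IKKT model, with a fuzzy sphere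 in the extra dimensions arising without any added cubic terms. -/
set_option linter.unusedSectionVars false
set_option maxHeartbeats 1000000

section IKKTHelpers
variable {A : Type*} [Ring A] [Algebra ℂ A]
attribute [local instance] LieRing.ofAssociativeRing

private lemma lie_mul_mul' (a r b s : A) (hrb : Commute r b) (hsa : Commute s a)
    (hrs : Commute r s) : ⁅a * r, b * s⁆ = ⁅a, b⁆ * (r * s) := by
  have h1 : a * r * (b * s) = a * b * (r * s) := by
    rw [mul_assoc a r (b * s), ← mul_assoc r b s, hrb.eq, mul_assoc b r s,
      ← mul_assoc a b (r * s)]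
  have h2 : b * s * (a * r) = b * a * (r * s) := by
    rw [mul_assoc b s (a * r), ← mul_assoc s a r, hsa.eq, mul_assoc a s r,
      ← mul_assoc b a (s * r), ← hrs.eq]
  rw [Ring.lie_def, Ring.lie_def, h1, h2, ← sub_mul]

private lemma lie_mul_right' (a r b : A) (hrb : Commute r b) : ⁅a * r, b⁆ = ⁅a, b⁆ * r := by
  have h1 : a * r * b = a * b * r := by rw [mul_assoc, hrb.eq, ← mul_assoc]
  rw [Ring.lie_def, Ring.lie_def, h1, ← mul_assoc, ← sub_mul]

private lemma lie_mul_left'' (a r c : A) (hac : Commute a c) : ⁅a * r, c⁆ = a * ⁅r, c⁆ := by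
  have h2 : c * (a * r) = a * (c * r) := by rw [← mul_assoc, ← hac.eq, mul_assoc]
  rw [Ring.lie_def, Ring.lie_def, mul_assoc, h2, ← mul_sub]

private lemma double_bracket' (Ya Yb Yd u v w : A) (e f : ℂ)
    (hab : ⁅Ya, Yb⁆ = e • Yd) (had : ⁅Ya, Yd⁆ = f • Yb) (huv : u * v = 1)
    (hvYb : Commute v Yb) (hvYa : Commute v Ya) (hwYa : Commute w Ya)
    (huYd : Commute u Yd) (hvw : Commute v w) (huvC : Commute u v) (huw : Commute u w) :
    ⁅Ya * u, ⁅Ya * v, Yb * w⁆⁆ = (e * f) • (Yb * w) := by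
  rw [lie_mul_mul' Ya v Yb w hvYb hwYa hvw, hab, smul_mul_assoc, lie_smul,
    lie_mul_mul' Ya u Yd (v * w) huYd (hvYa.mul_left hwYa) (huvC.mul_right huw),
    had, smul_mul_assoc, smul_smul, ← mul_assoc u v w, huv, one_mul]

private lemma pq_reduce (z w φ : A) :
    ⁅(2 : ℂ)⁻¹ • (z + w), ⁅(2 : ℂ)⁻¹ • (z + w), φ⁆⁆
      + ⁅((2 : ℂ) * Complex.I)⁻¹ • (z - w), ⁅((2 : ℂ) * Complex.I)⁻¹ • (z - w), φ⁆⁆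
    = (2 : ℂ)⁻¹ • (⁅z, ⁅w, φ⁆⁆ + ⁅w, ⁅z, φ⁆⁆) := by
  simp only [smul_lie, lie_smul, add_lie, lie_add, sub_lie, lie_sub, smul_add, smul_sub, smul_smul]
  match_scalars <;> (field_simp; ring_nf; simp [Complex.I_sq]) <;> ring

private lemma star_lie' [StarRing A] (a b : A) : star ⁅a, b⁆ = ⁅star b, star a⁆ := by
  simp [Ring.lie_def, star_sub, star_mul]

private lemma star_double_lie' [StarRing A] (z w φ : A) (hw : star z = w) :
    star (⁅z, ⁅w, φ⁆⁆ + ⁅w, ⁅z, φ⁆⁆) = ⁅z, ⁅w, star φ⁆⁆ + ⁅w, ⁅z, star φ⁆⁆ := by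
  subst hw
  simp only [Ring.lie_def, star_add, star_sub, star_mul, star_star]
  noncomm_ring

private lemma star_double_lie_sa [StarRing A] (x φ : A) (hx : star x = x) :
    star ⁅x, ⁅x, φ⁆⁆ = ⁅x, ⁅x, star φ⁆⁆ := by
  simp only [Ring.lie_def, star_sub, star_mul, hx]
  try noncomm_ring

end IKKTHelpers




/-- the propagating `ℝ⁴ × T² × S²` solution of the IKKT model,
with a fuzzy sphere `⁅Yᵃ,Yᵇ⁆ = i c ε_{abd} Yᵈ` (`2c² = ξ²`) in the extra
dimensions, two fuzzy cylinders `(U2, X2)`, `(U3, X3)` of radius 1 with equal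
parameters `ξc`, a quantum plane `⁅X⁰,X¹⁆ = iθ•1` and a unitary twist `W` with
`⁅W,X⁰⁆ = t⁰•W`, `⁅W,X¹⁆ = t¹•W`.  With `Z'¹ = Y¹U2 W`, `Z'² = Y²U2 W`,
`Z'³ = Y³U3 W`, if `(t¹)² - (t⁰)² = -(ξ² + ξc²)` then all ten coordinates
satisfy `□X'ᵃ = 0`. -/
theorem stmt12 (A : Type*) [Ring A] [Algebra ℂ A] [StarRing A] [StarModule ℂ A]
    (c ξ θ ξc t0 t1 : ℝ)
    (Y1 Y2 Y3 U2 U3 W X0 X1 X2 X3 : A)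
    -- fuzzy sphere
    (hY1sa : star Y1 = Y1) (hY2sa : star Y2 = Y2) (hY3sa : star Y3 = Y3)
    (hY12 : ⁅Y1, Y2⁆ = (Complex.I * (c : ℂ)) • Y3)
    (hY23 : ⁅Y2, Y3⁆ = (Complex.I * (c : ℂ)) • Y1)
    (hY31 : ⁅Y3, Y1⁆ = (Complex.I * (c : ℂ)) • Y2)
    (hcξ : 2 * c ^ 2 = ξ ^ 2)
    -- fuzzy cylinders of radius 1, equal parameters ξc
    (hU2Us : U2 * star U2 = 1) (hU2sU : star U2 * U2 = 1)
    (hX2sa : star X2 = X2)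
    (hU2X2 : ⁅U2, X2⁆ = (ξc : ℂ) • U2)
    (hU3Us : U3 * star U3 = 1) (hU3sU : star U3 * U3 = 1)
    (hX3sa : star X3 = X3)
    (hU3X3 : ⁅U3, X3⁆ = (ξc : ℂ) • U3)
    -- quantum plane
    (hX0sa : star X0 = X0) (hX1sa : star X1 = X1)
    (hplane : ⁅X0, X1⁆ = (Complex.I * (θ : ℂ)) • (1 : A))
    -- unitary twist W
    (hWWs : W * star W = 1) (hWsW : star W * W = 1)
    (hWX0 : ⁅W, X0⁆ = (t0 : ℂ) • W)
    (hWX1 : ⁅W, X1⁆ = (t1 : ℂ) • W)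
    -- elements of distinct groups commute
    (hs2 : ∀ P ∈ ({Y1, Y2, Y3} : Set A),
        ∀ Q ∈ ({U2, star U2, X2} : Set A), Commute P Q)
    (hs3 : ∀ P ∈ ({Y1, Y2, Y3} : Set A),
        ∀ Q ∈ ({U3, star U3, X3} : Set A), Commute P Q)
    (hsp : ∀ P ∈ ({Y1, Y2, Y3} : Set A),
        ∀ Q ∈ ({X0, X1} : Set A), Commute P Q)
    (h23 : ∀ P ∈ ({U2, star U2, X2} : Set A),
        ∀ Q ∈ ({U3, star U3, X3} : Set A), Commute P Q)
    (h2p : ∀ P ∈ ({U2, star U2, X2} : Set A),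
        ∀ Q ∈ ({X0, X1} : Set A), Commute P Q)
    (h3p : ∀ P ∈ ({U3, star U3, X3} : Set A),
        ∀ Q ∈ ({X0, X1} : Set A), Commute P Q)
    -- W commutes with sphere and cylinder generators
    (hWs : ∀ P ∈ ({Y1, Y2, Y3} : Set A), Commute W P)
    (hW2 : ∀ P ∈ ({U2, star U2, X2} : Set A), Commute W P)
    (hW3 : ∀ P ∈ ({U3, star U3, X3} : Set A), Commute W P)
    -- twisted coordinates and their self-adjoint components
    (Z' : Fin 3 → A)
    (hZ' : Z' = ![Y1 * U2 * W, Y2 * U2 * W, Y3 * U3 * W])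
    (P Q : Fin 3 → A)
    (hP : ∀ α, P α = (2 : ℂ)⁻¹ • (Z' α + star (Z' α)))
    (hQ : ∀ α, Q α = ((2 : ℂ) * Complex.I)⁻¹ • (Z' α - star (Z' α)))
    (Box : A → A)
    (hBox : ∀ φ, Box φ = -⁅X0, ⁅X0, φ⁆⁆ + ⁅X1, ⁅X1, φ⁆⁆ + ⁅X2, ⁅X2, φ⁆⁆
        + ⁅X3, ⁅X3, φ⁆⁆ + ∑ α, (⁅P α, ⁅P α, φ⁆⁆ + ⁅Q α, ⁅Q α, φ⁆⁆))
    (hk : t1 ^ 2 - t0 ^ 2 = -(ξ ^ 2 + ξc ^ 2)) :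
    Box X0 = 0 ∧ Box X1 = 0 ∧ Box X2 = 0 ∧ Box X3 = 0
    ∧ (∀ α, Box (P α) = 0 ∧ Box (Q α) = 0) := by
  classical
  letI : LieRing A := LieRing.ofAssociativeRing
  -- atomic commutation facts
  have scomm : ∀ a b : A, Commute a b → Commute (star b) (star a) := by
    intro a b h
    have h2 : star b * star a = star a * star b := by
      have := congrArg star h.eq
      simpa [star_mul] using this
    exact h2
  have cY1U2 : Commute Y1 U2 := hs2 Y1 (by simp) U2 (by simp)
  have cY2U2 : Commute Y2 U2 := hs2 Y2 (by simp) U2 (by simp)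
  have cY3U2 : Commute Y3 U2 := hs2 Y3 (by simp) U2 (by simp)
  have cY1sU2 : Commute Y1 (star U2) := hs2 Y1 (by simp) (star U2) (by simp)
  have cY2sU2 : Commute Y2 (star U2) := hs2 Y2 (by simp) (star U2) (by simp)
  have cY3sU2 : Commute Y3 (star U2) := hs2 Y3 (by simp) (star U2) (by simp)
  have cY1X2 : Commute Y1 X2 := hs2 Y1 (by simp) X2 (by simp)
  have cY2X2 : Commute Y2 X2 := hs2 Y2 (by simp) X2 (by simp)
  have cY3X2 : Commute Y3 X2 := hs2 Y3 (by simp) X2 (by simp)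
  have cY1U3 : Commute Y1 U3 := hs3 Y1 (by simp) U3 (by simp)
  have cY2U3 : Commute Y2 U3 := hs3 Y2 (by simp) U3 (by simp)
  have cY3U3 : Commute Y3 U3 := hs3 Y3 (by simp) U3 (by simp)
  have cY1sU3 : Commute Y1 (star U3) := hs3 Y1 (by simp) (star U3) (by simp)
  have cY2sU3 : Commute Y2 (star U3) := hs3 Y2 (by simp) (star U3) (by simp)
  have cY3sU3 : Commute Y3 (star U3) := hs3 Y3 (by simp) (star U3) (by simp)
  have cY1X3 : Commute Y1 X3 := hs3 Y1 (by simp) X3 (by simp)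
  have cY2X3 : Commute Y2 X3 := hs3 Y2 (by simp) X3 (by simp)
  have cY3X3 : Commute Y3 X3 := hs3 Y3 (by simp) X3 (by simp)
  have cY1X0 : Commute Y1 X0 := hsp Y1 (by simp) X0 (by simp)
  have cY2X0 : Commute Y2 X0 := hsp Y2 (by simp) X0 (by simp)
  have cY3X0 : Commute Y3 X0 := hsp Y3 (by simp) X0 (by simp)
  have cY1X1 : Commute Y1 X1 := hsp Y1 (by simp) X1 (by simp)
  have cY2X1 : Commute Y2 X1 := hsp Y2 (by simp) X1 (by simp)
  have cY3X1 : Commute Y3 X1 := hsp Y3 (by simp) X1 (by simp)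
  have cU2U3 : Commute U2 U3 := h23 U2 (by simp) U3 (by simp)
  have cU2sU3 : Commute U2 (star U3) := h23 U2 (by simp) (star U3) (by simp)
  have cU2X3 : Commute U2 X3 := h23 U2 (by simp) X3 (by simp)
  have csU2U3 : Commute (star U2) U3 := h23 (star U2) (by simp) U3 (by simp)
  have csU2sU3 : Commute (star U2) (star U3) := h23 (star U2) (by simp) (star U3) (by simp)
  have csU2X3 : Commute (star U2) X3 := h23 (star U2) (by simp) X3 (by simp)
  have cX2U3 : Commute X2 U3 := h23 X2 (by simp) U3 (by simp)
  have cX2sU3 : Commute X2 (star U3) := h23 X2 (by simp) (star U3) (by simp)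
  have cX2X3 : Commute X2 X3 := h23 X2 (by simp) X3 (by simp)
  have cU2X0 : Commute U2 X0 := h2p U2 (by simp) X0 (by simp)
  have cU2X1 : Commute U2 X1 := h2p U2 (by simp) X1 (by simp)
  have csU2X0 : Commute (star U2) X0 := h2p (star U2) (by simp) X0 (by simp)
  have csU2X1 : Commute (star U2) X1 := h2p (star U2) (by simp) X1 (by simp)
  have cX2X0 : Commute X2 X0 := h2p X2 (by simp) X0 (by simp)
  have cX2X1 : Commute X2 X1 := h2p X2 (by simp) X1 (by simp)
  have cU3X0 : Commute U3 X0 := h3p U3 (by simp) X0 (by simp)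
  have cU3X1 : Commute U3 X1 := h3p U3 (by simp) X1 (by simp)
  have csU3X0 : Commute (star U3) X0 := h3p (star U3) (by simp) X0 (by simp)
  have csU3X1 : Commute (star U3) X1 := h3p (star U3) (by simp) X1 (by simp)
  have cX3X0 : Commute X3 X0 := h3p X3 (by simp) X0 (by simp)
  have cX3X1 : Commute X3 X1 := h3p X3 (by simp) X1 (by simp)
  have cWY1 : Commute W Y1 := hWs Y1 (by simp)
  have cWY2 : Commute W Y2 := hWs Y2 (by simp)
  have cWY3 : Commute W Y3 := hWs Y3 (by simp)
  have cWU2 : Commute W U2 := hW2 U2 (by simp)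
  have cWsU2 : Commute W (star U2) := hW2 (star U2) (by simp)
  have cWX2 : Commute W X2 := hW2 X2 (by simp)
  have cWU3 : Commute W U3 := hW3 U3 (by simp)
  have cWsU3 : Commute W (star U3) := hW3 (star U3) (by simp)
  have cWX3 : Commute W X3 := hW3 X3 (by simp)
  -- star-derived commutation facts
  have cY1sW : Commute Y1 (star W) := by
    have h := scomm W Y1 cWY1; rwa [hY1sa] at h
  have cY2sW : Commute Y2 (star W) := by
    have h := scomm W Y2 cWY2; rwa [hY2sa] at h
  have cY3sW : Commute Y3 (star W) := by
    have h := scomm W Y3 cWY3; rwa [hY3sa] at h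
  have csU2sW : Commute (star U2) (star W) := scomm W U2 cWU2
  have cU2sW : Commute U2 (star W) := by
    have h := scomm W (star U2) cWsU2; rwa [star_star] at h
  have csU3sW : Commute (star U3) (star W) := scomm W U3 cWU3
  have cU3sW : Commute U3 (star W) := by
    have h := scomm W (star U3) cWsU3; rwa [star_star] at h
  have csWX2 : Commute (star W) X2 := by
    have h := scomm W X2 cWX2; rw [hX2sa] at h; exact h.symm
  have csWX3 : Commute (star W) X3 := by
    have h := scomm W X3 cWX3; rw [hX3sa] at h; exact h.symm
  have cWsW : Commute W (star W) := by
    show W * star W = star W * W; rw [hWWs, hWsW]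
  have cU2sU2 : Commute U2 (star U2) := by
    show U2 * star U2 = star U2 * U2; rw [hU2Us, hU2sU]
  have cU3sU3 : Commute U3 (star U3) := by
    show U3 * star U3 = star U3 * U3; rw [hU3Us, hU3sU]
  -- composite commutation facts
  have crY1 : Commute (U2 * W) Y1 := cY1U2.symm.mul_left cWY1
  have crY2 : Commute (U2 * W) Y2 := cY2U2.symm.mul_left cWY2
  have crY3 : Commute (U2 * W) Y3 := cY3U2.symm.mul_left cWY3
  have cqY1 : Commute (star U2 * star W) Y1 := cY1sU2.symm.mul_left cY1sW.symm
  have cqY2 : Commute (star U2 * star W) Y2 := cY2sU2.symm.mul_left cY2sW.symm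
  have cqY3 : Commute (star U2 * star W) Y3 := cY3sU2.symm.mul_left cY3sW.symm
  have cr3Y1 : Commute (U3 * W) Y1 := cY1U3.symm.mul_left cWY1
  have cr3Y2 : Commute (U3 * W) Y2 := cY2U3.symm.mul_left cWY2
  have cr3Y3 : Commute (U3 * W) Y3 := cY3U3.symm.mul_left cWY3
  have cq3Y1 : Commute (star U3 * star W) Y1 := cY1sU3.symm.mul_left cY1sW.symm
  have cq3Y2 : Commute (star U3 * star W) Y2 := cY2sU3.symm.mul_left cY2sW.symm
  have cq3Y3 : Commute (star U3 * star W) Y3 := cY3sU3.symm.mul_left cY3sW.symm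
  have c_rq : Commute (U2 * W) (star U2 * star W) :=
    (cU2sU2.mul_right cU2sW).mul_left (cWsU2.mul_right cWsW)
  have c_rr3 : Commute (U2 * W) (U3 * W) :=
    (cU2U3.mul_right cWU2.symm).mul_left (cWU3.mul_right (Commute.refl W))
  have c_rq3 : Commute (U2 * W) (star U3 * star W) :=
    (cU2sU3.mul_right cU2sW).mul_left (cWsU3.mul_right cWsW)
  have c_qr3 : Commute (star U2 * star W) (U3 * W) :=
    (csU2U3.mul_right cWsU2.symm).mul_left (cU3sW.symm.mul_right cWsW.symm)
  have c_qq3 : Commute (star U2 * star W) (star U3 * star W) :=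
    (csU2sU3.mul_right csU2sW).mul_left (csU3sW.symm.mul_right (Commute.refl (star W)))
  have c_r3q3 : Commute (U3 * W) (star U3 * star W) :=
    (cU3sU3.mul_right cU3sW).mul_left (cWsU3.mul_right cWsW)
  -- unitarity products
  have mul4 : ∀ a b c d : A, Commute b c → a * b * (c * d) = a * c * (b * d) := by
    intro a b c d h
    rw [mul_assoc, ← mul_assoc b c d, h.eq, mul_assoc c b d, ← mul_assoc]
  have h_qr : (star U2 * star W) * (U2 * W) = 1 := by
    rw [mul4 _ _ _ _ (cU2sW.symm), hU2sU, hWsW, one_mul]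
  have h_rq : (U2 * W) * (star U2 * star W) = 1 := by
    rw [mul4 _ _ _ _ cWsU2, hU2Us, hWWs, one_mul]
  have h_q3r3 : (star U3 * star W) * (U3 * W) = 1 := by
    rw [mul4 _ _ _ _ (cU3sW.symm), hU3sU, hWsW, one_mul]
  have h_r3q3 : (U3 * W) * (star U3 * star W) = 1 := by
    rw [mul4 _ _ _ _ cWsU3, hU3Us, hWWs, one_mul]
  -- reversed sphere brackets
  have hY21 : ⁅Y2, Y1⁆ = (-(Complex.I * (c : ℂ))) • Y3 := by
    rw [← lie_skew, hY12]; exact (neg_smul _ _).symm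
  have hY13 : ⁅Y1, Y3⁆ = (-(Complex.I * (c : ℂ))) • Y2 := by
    rw [← lie_skew, hY31]; exact (neg_smul _ _).symm
  have hY32 : ⁅Y3, Y2⁆ = (-(Complex.I * (c : ℂ))) • Y1 := by
    rw [← lie_skew, hY23]; exact (neg_smul _ _).symm
  -- grouped coordinates
  have hZ0 : Z' 0 = Y1 * (U2 * W) := by simp [hZ', mul_assoc]
  have hZ1 : Z' 1 = Y2 * (U2 * W) := by simp [hZ', mul_assoc]
  have hZ2 : Z' 2 = Y3 * (U3 * W) := by simp [hZ', mul_assoc]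
  have hsZ0 : star (Y1 * (U2 * W)) = Y1 * (star U2 * star W) := by
    rw [star_mul, star_mul, hY1sa, ← csU2sW.eq]; exact cqY1.eq
  have hsZ1 : star (Y2 * (U2 * W)) = Y2 * (star U2 * star W) := by
    rw [star_mul, star_mul, hY2sa, ← csU2sW.eq]; exact cqY2.eq
  have hsZ2 : star (Y3 * (U3 * W)) = Y3 * (star U3 * star W) := by
    rw [star_mul, star_mul, hY3sa, ← csU3sW.eq]; exact cq3Y3.eq
  -- brackets of star pieces with the plane/cylinder coordinates
  have hstar_br : ∀ (a x : A) (s : ℝ), star x = x → ⁅a, x⁆ = (s : ℂ) • a →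
      ⁅star a, x⁆ = (-(s : ℂ)) • star a := by
    intro a x s hx h
    have h2 := congrArg star h
    rw [star_lie', hx, star_smul, Complex.star_def, Complex.conj_ofReal] at h2
    rw [← lie_skew, h2, neg_smul]
  have hsWX0 : ⁅star W, X0⁆ = (-(t0 : ℂ)) • star W := hstar_br W X0 t0 hX0sa hWX0
  have hsWX1 : ⁅star W, X1⁆ = (-(t1 : ℂ)) • star W := hstar_br W X1 t1 hX1sa hWX1
  have hsU2X2 : ⁅star U2, X2⁆ = (-(ξc : ℂ)) • star U2 := hstar_br U2 X2 ξc hX2sa hU2X2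
  have hsU3X3 : ⁅star U3, X3⁆ = (-(ξc : ℂ)) • star U3 := hstar_br U3 X3 ξc hX3sa hU3X3
  -- brackets of the group factors with the coordinates
  have brX0 : ⁅U2 * W, X0⁆ = (t0 : ℂ) • (U2 * W) := by
    rw [lie_mul_left'' U2 W X0 cU2X0, hWX0, mul_smul_comm]
  have brX1 : ⁅U2 * W, X1⁆ = (t1 : ℂ) • (U2 * W) := by
    rw [lie_mul_left'' U2 W X1 cU2X1, hWX1, mul_smul_comm]
  have brX2 : ⁅U2 * W, X2⁆ = (ξc : ℂ) • (U2 * W) := by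
    rw [lie_mul_right' U2 W X2 cWX2, hU2X2, smul_mul_assoc]
  have brX3 : ⁅U2 * W, X3⁆ = (0 : ℂ) • (U2 * W) := by
    rw [zero_smul]; exact (cU2X3.mul_left cWX3).lie_eq
  have bqX0 : ⁅star U2 * star W, X0⁆ = (-(t0 : ℂ)) • (star U2 * star W) := by
    rw [lie_mul_left'' _ _ _ csU2X0, hsWX0, mul_smul_comm]
  have bqX1 : ⁅star U2 * star W, X1⁆ = (-(t1 : ℂ)) • (star U2 * star W) := by
    rw [lie_mul_left'' _ _ _ csU2X1, hsWX1, mul_smul_comm]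
  have bqX2 : ⁅star U2 * star W, X2⁆ = (-(ξc : ℂ)) • (star U2 * star W) := by
    rw [lie_mul_right' _ _ _ csWX2, hsU2X2, smul_mul_assoc]
  have bqX3 : ⁅star U2 * star W, X3⁆ = (0 : ℂ) • (star U2 * star W) := by
    rw [zero_smul]; exact (csU2X3.mul_left csWX3).lie_eq
  have br3X0 : ⁅U3 * W, X0⁆ = (t0 : ℂ) • (U3 * W) := by
    rw [lie_mul_left'' U3 W X0 cU3X0, hWX0, mul_smul_comm]
  have br3X1 : ⁅U3 * W, X1⁆ = (t1 : ℂ) • (U3 * W) := by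
    rw [lie_mul_left'' U3 W X1 cU3X1, hWX1, mul_smul_comm]
  have br3X2 : ⁅U3 * W, X2⁆ = (0 : ℂ) • (U3 * W) := by
    rw [zero_smul]; exact (cX2U3.symm.mul_left cWX2).lie_eq
  have br3X3 : ⁅U3 * W, X3⁆ = (ξc : ℂ) • (U3 * W) := by
    rw [lie_mul_right' U3 W X3 cWX3, hU3X3, smul_mul_assoc]
  have bq3X0 : ⁅star U3 * star W, X0⁆ = (-(t0 : ℂ)) • (star U3 * star W) := by
    rw [lie_mul_left'' _ _ _ csU3X0, hsWX0, mul_smul_comm]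
  have bq3X1 : ⁅star U3 * star W, X1⁆ = (-(t1 : ℂ)) • (star U3 * star W) := by
    rw [lie_mul_left'' _ _ _ csU3X1, hsWX1, mul_smul_comm]
  have bq3X2 : ⁅star U3 * star W, X2⁆ = (0 : ℂ) • (star U3 * star W) := by
    rw [zero_smul]; exact (cX2sU3.symm.mul_left csWX2).lie_eq
  have bq3X3 : ⁅star U3 * star W, X3⁆ = (-(ξc : ℂ)) • (star U3 * star W) := by
    rw [lie_mul_right' _ _ _ csWX3, hsU3X3, smul_mul_assoc]
  -- generic builders
  have bz : ∀ (Yi g x : A) (a : ℂ), Commute Yi x → ⁅g, x⁆ = a • g →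
      ⁅Yi * g, x⁆ = a • (Yi * g) := by
    intro Yi g x a hc hg
    rw [lie_mul_left'' Yi g x hc, hg, mul_smul_comm]
  have flip : ∀ (x z : A) (a : ℂ), ⁅z, x⁆ = a • z → ⁅x, z⁆ = (-a) • z := by
    intro x z a h
    rw [← lie_skew, h, neg_smul]
  have dbl : ∀ (x z : A) (a : ℂ), ⁅z, x⁆ = a • z → ⁅x, ⁅x, z⁆⁆ = (a * a) • z := by
    intro x z a h
    rw [flip x z a h, lie_smul, flip x z a h, smul_smul]
    congr 1; ring
  have vanish : ∀ (z s φ : A) (a : ℂ), ⁅s, φ⁆ = a • s → ⁅z, s⁆ = 0 → ⁅z, ⁅s, φ⁆⁆ = 0 := by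
    intro z s φ a h1 h2
    rw [h1, lie_smul, h2, smul_zero]
  have lieone : ∀ a : A, ⁅a, (1 : A)⁆ = 0 := by intro a; simp [Ring.lie_def]
  -- the 24 single brackets
  have bZ1X0 := bz Y1 (U2 * W) X0 _ cY1X0 brX0
  have bZ1X1 := bz Y1 (U2 * W) X1 _ cY1X1 brX1
  have bZ1X2 := bz Y1 (U2 * W) X2 _ cY1X2 brX2
  have bZ1X3 := bz Y1 (U2 * W) X3 _ cY1X3 brX3
  have bZ2X0 := bz Y2 (U2 * W) X0 _ cY2X0 brX0
  have bZ2X1 := bz Y2 (U2 * W) X1 _ cY2X1 brX1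
  have bZ2X2 := bz Y2 (U2 * W) X2 _ cY2X2 brX2
  have bZ2X3 := bz Y2 (U2 * W) X3 _ cY2X3 brX3
  have bZ3X0 := bz Y3 (U3 * W) X0 _ cY3X0 br3X0
  have bZ3X1 := bz Y3 (U3 * W) X1 _ cY3X1 br3X1
  have bZ3X2 := bz Y3 (U3 * W) X2 _ cY3X2 br3X2
  have bZ3X3 := bz Y3 (U3 * W) X3 _ cY3X3 br3X3
  have bS1X0 := bz Y1 (star U2 * star W) X0 _ cY1X0 bqX0
  have bS1X1 := bz Y1 (star U2 * star W) X1 _ cY1X1 bqX1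
  have bS1X2 := bz Y1 (star U2 * star W) X2 _ cY1X2 bqX2
  have bS1X3 := bz Y1 (star U2 * star W) X3 _ cY1X3 bqX3
  have bS2X0 := bz Y2 (star U2 * star W) X0 _ cY2X0 bqX0
  have bS2X1 := bz Y2 (star U2 * star W) X1 _ cY2X1 bqX1
  have bS2X2 := bz Y2 (star U2 * star W) X2 _ cY2X2 bqX2
  have bS2X3 := bz Y2 (star U2 * star W) X3 _ cY2X3 bqX3
  have bS3X0 := bz Y3 (star U3 * star W) X0 _ cY3X0 bq3X0
  have bS3X1 := bz Y3 (star U3 * star W) X1 _ cY3X1 bq3X1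
  have bS3X2 := bz Y3 (star U3 * star W) X2 _ cY3X2 bq3X2
  have bS3X3 := bz Y3 (star U3 * star W) X3 _ cY3X3 bq3X3
  -- zero brackets between Z and its star
  have zZ1S1 : ⁅Y1 * (U2 * W), Y1 * (star U2 * star W)⁆ = 0 := by
    rw [lie_mul_mul' Y1 (U2 * W) Y1 (star U2 * star W) crY1 cqY1 c_rq, lie_self, zero_mul]
  have zS1Z1 : ⁅Y1 * (star U2 * star W), Y1 * (U2 * W)⁆ = 0 := by
    rw [lie_mul_mul' Y1 (star U2 * star W) Y1 (U2 * W) cqY1 crY1 c_rq.symm, lie_self, zero_mul]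
  have zZ2S2 : ⁅Y2 * (U2 * W), Y2 * (star U2 * star W)⁆ = 0 := by
    rw [lie_mul_mul' Y2 (U2 * W) Y2 (star U2 * star W) crY2 cqY2 c_rq, lie_self, zero_mul]
  have zS2Z2 : ⁅Y2 * (star U2 * star W), Y2 * (U2 * W)⁆ = 0 := by
    rw [lie_mul_mul' Y2 (star U2 * star W) Y2 (U2 * W) cqY2 crY2 c_rq.symm, lie_self, zero_mul]
  have zZ3S3 : ⁅Y3 * (U3 * W), Y3 * (star U3 * star W)⁆ = 0 := by
    rw [lie_mul_mul' Y3 (U3 * W) Y3 (star U3 * star W) cr3Y3 cq3Y3 c_r3q3, lie_self, zero_mul]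
  have zS3Z3 : ⁅Y3 * (star U3 * star W), Y3 * (U3 * W)⁆ = 0 := by
    rw [lie_mul_mul' Y3 (star U3 * star W) Y3 (U3 * W) cq3Y3 cr3Y3 c_r3q3.symm, lie_self, zero_mul]
  -- reduction of the P/Q sum
  have hPQ : ∀ (α : Fin 3) (φ : A), ⁅P α, ⁅P α, φ⁆⁆ + ⁅Q α, ⁅Q α, φ⁆⁆
      = (2 : ℂ)⁻¹ • (⁅Z' α, ⁅star (Z' α), φ⁆⁆ + ⁅star (Z' α), ⁅Z' α, φ⁆⁆) := by
    intro α φ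
    rw [hP α, hQ α]
    exact pq_reduce _ _ _
  have hBox2 : ∀ φ : A, Box φ = -⁅X0, ⁅X0, φ⁆⁆ + ⁅X1, ⁅X1, φ⁆⁆ + ⁅X2, ⁅X2, φ⁆⁆ + ⁅X3, ⁅X3, φ⁆⁆
      + (2 : ℂ)⁻¹ • ((⁅Y1 * (U2 * W), ⁅Y1 * (star U2 * star W), φ⁆⁆
            + ⁅Y1 * (star U2 * star W), ⁅Y1 * (U2 * W), φ⁆⁆)
        + (⁅Y2 * (U2 * W), ⁅Y2 * (star U2 * star W), φ⁆⁆
            + ⁅Y2 * (star U2 * star W), ⁅Y2 * (U2 * W), φ⁆⁆)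
        + (⁅Y3 * (U3 * W), ⁅Y3 * (star U3 * star W), φ⁆⁆
            + ⁅Y3 * (star U3 * star W), ⁅Y3 * (U3 * W), φ⁆⁆)) := by
    intro φ
    rw [hBox φ, Fin.sum_univ_three, hPQ 0 φ, hPQ 1 φ, hPQ 2 φ, hZ0, hZ1, hZ2,
      hsZ0, hsZ1, hsZ2, ← smul_add, ← smul_add]
  -- scalar facts
  have hkC : (t1 : ℂ) ^ 2 - (t0 : ℂ) ^ 2 = -((ξ : ℂ) ^ 2 + (ξc : ℂ) ^ 2) := by
    have := congrArg (Complex.ofReal) hk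
    push_cast at this
    exact this
  have hcC : 2 * (c : ℂ) ^ 2 = (ξ : ℂ) ^ 2 := by
    have := congrArg (Complex.ofReal) hcξ
    push_cast at this
    exact this
  -- Box on the four commutative coordinates
  have BX0 : Box X0 = 0 := by
    rw [hBox2 X0, lie_self, lie_zero, neg_zero]
    have pX1X0 : ⁅X1, X0⁆ = -((Complex.I * (θ : ℂ)) • (1 : A)) := by
      rw [← lie_skew, hplane]
    rw [pX1X0, lie_neg, lie_smul, lieone X1, smul_zero, neg_zero,
      cX2X0.lie_eq, lie_zero, cX3X0.lie_eq, lie_zero,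
      vanish _ _ _ _ bS1X0 zZ1S1, vanish _ _ _ _ bZ1X0 zS1Z1,
      vanish _ _ _ _ bS2X0 zZ2S2, vanish _ _ _ _ bZ2X0 zS2Z2,
      vanish _ _ _ _ bS3X0 zZ3S3, vanish _ _ _ _ bZ3X0 zS3Z3]
    simp
  have BX1 : Box X1 = 0 := by
    rw [hBox2 X1, hplane, lie_smul, lieone X0, smul_zero, neg_zero, lie_self, lie_zero,
      cX2X1.lie_eq, lie_zero, cX3X1.lie_eq, lie_zero,
      vanish _ _ _ _ bS1X1 zZ1S1, vanish _ _ _ _ bZ1X1 zS1Z1,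
      vanish _ _ _ _ bS2X1 zZ2S2, vanish _ _ _ _ bZ2X1 zS2Z2,
      vanish _ _ _ _ bS3X1 zZ3S3, vanish _ _ _ _ bZ3X1 zS3Z3]
    simp
  have BX2 : Box X2 = 0 := by
    rw [hBox2 X2, cX2X0.symm.lie_eq, lie_zero, neg_zero, cX2X1.symm.lie_eq, lie_zero,
      lie_self, lie_zero, cX2X3.symm.lie_eq, lie_zero,
      vanish _ _ _ _ bS1X2 zZ1S1, vanish _ _ _ _ bZ1X2 zS1Z1,
      vanish _ _ _ _ bS2X2 zZ2S2, vanish _ _ _ _ bZ2X2 zS2Z2,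
      vanish _ _ _ _ bS3X2 zZ3S3, vanish _ _ _ _ bZ3X2 zS3Z3]
    simp
  have BX3 : Box X3 = 0 := by
    rw [hBox2 X3, cX3X0.symm.lie_eq, lie_zero, neg_zero, cX3X1.symm.lie_eq, lie_zero,
      cX2X3.lie_eq, lie_zero, lie_self, lie_zero,
      vanish _ _ _ _ bS1X3 zZ1S1, vanish _ _ _ _ bZ1X3 zS1Z1,
      vanish _ _ _ _ bS2X3 zZ2S2, vanish _ _ _ _ bZ2X3 zS2Z2,
      vanish _ _ _ _ bS3X3 zZ3S3, vanish _ _ _ _ bZ3X3 zS3Z3]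
    simp
  -- Box on the twisted coordinates
  have BZa : Box (Y1 * (U2 * W)) = 0 := by
    have d2a := double_bracket' Y2 Y1 Y3 (U2 * W) (star U2 * star W) (U2 * W)
      (-(Complex.I * (c : ℂ))) (Complex.I * (c : ℂ)) hY21 hY23 h_rq
      cqY1 cqY2 crY2 crY3 c_rq.symm c_rq (Commute.refl _)
    have d2b := double_bracket' Y2 Y1 Y3 (star U2 * star W) (U2 * W) (U2 * W)
      (-(Complex.I * (c : ℂ))) (Complex.I * (c : ℂ)) hY21 hY23 h_qr
      crY1 crY2 crY2 cqY3 (Commute.refl _) c_rq.symm c_rq.symm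
    have d3a := double_bracket' Y3 Y1 Y2 (U3 * W) (star U3 * star W) (U2 * W)
      (Complex.I * (c : ℂ)) (-(Complex.I * (c : ℂ))) hY31 hY32 h_r3q3
      cq3Y1 cq3Y3 crY3 cr3Y2 c_rq3.symm c_r3q3 c_rr3.symm
    have d3b := double_bracket' Y3 Y1 Y2 (star U3 * star W) (U3 * W) (U2 * W)
      (Complex.I * (c : ℂ)) (-(Complex.I * (c : ℂ))) hY31 hY32 h_q3r3
      cr3Y1 cr3Y3 crY3 cq3Y2 c_rr3.symm c_r3q3.symm c_rq3.symm
    rw [hBox2, dbl X0 _ _ bZ1X0, dbl X1 _ _ bZ1X1, dbl X2 _ _ bZ1X2, dbl X3 _ _ bZ1X3,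
      zS1Z1, lie_zero, lie_self, lie_zero, d2a, d2b, d3a, d3b]
    match_scalars
    linear_combination hkC + hcC + (-2 * (c : ℂ) ^ 2) * Complex.I_sq
  have BZb : Box (Y2 * (U2 * W)) = 0 := by
    have d1a := double_bracket' Y1 Y2 Y3 (U2 * W) (star U2 * star W) (U2 * W)
      (Complex.I * (c : ℂ)) (-(Complex.I * (c : ℂ))) hY12 hY13 h_rq
      cqY2 cqY1 crY1 crY3 c_rq.symm c_rq (Commute.refl _)
    have d1b := double_bracket' Y1 Y2 Y3 (star U2 * star W) (U2 * W) (U2 * W)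
      (Complex.I * (c : ℂ)) (-(Complex.I * (c : ℂ))) hY12 hY13 h_qr
      crY2 crY1 crY1 cqY3 (Commute.refl _) c_rq.symm c_rq.symm
    have d3a := double_bracket' Y3 Y2 Y1 (U3 * W) (star U3 * star W) (U2 * W)
      (-(Complex.I * (c : ℂ))) (Complex.I * (c : ℂ)) hY32 hY31 h_r3q3
      cq3Y2 cq3Y3 crY3 cr3Y1 c_rq3.symm c_r3q3 c_rr3.symm
    have d3b := double_bracket' Y3 Y2 Y1 (star U3 * star W) (U3 * W) (U2 * W)
      (-(Complex.I * (c : ℂ))) (Complex.I * (c : ℂ)) hY32 hY31 h_q3r3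
      cr3Y2 cr3Y3 crY3 cq3Y1 c_rr3.symm c_r3q3.symm c_rq3.symm
    rw [hBox2, dbl X0 _ _ bZ2X0, dbl X1 _ _ bZ2X1, dbl X2 _ _ bZ2X2, dbl X3 _ _ bZ2X3,
      d1a, d1b, zS2Z2, lie_zero, lie_self, lie_zero, d3a, d3b]
    match_scalars
    linear_combination hkC + hcC + (-2 * (c : ℂ) ^ 2) * Complex.I_sq
  have BZc : Box (Y3 * (U3 * W)) = 0 := by
    have d1a := double_bracket' Y1 Y3 Y2 (U2 * W) (star U2 * star W) (U3 * W)
      (-(Complex.I * (c : ℂ))) (Complex.I * (c : ℂ)) hY13 hY12 h_rq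
      cqY3 cqY1 cr3Y1 crY2 c_qr3 c_rq c_rr3
    have d1b := double_bracket' Y1 Y3 Y2 (star U2 * star W) (U2 * W) (U3 * W)
      (-(Complex.I * (c : ℂ))) (Complex.I * (c : ℂ)) hY13 hY12 h_qr
      crY3 crY1 cr3Y1 cqY2 c_rr3 c_rq.symm c_qr3
    have d2a := double_bracket' Y2 Y3 Y1 (U2 * W) (star U2 * star W) (U3 * W)
      (Complex.I * (c : ℂ)) (-(Complex.I * (c : ℂ))) hY23 hY21 h_rq
      cqY3 cqY2 cr3Y2 crY1 c_qr3 c_rq c_rr3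
    have d2b := double_bracket' Y2 Y3 Y1 (star U2 * star W) (U2 * W) (U3 * W)
      (Complex.I * (c : ℂ)) (-(Complex.I * (c : ℂ))) hY23 hY21 h_qr
      crY3 crY2 cr3Y2 cqY1 c_rr3 c_rq.symm c_qr3
    rw [hBox2, dbl X0 _ _ bZ3X0, dbl X1 _ _ bZ3X1, dbl X2 _ _ bZ3X2, dbl X3 _ _ bZ3X3,
      d1a, d1b, d2a, d2b, zS3Z3, lie_zero, lie_self, lie_zero]
    match_scalars
    linear_combination hkC + hcC + (-2 * (c : ℂ) ^ 2) * Complex.I_sq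
  have BZ' : ∀ α, Box (Z' α) = 0 := by
    intro α
    fin_cases α
    · show Box (Z' 0) = 0; rw [hZ0]; exact BZa
    · show Box (Z' 1) = 0; rw [hZ1]; exact BZb
    · show Box (Z' 2) = 0; rw [hZ2]; exact BZc
  -- linearity and star-compatibility of Box
  have hBoxadd : ∀ φ ψ : A, Box (φ + ψ) = Box φ + Box ψ := by
    intro φ ψ
    simp only [hBox, lie_add, add_add_add_comm, Finset.sum_add_distrib, neg_add]
    try abel
  have hBoxsub : ∀ φ ψ : A, Box (φ - ψ) = Box φ - Box ψ := by
    intro φ ψ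
    simp only [hBox, lie_sub, sub_add_sub_comm, Finset.sum_sub_distrib, neg_sub]
    try abel
  have hBoxsmul : ∀ (s : ℂ) (φ : A), Box (s • φ) = s • Box φ := by
    intro s φ
    simp only [hBox, lie_smul, smul_add, smul_neg, Finset.smul_sum]
  have hBoxstar : ∀ φ : A, Box (star φ) = star (Box φ) := by
    intro φ
    rw [hBox2 (star φ), hBox2 φ, star_add, star_add, star_add, star_add, star_neg, star_smul,
      star_add, star_add,
      star_double_lie_sa X0 _ hX0sa, star_double_lie_sa X1 _ hX1sa,
      star_double_lie_sa X2 _ hX2sa, star_double_lie_sa X3 _ hX3sa,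
      star_double_lie' _ _ _ hsZ0, star_double_lie' _ _ _ hsZ1, star_double_lie' _ _ _ hsZ2]
    norm_num
  have BS' : ∀ α, Box (star (Z' α)) = 0 := by
    intro α
    rw [hBoxstar, BZ' α, star_zero]
  refine ⟨BX0, BX1, BX2, BX3, fun α => ⟨?_, ?_⟩⟩
  · rw [hP α, hBoxsmul, hBoxadd, BZ' α, BS' α, add_zero, smul_zero]
  · rw [hQ α, hBoxsmul, hBoxsub, BZ' α, BS' α, sub_zero, smul_zero]
end

section
/- Let A be a complex *-algebra containing: two mutually commuting fuzzy spheres, i.e. self-adjoint Y_L^1,Y_L^2,Y_L^3 and Y_R^1,Y_R^2,Y_R^3 with ⁅Y_L^a,Y_L^b⁆ = i·c_L·Σ_d ε_{abd}Y_L^d, ⁅Y_R^a,Y_R^b⁆ = i·c_R·Σ_d ε_{abd}Y_R^d, ⁅Y_L^a,Y_R^b⁆ = 0, and 2c_L² = 2c_R² = ξ²; self-adjoint X̄^0, X̄^1, X̄^2, X̄^3 with ⁅X̄^μ,X̄^ν⁆ = i·θ^{μν}·1 for a real antisymmetric matrix θ^{μν}, commuting with all Y's; and a unitary W commuting with all Y's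 and satisfying ⁅W,X̄^μ⁆ = t^μ·W for real t^0,…,t^3. Set Z̃^α = Y_L^α + i·Y_R^α and Z^α = Z̃^α·W for α = 1,2,3, with self-adjoint components X^4,…,X^9 given by the real and imaginary parts of the Z^α, and X^μ = X̄^μ for μ = 0,…,3. If −(t^0)² + (t^1)² + (t^2)² + (t^3)² = −ξ², then □X^a = 0 for all ten coordinates, where □φ = −⁅X^0,⁅X^0,φ⁆⁆ + Σ_{b=1}^{9}⁅X^b,⁅X^b,φ⁆⁆. This is the ℝ⁴ × S² × S² solution of the IKKT model: extra-dimensional fuzzy spheres stabilized by angular momentum, without modifying the action. -/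
section stmt13aux
variable {A : Type*} [Ring A]

lemma stmt13aux_lie_star [StarRing A] (a b : A) : star ⁅a,b⁆ = ⁅star b, star a⁆ := by
  simp [Ring.lie_def, star_sub, star_mul]

lemma stmt13aux_genMul (a b c : A) : ⁅a*b, c⁆ = a*⁅b,c⁆ + ⁅a,c⁆*b := by
  simp only [Ring.lie_def]; noncomm_ring

lemma stmt13aux_genR1 (n c w : A) (h : w * c = c * w) : ⁅n * w, c⁆ = ⁅n, c⁆ * w := by
  simp only [Ring.lie_def, sub_mul, mul_assoc, h]

lemma stmt13aux_genP1 (n n' w : A) (h : w * n' = n' * w) : (n*w)*(n'*w) = (n*n')*(w*w) := by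
  rw [mul_assoc, ← mul_assoc w, h, mul_assoc, ← mul_assoc, ← mul_assoc]

lemma stmt13aux_genL1 (n n' w : A) (h : w * n = n * w) (h' : w * n' = n' * w) :
    ⁅n*w, n'*w⁆ = ⁅n,n'⁆ * (w*w) := by
  rw [Ring.lie_def, Ring.lie_def, sub_mul, stmt13aux_genP1 n n' w h', stmt13aux_genP1 n' n w h]

lemma stmt13aux_genP2 (m c v w : A) (hvc : v*c = c*v) (hvw : v*w = 1) : (m*v)*(c*w) = m*c := by
  rw [mul_assoc, ← mul_assoc v, hvc, mul_assoc c, hvw, mul_one]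

lemma stmt13aux_genL2 (m c v w : A) (hvc : v*c = c*v) (hwm : w*m = m*w) (hvw : v*w = 1)
    (hwv : w*v = 1) : ⁅m*v, c*w⁆ = ⁅m, c⁆ := by
  rw [Ring.lie_def, Ring.lie_def, stmt13aux_genP2 m c v w hvc hvw, stmt13aux_genP2 c m w v hwm hwv]

lemma stmt13aux_genP3a (m c v w : A) (hvc : v*c = c*v) (hvw : v*w = 1) :
    (m*v)*(c*(w*w)) = (m*c)*w := by
  rw [mul_assoc, ← mul_assoc v, hvc, mul_assoc c, ← mul_assoc v, hvw, one_mul, ← mul_assoc]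

lemma stmt13aux_genP3b (m c v w : A) (hwm : w*m = m*w) (hwv : w*v = 1) :
    (c*(w*w))*(m*v) = (c*m)*w := by
  have h1 : (w*w)*(m*v) = m*w := by
    rw [mul_assoc, ← mul_assoc w m, hwm, mul_assoc m, hwv, mul_one, hwm]
  rw [mul_assoc, h1, ← mul_assoc]

lemma stmt13aux_genR2 (m c v w : A) (hvc : v*c = c*v) (hwm : w*m = m*w) (hvw : v*w = 1)
    (hwv : w*v = 1) : ⁅m*v, c*(w*w)⁆ = ⁅m, c⁆ * w := by
  rw [Ring.lie_def, Ring.lie_def, sub_mul, stmt13aux_genP3a m c v w hvc hvw,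
    stmt13aux_genP3b m c v w hwm hwv]

lemma stmt13aux_keyStar [StarRing A] (a φ : A) (ha : star a = a) :
    star ⁅a,⁅a,φ⁆⁆ = ⁅a,⁅a, star φ⁆⁆ := by
  simp only [Ring.lie_def, star_sub, star_mul, ha]; noncomm_ring

end stmt13aux

/-- the `ℝ⁴ × S² × S²` solution of the IKKT model.  Two mutually
commuting fuzzy spheres `Y_L, Y_R` (`2c_L² = 2c_R² = ξ²`), a 4-dimensional
quantum plane `⁅X̄ᵘ,X̄ᵛ⁆ = iθᵘᵛ•1` (θ real antisymmetric) commuting with the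
spheres, and a unitary twist `W` with `⁅W,X̄ᵘ⁆ = tᵘ•W`.  With
`Z̃ᵅ = Y_Lᵅ + i Y_Rᵅ`, `Zᵅ = Z̃ᵅ W` and their self-adjoint components, if
`-(t⁰)² + (t¹)² + (t²)² + (t³)² = -ξ²`, then all ten coordinates satisfy
`□Xᵃ = 0` for the Minkowski matrix Laplacian. -/
theorem stmt13 (A : Type*) [Ring A] [Algebra ℂ A] [StarRing A] [StarModule ℂ A]
    (cL cR ξ : ℝ) (YL YR : Fin 3 → A)
    -- two mutually commuting fuzzy spheres
    (hYLsa : ∀ a, star (YL a) = YL a) (hYRsa : ∀ a, star (YR a) = YR a)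
    (hL12 : ⁅YL 0, YL 1⁆ = (Complex.I * (cL : ℂ)) • YL 2)
    (hL23 : ⁅YL 1, YL 2⁆ = (Complex.I * (cL : ℂ)) • YL 0)
    (hL31 : ⁅YL 2, YL 0⁆ = (Complex.I * (cL : ℂ)) • YL 1)
    (hR12 : ⁅YR 0, YR 1⁆ = (Complex.I * (cR : ℂ)) • YR 2)
    (hR23 : ⁅YR 1, YR 2⁆ = (Complex.I * (cR : ℂ)) • YR 0)
    (hR31 : ⁅YR 2, YR 0⁆ = (Complex.I * (cR : ℂ)) • YR 1)
    (hLR : ∀ a b, ⁅YL a, YR b⁆ = 0)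
    (hcL : 2 * cL ^ 2 = ξ ^ 2) (hcR : 2 * cR ^ 2 = ξ ^ 2)
    -- 4-dimensional quantum plane, commuting with the spheres
    (Xb : Fin 4 → A) (θm : Fin 4 → Fin 4 → ℝ)
    (hXbsa : ∀ μ, star (Xb μ) = Xb μ)
    (hθanti : ∀ μ ν, θm ν μ = -θm μ ν)
    (hplane : ∀ μ ν, ⁅Xb μ, Xb ν⁆ = (Complex.I * (θm μ ν : ℂ)) • (1 : A))
    (hXbY : ∀ μ a, Commute (Xb μ) (YL a) ∧ Commute (Xb μ) (YR a))
    -- unitary twist W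
    (W : A) (t : Fin 4 → ℝ)
    (hWWs : W * star W = 1) (hWsW : star W * W = 1)
    (hWY : ∀ a, Commute W (YL a) ∧ Commute W (YR a))
    (hWXb : ∀ μ, ⁅W, Xb μ⁆ = (t μ : ℂ) • W)
    -- twisted coordinates and their self-adjoint components
    (Z : Fin 3 → A)
    (hZ : ∀ α, Z α = (YL α + Complex.I • YR α) * W)
    (P Q : Fin 3 → A)
    (hP : ∀ α, P α = (2 : ℂ)⁻¹ • (Z α + star (Z α)))
    (hQ : ∀ α, Q α = ((2 : ℂ) * Complex.I)⁻¹ • (Z α - star (Z α)))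
    (Box : A → A)
    (hBox : ∀ φ, Box φ = -⁅Xb 0, ⁅Xb 0, φ⁆⁆ + ⁅Xb 1, ⁅Xb 1, φ⁆⁆
        + ⁅Xb 2, ⁅Xb 2, φ⁆⁆ + ⁅Xb 3, ⁅Xb 3, φ⁆⁆
        + ∑ α, (⁅P α, ⁅P α, φ⁆⁆ + ⁅Q α, ⁅Q α, φ⁆⁆))
    (hk : -(t 0) ^ 2 + (t 1) ^ 2 + (t 2) ^ 2 + (t 3) ^ 2 = -ξ ^ 2) :
    (∀ μ, Box (Xb μ) = 0) ∧ (∀ α, Box (P α) = 0 ∧ Box (Q α) = 0) := by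
  classical
  letI : LieRing A := LieRing.ofAssociativeRing
  -- complex number facts
  have i2 : Complex.I^2 = -1 := Complex.I_sq
  have i3 : Complex.I^3 = -Complex.I := by rw [pow_succ, i2]; ring
  have i5 : Complex.I^5 = Complex.I := by rw [pow_succ, Complex.I_pow_four, one_mul]
  have i6 : Complex.I^6 = -1 := by rw [pow_succ, i5, Complex.I_mul_I]
  -- bracket tables
  have hRL : ∀ a b, ⁅YR a, YL b⁆ = 0 := fun a b => by rw [← lie_skew, hLR, neg_zero]
  have hL21 : ⁅YL 1, YL 0⁆ = -((Complex.I * (cL : ℂ)) • YL 2) := by rw [← lie_skew, hL12]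
  have hL32 : ⁅YL 2, YL 1⁆ = -((Complex.I * (cL : ℂ)) • YL 0) := by rw [← lie_skew, hL23]
  have hL13 : ⁅YL 0, YL 2⁆ = -((Complex.I * (cL : ℂ)) • YL 1) := by rw [← lie_skew, hL31]
  have hR21 : ⁅YR 1, YR 0⁆ = -((Complex.I * (cR : ℂ)) • YR 2) := by rw [← lie_skew, hR12]
  have hR32 : ⁅YR 2, YR 1⁆ = -((Complex.I * (cR : ℂ)) • YR 0) := by rw [← lie_skew, hR23]
  have hR13 : ⁅YR 0, YR 2⁆ = -((Complex.I * (cR : ℂ)) • YR 1) := by rw [← lie_skew, hR31]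
  -- commutation facts
  have cWsL : ∀ a, Commute (star W) (YL a) := fun a => by
    have h := ((hWY a).1).star_star; rwa [hYLsa] at h
  have cWsR : ∀ a, Commute (star W) (YR a) := fun a => by
    have h := ((hWY a).2).star_star; rwa [hYRsa] at h
  have cWN : ∀ α, Commute W (YL α + Complex.I • YR α) :=
    fun α => ((hWY α).1).add_right (((hWY α).2).smul_right Complex.I)
  have cWM : ∀ α, Commute W (YL α - Complex.I • YR α) :=
    fun α => ((hWY α).1).sub_right (((hWY α).2).smul_right Complex.I)
  have cWsN : ∀ α, Commute (star W) (YL α + Complex.I • YR α) :=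
    fun α => (cWsL α).add_right ((cWsR α).smul_right Complex.I)
  have cWsM : ∀ α, Commute (star W) (YL α - Complex.I • YR α) :=
    fun α => (cWsL α).sub_right ((cWsR α).smul_right Complex.I)
  have cLie : ∀ (v x y : A), Commute v x → Commute v y → Commute v ⁅x,y⁆ := by
    intro v x y h1 h2
    rw [Ring.lie_def]; exact (h1.mul_right h2).sub_right (h2.mul_right h1)
  have cNXb : ∀ α ν, Commute (YL α + Complex.I • YR α) (Xb ν) :=
    fun α ν => ((hXbY ν α).1.symm).add_left (((hXbY ν α).2.symm).smul_left Complex.I)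
  -- star of Z
  have hZs : ∀ α, star (Z α) = (YL α - Complex.I • YR α) * star W := by
    intro α
    rw [hZ, star_mul, star_add, star_smul, hYLsa, hYRsa, Complex.star_def, Complex.conj_I,
      neg_smul, ← sub_eq_add_neg, (cWsM α).eq]
  -- brackets of Z with Xb
  have hZXb : ∀ α ν, ⁅Z α, Xb ν⁆ = (t ν : ℂ) • Z α := by
    intro α ν
    rw [hZ, stmt13aux_genMul, hWXb ν, (cNXb α ν).lie_eq, zero_mul, add_zero, mul_smul_comm]
  have hXbZ : ∀ ν α, ⁅Xb ν, Z α⁆ = -((t ν : ℂ) • Z α) := by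
    intro ν α; rw [← lie_skew, hZXb]
  have hZsXb : ∀ α ν, ⁅Xb ν, star (Z α)⁆ = (t ν : ℂ) • star (Z α) := by
    intro α ν
    have h := congrArg star (hZXb α ν)
    rw [stmt13aux_lie_star, hXbsa, star_smul, Complex.star_def, Complex.conj_ofReal] at h
    exact h
  have hXbZs : ∀ α ν, ⁅star (Z α), Xb ν⁆ = -((t ν : ℂ) • star (Z α)) := by
    intro α ν; rw [← lie_skew, hZsXb]
  -- brackets among Z's reduce to Y level
  have hMZ : ∀ α γ, ⁅star (Z α), Z γ⁆
      = ⁅YL α - Complex.I • YR α, YL γ + Complex.I • YR γ⁆ := by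
    intro α γ
    rw [hZs α, hZ γ]
    exact stmt13aux_genL2 _ _ _ _ ((cWsN γ).eq) ((cWM α).eq) hWsW hWWs
  have hZZ : ∀ α γ, ⁅Z α, Z γ⁆
      = ⁅YL α + Complex.I • YR α, YL γ + Complex.I • YR γ⁆ * (W*W) := by
    intro α γ
    rw [hZ α, hZ γ]
    exact stmt13aux_genL1 _ _ _ ((cWN α).eq) ((cWN γ).eq)
  have hDred : ∀ α γ, ⁅Z α, ⁅star (Z α), Z γ⁆⁆ + ⁅star (Z α), ⁅Z α, Z γ⁆⁆
      = (⁅YL α + Complex.I • YR α, ⁅YL α - Complex.I • YR α, YL γ + Complex.I • YR γ⁆⁆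
        + ⁅YL α - Complex.I • YR α, ⁅YL α + Complex.I • YR α, YL γ + Complex.I • YR γ⁆⁆)
        * W := by
    intro α γ
    rw [hMZ, hZZ, hZs α, hZ α,
      stmt13aux_genR1 _ _ _ ((cLie W _ _ (cWM α) (cWN γ)).eq),
      stmt13aux_genR2 _ _ _ _ ((cLie (star W) _ _ (cWsN α) (cWsN γ)).eq) ((cWM α).eq) hWsW hWWs,
      ← add_mul]
  -- the Y-level computations
  have hYdiag : ∀ α : Fin 3,
      ⁅YL α + Complex.I • YR α, ⁅YL α - Complex.I • YR α, YL α + Complex.I • YR α⁆⁆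
      + ⁅YL α - Complex.I • YR α, ⁅YL α + Complex.I • YR α, YL α + Complex.I • YR α⁆⁆
      = 0 := by
    intro α
    simp only [lie_add, add_lie, lie_sub, sub_lie, lie_smul, smul_lie, lie_self,
      lie_zero, zero_lie, lie_neg, neg_lie, smul_zero, zero_add, add_zero, hLR, hRL,
      smul_smul, smul_neg, neg_smul, sub_zero, zero_sub, neg_neg, sub_neg_eq_add, sub_self]
    try abel
  have hYoff : ∀ α γ : Fin 3,
      ((α = 0 ∧ γ = 1) ∨ (α = 0 ∧ γ = 2) ∨ (α = 1 ∧ γ = 0) ∨ (α = 1 ∧ γ = 2)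
        ∨ (α = 2 ∧ γ = 0) ∨ (α = 2 ∧ γ = 1)) →
      ⁅YL α + Complex.I • YR α, ⁅YL α - Complex.I • YR α, YL γ + Complex.I • YR γ⁆⁆
      + ⁅YL α - Complex.I • YR α, ⁅YL α + Complex.I • YR α, YL γ + Complex.I • YR γ⁆⁆
      = (2*(cL:ℂ)^2) • YL γ + (2*(cR:ℂ)^2*Complex.I) • YR γ := by
    rintro α γ (⟨rfl,rfl⟩|⟨rfl,rfl⟩|⟨rfl,rfl⟩|⟨rfl,rfl⟩|⟨rfl,rfl⟩|⟨rfl,rfl⟩) <;>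
    simp only [lie_add, add_lie, lie_sub, sub_lie, lie_smul, smul_lie, lie_self,
      lie_zero, zero_lie, lie_neg, neg_lie, smul_zero, zero_add, add_zero, hLR, hRL,
      hL12, hL23, hL31, hL21, hL32, hL13, hR12, hR23, hR31, hR21, hR32, hR13,
      smul_smul, smul_neg, neg_smul, sub_zero, zero_sub, neg_neg, sub_neg_eq_add] <;>
    match_scalars <;> (try ring1) <;> (try ring_nf) <;>
      (try simp only [i2, i3, i5, i6, Complex.I_pow_four, neg_mul, one_mul, neg_neg,
        mul_one]) <;>
      (try ring1)
  have hDdiag : ∀ α, ⁅Z α, ⁅star (Z α), Z α⁆⁆ + ⁅star (Z α), ⁅Z α, Z α⁆⁆ = 0 :=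
    fun α => by rw [hDred α α, hYdiag α, zero_mul]
  have hDoff : ∀ α γ : Fin 3,
      ((α = 0 ∧ γ = 1) ∨ (α = 0 ∧ γ = 2) ∨ (α = 1 ∧ γ = 0) ∨ (α = 1 ∧ γ = 2)
        ∨ (α = 2 ∧ γ = 0) ∨ (α = 2 ∧ γ = 1)) →
      ⁅Z α, ⁅star (Z α), Z γ⁆⁆ + ⁅star (Z α), ⁅Z α, Z γ⁆⁆
      = (2*(cL:ℂ)^2) • (YL γ * W) + (2*(cR:ℂ)^2*Complex.I) • (YR γ * W) := by
    intro α γ h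
    rw [hDred α γ, hYoff α γ h, add_mul, smul_mul_assoc, smul_mul_assoc]
  -- P,Q double brackets in terms of Z
  have hQc : ((2:ℂ)*Complex.I)⁻¹ = -((2:ℂ)⁻¹*Complex.I) := by
    rw [mul_inv, Complex.inv_I]; ring
  have hPQ : ∀ (α : Fin 3) (φ : A), ⁅P α, ⁅P α, φ⁆⁆ + ⁅Q α, ⁅Q α, φ⁆⁆
      = (2:ℂ)⁻¹ • (⁅Z α, ⁅star (Z α), φ⁆⁆ + ⁅star (Z α), ⁅Z α, φ⁆⁆) := by
    intro α φ
    rw [hP, hQ, hQc]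
    simp only [lie_smul, smul_lie, lie_add, add_lie, lie_sub, sub_lie, smul_smul, smul_add,
      smul_sub, neg_smul, smul_neg, lie_neg, neg_lie, neg_neg, sub_neg_eq_add]
    match_scalars <;> (try ring1) <;> (try ring_nf) <;>
      (try simp only [i2, i3, i5, i6, Complex.I_pow_four, neg_mul, one_mul, neg_neg,
        mul_one]) <;>
      (try ring1)
  -- Box with expanded sum
  have hBox' : ∀ φ, Box φ = -⁅Xb 0, ⁅Xb 0, φ⁆⁆ + ⁅Xb 1, ⁅Xb 1, φ⁆⁆
      + ⁅Xb 2, ⁅Xb 2, φ⁆⁆ + ⁅Xb 3, ⁅Xb 3, φ⁆⁆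
      + ((⁅P 0, ⁅P 0, φ⁆⁆ + ⁅Q 0, ⁅Q 0, φ⁆⁆) + (⁅P 1, ⁅P 1, φ⁆⁆ + ⁅Q 1, ⁅Q 1, φ⁆⁆)
        + (⁅P 2, ⁅P 2, φ⁆⁆ + ⁅Q 2, ⁅Q 2, φ⁆⁆)) := by
    intro φ; rw [hBox, Fin.sum_univ_three]
  -- Box of the plane coordinates
  have BoxXb : ∀ μ, Box (Xb μ) = 0 := by
    intro μ
    have hplane0 : ∀ ν, ⁅Xb ν, ⁅Xb ν, Xb μ⁆⁆ = 0 := by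
      intro ν; rw [hplane ν μ, lie_smul]
      simp [Ring.lie_def]
    have hsph : ∀ α : Fin 3,
        ⁅Z α, ⁅star (Z α), Xb μ⁆⁆ + ⁅star (Z α), ⁅Z α, Xb μ⁆⁆ = 0 := by
      intro α
      have d1 : ⁅star (Z α), Z α⁆ = 0 := by
        rw [hMZ α α]
        simp only [lie_add, add_lie, lie_sub, sub_lie, lie_smul, smul_lie, lie_self,
          lie_zero, zero_lie, lie_neg, neg_lie, smul_zero, zero_add, add_zero, hLR, hRL,
          smul_smul, smul_neg, neg_smul, sub_zero, zero_sub, neg_neg, sub_self]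
      have d2 : ⁅Z α, star (Z α)⁆ = 0 := by rw [← lie_skew, d1, neg_zero]
      rw [hXbZs α μ, hZXb α μ, lie_neg, lie_smul, lie_smul, d1, d2]
      simp
    rw [hBox' (Xb μ), hPQ 0, hPQ 1, hPQ 2, hsph 0, hsph 1, hsph 2,
      hplane0 0, hplane0 1, hplane0 2, hplane0 3]
    simp
  -- casts
  have hkC : -((t 0 : ℂ))^2 + ((t 1 : ℂ))^2 + ((t 2 : ℂ))^2 + ((t 3 : ℂ))^2
      = -((ξ : ℂ))^2 := by exact_mod_cast hk
  have hcLC : 2*(cL:ℂ)^2 = (ξ:ℂ)^2 := by exact_mod_cast hcL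
  have hcRC : 2*(cR:ℂ)^2 = (ξ:ℂ)^2 := by exact_mod_cast hcR
  -- plane double brackets on Z
  have hXXZ : ∀ ν γ, ⁅Xb ν, ⁅Xb ν, Z γ⁆⁆ = ((t ν : ℂ)*(t ν : ℂ)) • Z γ := by
    intro ν γ
    rw [hXbZ ν γ, lie_neg, lie_smul, hXbZ ν γ, smul_neg, neg_neg, smul_smul]
  have hZsplit : ∀ γ, Z γ = YL γ * W + Complex.I • (YR γ * W) := fun γ => by
    rw [hZ, add_mul, smul_mul_assoc]
  -- Box of the twisted coordinates
  have BoxZ0 : Box (Z 0) = 0 := by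
    rw [hBox' (Z 0), hPQ 0, hPQ 1, hPQ 2, hXXZ 0 0, hXXZ 1 0, hXXZ 2 0, hXXZ 3 0,
      hDdiag 0, hDoff 1 0 (Or.inr (Or.inr (Or.inl ⟨rfl, rfl⟩))),
      hDoff 2 0 (Or.inr (Or.inr (Or.inr (Or.inr (Or.inl ⟨rfl, rfl⟩))))), hZsplit 0]
    match_scalars
    · linear_combination hkC + hcLC
    · linear_combination Complex.I * hkC + Complex.I * hcRC
  have BoxZ1 : Box (Z 1) = 0 := by
    rw [hBox' (Z 1), hPQ 0, hPQ 1, hPQ 2, hXXZ 0 1, hXXZ 1 1, hXXZ 2 1, hXXZ 3 1,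
      hDdiag 1, hDoff 0 1 (Or.inl ⟨rfl, rfl⟩),
      hDoff 2 1 (Or.inr (Or.inr (Or.inr (Or.inr (Or.inr ⟨rfl, rfl⟩))))), hZsplit 1]
    match_scalars
    · linear_combination hkC + hcLC
    · linear_combination Complex.I * hkC + Complex.I * hcRC
  have BoxZ2 : Box (Z 2) = 0 := by
    rw [hBox' (Z 2), hPQ 0, hPQ 1, hPQ 2, hXXZ 0 2, hXXZ 1 2, hXXZ 2 2, hXXZ 3 2,
      hDdiag 2, hDoff 0 2 (Or.inr (Or.inl ⟨rfl, rfl⟩)),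
      hDoff 1 2 (Or.inr (Or.inr (Or.inr (Or.inl ⟨rfl, rfl⟩)))), hZsplit 2]
    match_scalars
    · linear_combination hkC + hcLC
    · linear_combination Complex.I * hkC + Complex.I * hcRC
  have BoxZ : ∀ γ, Box (Z γ) = 0 := by
    intro γ
    fin_cases γ
    · exact BoxZ0
    · exact BoxZ1
    · exact BoxZ2
  -- self-adjointness of P, Q and star-compatibility of Box
  have hPsa : ∀ α, star (P α) = P α := by
    intro α
    rw [hP, star_smul, star_add, star_star,
      show star ((2:ℂ)⁻¹) = (2:ℂ)⁻¹ from by simp, add_comm]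
  have hQ' : ∀ α, Q α = -((2:ℂ)⁻¹*Complex.I) • (Z α - star (Z α)) := fun α => by
    rw [hQ, hQc]
  have hQsa : ∀ α, star (Q α) = Q α := by
    intro α
    rw [hQ', star_smul, star_sub, star_star,
      show star (-((2:ℂ)⁻¹*Complex.I)) = (2:ℂ)⁻¹*Complex.I from by
        simp [Complex.star_def]]
    match_scalars <;> ring1
  have BoxStar : ∀ φ, Box (star φ) = star (Box φ) := by
    intro φ
    rw [hBox' φ, hBox' (star φ)]
    simp only [star_add, star_neg]
    rw [stmt13aux_keyStar _ φ (hXbsa 0), stmt13aux_keyStar _ φ (hXbsa 1), stmt13aux_keyStar _ φ (hXbsa 2),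
      stmt13aux_keyStar _ φ (hXbsa 3), stmt13aux_keyStar _ φ (hPsa 0), stmt13aux_keyStar _ φ (hPsa 1),
      stmt13aux_keyStar _ φ (hPsa 2), stmt13aux_keyStar _ φ (hQsa 0), stmt13aux_keyStar _ φ (hQsa 1),
      stmt13aux_keyStar _ φ (hQsa 2)]
  have BoxZs : ∀ γ, Box (star (Z γ)) = 0 := fun γ => by
    rw [BoxStar, BoxZ, star_zero]
  -- linearity of Box
  have BoxAdd : ∀ a b, Box (a+b) = Box a + Box b := by
    intro a b; simp only [hBox', lie_add]; abel
  have BoxSub : ∀ a b, Box (a-b) = Box a - Box b := by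
    intro a b; simp only [hBox', lie_sub]; abel
  have BoxSmul : ∀ (r : ℂ) a, Box (r•a) = r • Box a := by
    intro r a; simp only [hBox', lie_smul, smul_add, smul_neg]
  refine ⟨BoxXb, fun α => ⟨?_, ?_⟩⟩
  · rw [hP, BoxSmul, BoxAdd, BoxZ, BoxZs, add_zero, smul_zero]
  · rw [hQ, BoxSmul, BoxSub, BoxZ, BoxZs, sub_zero, smul_zero]
end

section
/- On the ℂ-vector space ℤ →₀ ℂ with basis (δ_m), fix R, ξ ∈ ℝ, R ≠ 0, and define the fuzzy cylinder operators U(δ_m) = R·δ_{m+1}, D(δ_m) = R·δ_{m−1}, H(δ_m) = ξ·m·δ_m, with self-adjoint components X1 = (U+D)/2, X2 = (U−D)/(2i), and for p ∈ ℝ the plane-wave operator E_p(δ_m) = e^{i·p·ξ·m}·δ_m. Then U is invertible (with U^{-1} = R^{-2}·D), and for every n ∈ ℤ the Euclidean matrix Laplacian □φ = ⁅X1,⁅X1,φ⁆⁆ + ⁅X2,⁅X2,φ⁆⁆ + ⁅H,⁅H,φ⁆⁆ on endomorphisms satisfies □(E_p ∘ U^n) = (4R²·sin²(pξ/2) + n²ξ²)·(E_p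 ∘ U^n). In particular the spectrum in the non-compact momentum p is 2π/ξ-periodic, giving an effective UV cutoff, while n labels the Kaluza–Klein modes on S¹. -/
/-- spectrum of the Euclidean matrix Laplacian on the fuzzy
cylinder.  With `U δₘ = R δ_{m+1}`, `D δₘ = R δ_{m-1}`, `H δₘ = ξ m δₘ`,
`X1 = (U+D)/2`, `X2 = (U-D)/(2i)`, `E_p δₘ = e^{ipξm} δₘ`, and
`□φ = ⁅X1,⁅X1,φ⁆⁆ + ⁅X2,⁅X2,φ⁆⁆ + ⁅H,⁅H,φ⁆⁆`: `U` is invertible with inverse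
`R⁻²·D`, and `□(E_p ∘ Uⁿ) = (4R² sin²(pξ/2) + n²ξ²)·(E_p ∘ Uⁿ)` for all `n ∈ ℤ`;
the eigenvalue is `2π/ξ`-periodic in `p` (effective UV cutoff), while `n`
labels the Kaluza–Klein modes on `S¹`. -/
theorem stmt16 (R ξ : ℝ) (hR : R ≠ 0)
    (U D H X1 X2 : Module.End ℂ (ℤ →₀ ℂ)) (E : ℝ → Module.End ℂ (ℤ →₀ ℂ))
    (hU : ∀ m : ℤ, U (Finsupp.single m 1) = (R : ℂ) • Finsupp.single (m + 1) 1)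
    (hD : ∀ m : ℤ, D (Finsupp.single m 1) = (R : ℂ) • Finsupp.single (m - 1) 1)
    (hH : ∀ m : ℤ, H (Finsupp.single m 1) = ((ξ : ℂ) * (m : ℂ)) • Finsupp.single m 1)
    (hX1 : X1 = (2 : ℂ)⁻¹ • (U + D))
    (hX2 : X2 = ((2 : ℂ) * Complex.I)⁻¹ • (U - D))
    (hE : ∀ (p : ℝ) (m : ℤ),
      E p (Finsupp.single m 1)
        = Complex.exp (Complex.I * (p : ℂ) * (ξ : ℂ) * (m : ℂ)) • Finsupp.single m 1)
    (Box : Module.End ℂ (ℤ →₀ ℂ) → Module.End ℂ (ℤ →₀ ℂ))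
    (hBox : ∀ φ, Box φ = ⁅X1, ⁅X1, φ⁆⁆ + ⁅X2, ⁅X2, φ⁆⁆ + ⁅H, ⁅H, φ⁆⁆) :
    (U * (((R : ℂ) ^ 2)⁻¹ • D) = 1)
    ∧ ((((R : ℂ) ^ 2)⁻¹ • D) * U = 1)
    ∧ (∀ u : (Module.End ℂ (ℤ →₀ ℂ))ˣ, (u : Module.End ℂ (ℤ →₀ ℂ)) = U →
        ∀ (p : ℝ) (n : ℤ),
          Box (E p * ((u ^ n : (Module.End ℂ (ℤ →₀ ℂ))ˣ) : Module.End ℂ (ℤ →₀ ℂ)))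
            = ((4 * R ^ 2 * Real.sin (p * ξ / 2) ^ 2 + (n : ℝ) ^ 2 * ξ ^ 2 : ℝ) : ℂ)
              • (E p * ((u ^ n : (Module.End ℂ (ℤ →₀ ℂ))ˣ) : Module.End ℂ (ℤ →₀ ℂ))))
    ∧ (∀ (p : ℝ) (n : ℤ),
        4 * R ^ 2 * Real.sin ((p + 2 * Real.pi / ξ) * ξ / 2) ^ 2 + (n : ℝ) ^ 2 * ξ ^ 2
          = 4 * R ^ 2 * Real.sin (p * ξ / 2) ^ 2 + (n : ℝ) ^ 2 * ξ ^ 2) := by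
  have hRc : (R : ℂ) ≠ 0 := by exact_mod_cast hR
  -- extensionality on the basis
  have key : ∀ (f g : Module.End ℂ (ℤ →₀ ℂ)),
      (∀ m : ℤ, f (Finsupp.single m 1) = g (Finsupp.single m 1)) → f = g := by
    intro f g h
    apply Finsupp.lhom_ext
    intro m b
    rw [← Finsupp.smul_single_one, map_smul, map_smul, h]
  have h1 : U * (((R : ℂ) ^ 2)⁻¹ • D) = 1 := by
    apply key
    intro m
    simp only [Module.End.mul_apply, LinearMap.smul_apply, map_smul, hD, hU, smul_smul,
      Module.End.one_apply, sub_add_cancel]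
    rw [show ((R:ℂ)^2)⁻¹ * (R:ℂ) * (R:ℂ) = 1 by field_simp, one_smul]
  have h2 : (((R : ℂ) ^ 2)⁻¹ • D) * U = 1 := by
    apply key
    intro m
    simp only [Module.End.mul_apply, LinearMap.smul_apply, map_smul, hD, hU, smul_smul,
      Module.End.one_apply, add_sub_cancel_right]
    rw [show (R:ℂ) * (((R:ℂ)^2)⁻¹ * (R:ℂ)) = 1 by field_simp, one_smul]
  have hUD : U * D = ((R : ℂ) ^ 2) • (1 : Module.End ℂ (ℤ →₀ ℂ)) := by
    apply key
    intro m
    simp only [Module.End.mul_apply, LinearMap.smul_apply, map_smul, hD, hU, smul_smul,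
      Module.End.one_apply, sub_add_cancel]
    congr 1
    ring
  have hDU : D * U = ((R : ℂ) ^ 2) • (1 : Module.End ℂ (ℤ →₀ ℂ)) := by
    apply key
    intro m
    simp only [Module.End.mul_apply, LinearMap.smul_apply, map_smul, hD, hU, smul_smul,
      Module.End.one_apply, add_sub_cancel_right]
    congr 1
    ring
  refine ⟨h1, h2, ?_, ?_⟩
  · intro u hu p n
    have huinv : ((u⁻¹ : (Module.End ℂ (ℤ →₀ ℂ))ˣ) : Module.End ℂ (ℤ →₀ ℂ))
        = ((R : ℂ) ^ 2)⁻¹ • D := by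
      calc ((u⁻¹ : (Module.End ℂ (ℤ →₀ ℂ))ˣ) : Module.End ℂ (ℤ →₀ ℂ))
          = 1 * ((u⁻¹ : (Module.End ℂ (ℤ →₀ ℂ))ˣ) : Module.End ℂ (ℤ →₀ ℂ)) := (one_mul _).symm
        _ = ((((R : ℂ) ^ 2)⁻¹ • D) * U) *
              ((u⁻¹ : (Module.End ℂ (ℤ →₀ ℂ))ˣ) : Module.End ℂ (ℤ →₀ ℂ)) := by rw [h2]
        _ = (((R : ℂ) ^ 2)⁻¹ • D) *
              ((u : Module.End ℂ (ℤ →₀ ℂ)) *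
                ((u⁻¹ : (Module.End ℂ (ℤ →₀ ℂ))ˣ) : Module.End ℂ (ℤ →₀ ℂ))) := by
            rw [hu, mul_assoc]
        _ = ((R : ℂ) ^ 2)⁻¹ • D := by rw [u.mul_inv, mul_one]
    -- action of u^k on the basis
    have hUn : ∀ (k : ℤ) (m : ℤ),
        ((u ^ k : (Module.End ℂ (ℤ →₀ ℂ))ˣ) : Module.End ℂ (ℤ →₀ ℂ)) (Finsupp.single m 1)
          = ((R : ℂ) ^ k) • Finsupp.single (m + k) 1 := by
      intro k
      induction k using Int.induction_on with
      | zero => intro m; simp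
      | succ k ih =>
          intro m
          rw [zpow_add_one, Units.val_mul, Module.End.mul_apply, hu, hU, map_smul, ih,
            smul_smul, show m + 1 + (k : ℤ) = m + ((k : ℤ) + 1) by ring]
          congr 1
          rw [zpow_add_one₀ hRc]
          ring
      | pred k ih =>
          intro m
          rw [zpow_sub_one, Units.val_mul, Module.End.mul_apply, huinv, LinearMap.smul_apply,
            hD, map_smul, map_smul, ih, smul_smul, smul_smul,
            show m - 1 + -(k : ℤ) = m + (-(k : ℤ) - 1) by ring]
          congr 1
          rw [zpow_sub_one₀ hRc]
          field_simp
    set F : Module.End ℂ (ℤ →₀ ℂ) := E p * ((u ^ n : (Module.End ℂ (ℤ →₀ ℂ))ˣ) :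
      Module.End ℂ (ℤ →₀ ℂ)) with hF
    have hFm : ∀ m : ℤ, F (Finsupp.single m 1)
        = ((R : ℂ) ^ n * Complex.exp (Complex.I * (p : ℂ) * (ξ : ℂ) * ((m + n : ℤ) : ℂ))) •
            Finsupp.single (m + n) 1 := by
      intro m
      rw [hF, Module.End.mul_apply, hUn, map_smul, hE, smul_smul]
    -- instance-safe bracket lemmas
    have bdef : ∀ a b : Module.End ℂ (ℤ →₀ ℂ), ⁅a, b⁆ = a * b - b * a := fun _ _ => rfl
    have slie : ∀ (c : ℂ) (a b : Module.End ℂ (ℤ →₀ ℂ)), ⁅c • a, b⁆ = c • ⁅a, b⁆ := by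
      intro c a b
      rw [bdef, bdef, smul_mul_assoc, mul_smul_comm]
      module
    have lies : ∀ (c : ℂ) (a b : Module.End ℂ (ℤ →₀ ℂ)), ⁅a, c • b⁆ = c • ⁅a, b⁆ := by
      intro c a b
      rw [bdef, bdef, smul_mul_assoc, mul_smul_comm]
      module
    have liea : ∀ a b c : Module.End ℂ (ℤ →₀ ℂ), ⁅a + b, c⁆ = ⁅a, c⁆ + ⁅b, c⁆ := by
      intro a b c
      rw [bdef, bdef, bdef, add_mul, mul_add]
      module
    have lieb : ∀ a b c : Module.End ℂ (ℤ →₀ ℂ), ⁅a, b + c⁆ = ⁅a, b⁆ + ⁅a, c⁆ := by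
      intro a b c
      rw [bdef, bdef, bdef, add_mul, mul_add]
      module
    -- H-brackets
    have hHF : ⁅H, F⁆ = ((ξ : ℂ) * (n : ℂ)) • F := by
      apply key
      intro m
      simp only [bdef, LinearMap.sub_apply, Module.End.mul_apply,
        LinearMap.smul_apply, hFm, hH, map_smul, smul_smul]
      rw [← sub_smul]
      congr 1
      push_cast
      ring
    have hHHF : ⁅H, ⁅H, F⁆⁆ = (((ξ : ℂ) * (n : ℂ)) * ((ξ : ℂ) * (n : ℂ))) • F := by
      rw [hHF, lies, hHF, smul_smul]
    -- commutation of F with U and D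
    have hFU : F * U = Complex.exp (Complex.I * (p : ℂ) * (ξ : ℂ)) • (U * F) := by
      apply key
      intro m
      simp only [Module.End.mul_apply, LinearMap.smul_apply, hU, map_smul, hFm, smul_smul]
      rw [show m + 1 + n = m + n + 1 by ring]
      congr 1
      rw [show ((m + n + 1 : ℤ) : ℂ) = ((m + n : ℤ) : ℂ) + 1 by push_cast; ring,
        show Complex.I * (p : ℂ) * (ξ : ℂ) * (((m + n : ℤ) : ℂ) + 1)
          = Complex.I * (p : ℂ) * (ξ : ℂ) * ((m + n : ℤ) : ℂ) + Complex.I * (p : ℂ) * (ξ : ℂ)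
          by ring, Complex.exp_add]
      ring
    have hFD : F * D = Complex.exp (-(Complex.I * (p : ℂ) * (ξ : ℂ))) • (D * F) := by
      apply key
      intro m
      simp only [Module.End.mul_apply, LinearMap.smul_apply, hD, map_smul, hFm, smul_smul]
      rw [show m - 1 + n = m + n - 1 by ring]
      congr 1
      rw [show ((m + n - 1 : ℤ) : ℂ) = ((m + n : ℤ) : ℂ) - 1 by push_cast; ring,
        show Complex.I * (p : ℂ) * (ξ : ℂ) * (((m + n : ℤ) : ℂ) - 1)
          = Complex.I * (p : ℂ) * (ξ : ℂ) * ((m + n : ℤ) : ℂ) + -(Complex.I * (p : ℂ) * (ξ : ℂ))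
          by ring, Complex.exp_add]
      ring
    have e1 : U * (D * F) = ((R : ℂ) ^ 2) • F := by
      rw [← mul_assoc, hUD, smul_mul_assoc, one_mul]
    have e2 : D * (U * F) = ((R : ℂ) ^ 2) • F := by
      rw [← mul_assoc, hDU, smul_mul_assoc, one_mul]
    -- single brackets with F
    have hUFbr : ⁅U, F⁆ = ((1 : ℂ) - Complex.exp (Complex.I * (p : ℂ) * (ξ : ℂ))) • (U * F) := by
      rw [bdef, hFU]
      module
    have hDFbr : ⁅D, F⁆ = ((1 : ℂ) - Complex.exp (-(Complex.I * (p : ℂ) * (ξ : ℂ)))) • (D * F) := by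
      rw [bdef, hFD]
      module
    -- double brackets
    have houterD : ⁅D, ⁅U, F⁆⁆
        = (((1 : ℂ) - Complex.exp (Complex.I * (p : ℂ) * (ξ : ℂ))) *
            ((R : ℂ) ^ 2 - Complex.exp (-(Complex.I * (p : ℂ) * (ξ : ℂ))) * (R : ℂ) ^ 2)) • F := by
      rw [hUFbr, lies, bdef, e2, mul_assoc U F D, hFD, mul_smul_comm, e1]
      module
    have houterU : ⁅U, ⁅D, F⁆⁆
        = (((1 : ℂ) - Complex.exp (-(Complex.I * (p : ℂ) * (ξ : ℂ)))) *
            ((R : ℂ) ^ 2 - Complex.exp (Complex.I * (p : ℂ) * (ξ : ℂ)) * (R : ℂ) ^ 2)) • F := by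
      rw [hDFbr, lies, bdef, e1, mul_assoc D F U, hFU, mul_smul_comm, e2]
      module
    -- the X-part as a combination of the double brackets
    have hc1 : (2 : ℂ)⁻¹ * (2 : ℂ)⁻¹ = (4 : ℂ)⁻¹ := by norm_num
    have hc2 : ((2 : ℂ) * Complex.I)⁻¹ * ((2 : ℂ) * Complex.I)⁻¹ = -(4 : ℂ)⁻¹ := by
      rw [← mul_inv,
        show (2 : ℂ) * Complex.I * ((2 : ℂ) * Complex.I) = -4 by
          linear_combination (4 : ℂ) * Complex.I_mul_I,
        inv_neg]
    have hsub : U - D = U + (-1 : ℂ) • D := by module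
    have hX12 : ⁅X1, ⁅X1, F⁆⁆ + ⁅X2, ⁅X2, F⁆⁆
        = (2 : ℂ)⁻¹ • (⁅U, ⁅D, F⁆⁆ + ⁅D, ⁅U, F⁆⁆) := by
      rw [hX1, hX2, hsub]
      simp only [slie, lies, liea, lieb, smul_smul, hc1, hc2]
      module
    -- assemble
    rw [hBox, hX12, houterU, houterD, hHHF]
    have hqq : Complex.exp (Complex.I * (p : ℂ) * (ξ : ℂ)) *
        Complex.exp (-(Complex.I * (p : ℂ) * (ξ : ℂ))) = 1 := by
      rw [← Complex.exp_add]
      norm_num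
    have hcos : Complex.cos ((p : ℂ) * (ξ : ℂ))
        = 1 - 2 * Complex.sin ((p : ℂ) * (ξ : ℂ) / 2) ^ 2 := by
      have ha := Complex.sin_sq_add_cos_sq ((p : ℂ) * (ξ : ℂ) / 2)
      have hb := Complex.cos_two_mul ((p : ℂ) * (ξ : ℂ) / 2)
      rw [show 2 * ((p : ℂ) * (ξ : ℂ) / 2) = (p : ℂ) * (ξ : ℂ) by ring] at hb
      linear_combination hb + 2 * ha
    have hcos2 : Complex.exp (Complex.I * (p : ℂ) * (ξ : ℂ)) +
        Complex.exp (-(Complex.I * (p : ℂ) * (ξ : ℂ)))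
        = 2 - 4 * Complex.sin ((p : ℂ) * (ξ : ℂ) / 2) ^ 2 := by
      rw [show Complex.I * (p : ℂ) * (ξ : ℂ) = ((p : ℂ) * (ξ : ℂ)) * Complex.I by ring,
        show -(((p : ℂ) * (ξ : ℂ)) * Complex.I) = (-((p : ℂ) * (ξ : ℂ))) * Complex.I by ring,
        Complex.exp_mul_I, Complex.exp_mul_I, Complex.cos_neg, Complex.sin_neg]
      linear_combination 2 * hcos
    match_scalars
    push_cast
    linear_combination ((R : ℂ) ^ 2) * hqq - ((R : ℂ) ^ 2) * hcos2
  · intro p n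
    by_cases hξ : ξ = 0
    · simp [hξ]
    · rw [show (p + 2 * Real.pi / ξ) * ξ / 2 = p * ξ / 2 + Real.pi by field_simp,
        Real.sin_add_pi]
      ring
end
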